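/- arXiv:2101.00541 — 12 statements merged into one kernel-verified Lean document; each statement's English description precedes it below -/
import Mathlib

section
/- Let α ∈ (0,1), p ∈ [1,∞), T > 0, and let 𝓗 be a real normed space. If q > p/α (in particular q > p), then for every measurable function w : (0,T) → 𝓗 and every t ∈ [0,T], ∫_0^t (t−s)^{α−1} ‖w(s)‖^p ds ≤ ((q−p)/(qα−p))^{(q−p)/q} · t^{α − p/q} · ( ∫_0^t ‖w(s)‖^q ds )^{p/q}. In particular, L^q(0,T;𝓗) embeds continuously into L^p_α(0,T;𝓗). -/
/-!
Split the integrand as `(t - s)^(α-1) · ‖w s‖^p` and apply Hölder's inequality with the conjugate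
exponents `q / (q - p)` and `q / p`. The second factor is `(∫ ‖w‖^q)^(p/q)`; the first is an
explicit integral of `(t - s)^β` with `β = (α - 1) q / (q - p)`, and `β > -1` is exactly the
condition `q α > p`.
-/

open MeasureTheory Set
open scoped ENNReal NNReal

theorem ENNReal.lintegral_mul_rpow_le {X : Type*} [MeasurableSpace X] {μ : Measure X}
    {f g : X → ℝ≥0∞} (hf : AEMeasurable f μ) (hg : AEMeasurable g μ) {p q : ℝ}
    (hp : 0 < p) (hpq : p < q) :
    ∫⁻ x, f x * g x ^ p ∂μ
      ≤ (∫⁻ x, f x ^ (q / (q - p)) ∂μ) ^ ((q - p) / q) * (∫⁻ x, g x ^ q ∂μ) ^ (p / q) := by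
  have hq : 0 < q := hp.trans hpq
  have hconj : (q / (q - p)).HolderConjugate (q / p) := by
    refine Real.holderConjugate_iff.mpr ⟨?_, ?_⟩
    · rw [lt_div_iff₀ (sub_pos.mpr hpq)]; linarith
    · rw [inv_div, inv_div, ← add_div, sub_add_cancel, div_self hq.ne']
  have hgp : ∀ x, (g x ^ p) ^ (q / p) = g x ^ q := fun x => by
    rw [← ENNReal.rpow_mul, mul_div_cancel₀ _ hp.ne']
  have holder := ENNReal.lintegral_mul_le_Lp_mul_Lq μ hconj hf (hg.pow_const p)
  simpa only [Pi.mul_apply, hgp, one_div_div] using holder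

theorem lintegral_Ioc_ofReal_sub_rpow {β t : ℝ} (hβ : -1 < β) (ht : 0 ≤ t) :
    ∫⁻ s in Ioc 0 t, ENNReal.ofReal ((t - s) ^ β) = ENNReal.ofReal (t ^ (β + 1) / (β + 1)) := by
  have hsub : ∀ s ∈ Ioc 0 t, 0 ≤ t - s := fun s hs => sub_nonneg.mpr hs.2
  have hint : IntegrableOn (fun s : ℝ => (t - s) ^ β) (Ioc 0 t) := by
    have h := (intervalIntegral.intervalIntegrable_rpow' hβ (a := 0) (b := t)).comp_sub_left t
    rw [sub_zero, sub_self] at h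
    exact (intervalIntegrable_iff_integrableOn_Ioc_of_le ht).mp h.symm
  have hnonneg : 0 ≤ᵐ[volume.restrict (Ioc 0 t)] fun s : ℝ => (t - s) ^ β :=
    ae_restrict_of_forall_mem measurableSet_Ioc fun s hs => Real.rpow_nonneg (hsub s hs) _
  have hval : ∫ s in Ioc 0 t, (t - s) ^ β = t ^ (β + 1) / (β + 1) := by
    rw [← intervalIntegral.integral_of_le ht,
      intervalIntegral.integral_comp_sub_left (fun x : ℝ => x ^ β), sub_zero, sub_self,
      integral_rpow (Or.inl hβ), Real.zero_rpow (by linarith)]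
    ring
  rw [← ofReal_integral_eq_lintegral_ofReal hint hnonneg, hval]

theorem rpow_lintegral_Ioc_ofReal_sub_rpow_rpow {α p q t : ℝ} (hp : 0 < p) (hpq : p < q)
    (hpα : p < q * α) (ht : 0 ≤ t) :
    (∫⁻ s in Ioc 0 t, ENNReal.ofReal ((t - s) ^ (α - 1)) ^ (q / (q - p))) ^ ((q - p) / q)
      = ENNReal.ofReal (((q - p) / (q * α - p)) ^ ((q - p) / q) * t ^ (α - p / q)) := by
  have hqp : 0 < q - p := sub_pos.mpr hpq
  have hqαp : 0 < q * α - p := sub_pos.mpr hpα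
  have hq : 0 < q := hp.trans hpq
  set β := (α - 1) * (q / (q - p))
  have hβ : β + 1 = (q * α - p) / (q - p) := by simp only [β]; field_simp; ring
  have hβpos : 0 < β + 1 := by rw [hβ]; positivity
  have hkernel : ∀ s ∈ Ioc 0 t,
      ENNReal.ofReal ((t - s) ^ (α - 1)) ^ (q / (q - p)) = ENNReal.ofReal ((t - s) ^ β) :=
    fun s hs => by
      have hts : 0 ≤ t - s := sub_nonneg.mpr hs.2
      rw [ENNReal.ofReal_rpow_of_nonneg (Real.rpow_nonneg hts _) (by positivity),
        ← Real.rpow_mul hts]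
  have hreal : (t ^ (β + 1) / (β + 1)) ^ ((q - p) / q)
      = ((q - p) / (q * α - p)) ^ ((q - p) / q) * t ^ (α - p / q) := by
    rw [div_eq_mul_inv, hβ, inv_div, Real.mul_rpow (Real.rpow_nonneg ht _) (by positivity),
      ← Real.rpow_mul ht, mul_comm]
    congr 2
    field_simp
  rw [setLIntegral_congr_fun measurableSet_Ioc hkernel,
    lintegral_Ioc_ofReal_sub_rpow (by linarith) ht,
    ENNReal.ofReal_rpow_of_nonneg (by positivity) (by positivity), hreal]

theorem stmt1_general (α p q T : ℝ) (hα : α ∈ Set.Ioo (0 : ℝ) 1) (hp : 1 ≤ p) (hq : p / α < q)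
    {𝓗 : Type*} [NormedAddCommGroup 𝓗] (w : ℝ → 𝓗)
    (hw : AEStronglyMeasurable w (volume.restrict (Set.Ioc 0 T))) :
    ∀ t ∈ Set.Icc (0 : ℝ) T,
      ∫⁻ s in Set.Ioc (0 : ℝ) t,
          ENNReal.ofReal ((t - s) ^ (α - 1)) * (‖w s‖₊ : ℝ≥0∞) ^ p
        ≤ ENNReal.ofReal (((q - p) / (q * α - p)) ^ ((q - p) / q) * t ^ (α - p / q)) *
            (∫⁻ s in Set.Ioc (0 : ℝ) t, (‖w s‖₊ : ℝ≥0∞) ^ q) ^ (p / q) := by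
  rintro t ⟨ht0, htT⟩
  obtain ⟨hα0, hα1⟩ := hα
  have hp0 : 0 < p := one_pos.trans_le hp
  have hpα : p < q * α := (div_lt_iff₀ hα0).mp hq
  have hpq : p < q := hpα.trans (mul_lt_of_lt_one_right (by nlinarith) hα1)
  have hwt : AEStronglyMeasurable w (volume.restrict (Ioc 0 t)) :=
    hw.mono_measure (Measure.restrict_mono (Ioc_subset_Ioc_right htT) le_rfl)
  have hkernel : AEMeasurable (fun s : ℝ => ENNReal.ofReal ((t - s) ^ (α - 1)))
      (volume.restrict (Ioc 0 t)) := by fun_prop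
  calc _ ≤ _ := ENNReal.lintegral_mul_rpow_le hkernel
          hwt.nnnorm.aemeasurable.coe_nnreal_ennreal hp0 hpq
    _ = _ := by rw [rpow_lintegral_Ioc_ofReal_sub_rpow_rpow hp0 hpq hpα ht0]

/-- `L^q(0,T;𝓗)` embeds continuously into `L^p_α(0,T;𝓗)` for `q > p/α`:
for every measurable `w` and `t ∈ [0,T]`,
`∫_0^t (t-s)^{α-1} ‖w(s)‖^p ds ≤ ((q-p)/(qα-p))^{(q-p)/q} t^{α-p/q} (∫_0^t ‖w(s)‖^q ds)^{p/q}`. -/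
theorem stmt1 (α p q T : ℝ) (hα : α ∈ Set.Ioo (0 : ℝ) 1) (hp : 1 ≤ p) (hq : p / α < q)
    (hT : 0 < T) {𝓗 : Type*} [NormedAddCommGroup 𝓗] (w : ℝ → 𝓗)
    (hw : AEStronglyMeasurable w (volume.restrict (Set.Ioc 0 T))) :
    ∀ t ∈ Set.Icc (0 : ℝ) T,
      ∫⁻ s in Set.Ioc (0 : ℝ) t,
          ENNReal.ofReal ((t - s) ^ (α - 1)) * (‖w s‖₊ : ℝ≥0∞) ^ p
        ≤ ENNReal.ofReal (((q - p) / (q * α - p)) ^ ((q - p) / q) * t ^ (α - p / q)) *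
            (∫⁻ s in Set.Ioc (0 : ℝ) t, (‖w s‖₊ : ℝ≥0∞) ^ q) ^ (p / q) :=
  stmt1_general α p q T hα hp hq w hw
end

section
/- Let α ∈ (0,1) and p ∈ [1,∞). There exists a constant C > 0, depending only on p and α, with the following property: for every T > 0, every real Banach space 𝓗, every partition 𝒫 of [0,T], and every Bochner-integrable f : (0,T) → 𝓗 with ‖f‖_{L^p_α(0,T;𝓗)} < ∞, the piecewise constant average F̄ of f satisfies, for all t ∈ [0,T], ∫_0^t (t−s)^{α−1} ‖F̄(s)‖^p ds ≤ C^p ‖f‖_{L^p_α(0,T;𝓗)}^p, i.e. ‖F̄‖_{L^p_α(0,T;𝓗)} ≤ C ‖f‖_{L^p_α(0,T;𝓗)}. -/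
universe u

open MeasureTheory Set
open scoped ENNReal NNReal

/-! On a cell `(a, b]` of the partition, Jensen's inequality gives
`(b - a) ‖F̄‖^p ≤ ∫_a^b ‖f‖^p`. If the cell lies to the left of `t`, the mass
`((t - a)^α - (t - b)^α) / α` of the kernel `(t - s)^(α-1)` on it is at most
`α⁻¹ (b - a) (t - a)^(α-1)`, and `(t - a)^(α-1) ≤ (t - u)^(α-1)` on the cell, so the cell
contributes at most `α⁻¹` times its share of `∫_0^t (t - u)^(α-1) ‖f u‖^p du`. The cell containing
`t` carries kernel mass at most `α⁻¹ (b - a)^α` and is compared with the kernel centred at its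
right end point `b` instead. Both parts are bounded by `α⁻¹ ‖f‖^p`, whence `C = (2 / α)^(1/p)`. -/

theorem rpow_lintegral_le_measure_univ_rpow_mul {X : Type*} [MeasurableSpace X] (μ : Measure X)
    {p : ℝ} (hp : 1 ≤ p) (g : X → ℝ≥0∞) :
    (∫⁻ x, g x ∂μ) ^ p ≤ μ univ ^ (p - 1) * ∫⁻ x, g x ^ p ∂μ := by
  obtain ⟨g', hg'm, hg'g, hg'⟩ := exists_measurable_le_lintegral_eq μ g
  have holder : (∫⁻ x, g' x ∂μ) ^ p ≤ μ univ ^ (p - 1) * ∫⁻ x, g' x ^ p ∂μ := by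
    rcases hp.eq_or_lt with rfl | hp1
    · simp
    have hpq : p.HolderConjugate (p / (p - 1)) := .conjExponent hp1
    have h := ENNReal.lintegral_mul_le_Lp_mul_Lq μ hpq hg'm.aemeasurable aemeasurable_const
      (g := fun _ => 1)
    simp only [Pi.mul_apply, mul_one, ENNReal.one_rpow, lintegral_const, one_mul] at h
    calc (∫⁻ x, g' x ∂μ) ^ p
        ≤ ((∫⁻ x, g' x ^ p ∂μ) ^ (1 / p) * μ univ ^ (1 / (p / (p - 1)))) ^ p := by gcongr
      _ = μ univ ^ (p - 1) * ∫⁻ x, g' x ^ p ∂μ := by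
        rw [ENNReal.mul_rpow_of_nonneg _ _ (by linarith), ← ENNReal.rpow_mul, ← ENNReal.rpow_mul,
          one_div_mul_cancel (by positivity), ENNReal.rpow_one, mul_comm]
        congr 2
        field_simp
  calc (∫⁻ x, g x ∂μ) ^ p = (∫⁻ x, g' x ∂μ) ^ p := by rw [hg']
    _ ≤ μ univ ^ (p - 1) * ∫⁻ x, g' x ^ p ∂μ := holder
    _ ≤ μ univ ^ (p - 1) * ∫⁻ x, g x ^ p ∂μ := by
      gcongr with x
      exact hg'g x

theorem measure_univ_mul_enorm_average_le {X E : Type*} [MeasurableSpace X]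
    [NormedAddCommGroup E] [NormedSpace ℝ E] (μ : Measure X) [IsFiniteMeasure μ] (f : X → E) :
    μ univ * ‖⨍ x, f x ∂μ‖ₑ ≤ ∫⁻ x, ‖f x‖ₑ ∂μ := by
  calc μ univ * ‖⨍ x, f x ∂μ‖ₑ = ‖μ.real univ • ⨍ x, f x ∂μ‖ₑ := by
        rw [enorm_smul, Real.enorm_eq_ofReal measureReal_nonneg, ofReal_measureReal]
    _ = ‖∫ x, f x ∂μ‖ₑ := by rw [measure_smul_average]
    _ ≤ ∫⁻ x, ‖f x‖ₑ ∂μ := enorm_integral_le_lintegral_enorm f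

theorem measure_univ_mul_enorm_average_rpow_le {X E : Type*} [MeasurableSpace X]
    [NormedAddCommGroup E] [NormedSpace ℝ E] (μ : Measure X) [IsFiniteMeasure μ] {p : ℝ}
    (hp : 1 ≤ p) (f : X → E) :
    μ univ * ‖⨍ x, f x ∂μ‖ₑ ^ p ≤ ∫⁻ x, ‖f x‖ₑ ^ p ∂μ := by
  rcases eq_or_ne (μ univ) 0 with hμ | hμ
  · simp [hμ]
  have hμp : μ univ ^ (p - 1) ≠ 0 := by simp [hμ]
  have hμp' : μ univ ^ (p - 1) ≠ ∞ := ENNReal.rpow_ne_top_of_ne_zero hμ (measure_ne_top μ univ)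
  rw [← ENNReal.mul_le_mul_iff_right hμp hμp', ← mul_assoc]
  calc μ univ ^ (p - 1) * μ univ * ‖⨍ x, f x ∂μ‖ₑ ^ p = (μ univ * ‖⨍ x, f x ∂μ‖ₑ) ^ p := by
        rw [ENNReal.mul_rpow_of_nonneg _ _ (by linarith)]
        conv_rhs => rw [← sub_add_cancel p 1, ENNReal.rpow_add_of_nonneg _ _ (sub_nonneg.2 hp)
          zero_le_one, ENNReal.rpow_one, sub_add_cancel]
    _ ≤ (∫⁻ x, ‖f x‖ₑ ∂μ) ^ p := by
        gcongr
        exact measure_univ_mul_enorm_average_le μ f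
    _ ≤ μ univ ^ (p - 1) * ∫⁻ x, ‖f x‖ₑ ^ p ∂μ :=
        rpow_lintegral_le_measure_univ_rpow_mul μ hp _

theorem lintegral_Ioc_kernel {α : ℝ} (hα : 0 < α) {a b t : ℝ} (hab : a ≤ b)
    (hbt : b ≤ t) :
    ∫⁻ s in Ioc a b, ENNReal.ofReal ((t - s) ^ (α - 1))
      = ENNReal.ofReal (((t - a) ^ α - (t - b) ^ α) / α) := by
  have hα' : -1 < α - 1 := by linarith
  have hint : IntegrableOn (fun s => (t - s) ^ (α - 1)) (Ioc a b) := by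
    rw [← intervalIntegrable_iff_integrableOn_Ioc_of_le hab]
    simpa using
      (intervalIntegral.intervalIntegrable_rpow' (a := t - a) (b := t - b) hα').comp_sub_left t
  rw [← ofReal_integral_eq_lintegral_ofReal hint]
  · rw [← intervalIntegral.integral_of_le hab,
      intervalIntegral.integral_comp_sub_left (fun x => x ^ (α - 1)) t, integral_rpow (.inl hα')]
    norm_num
  · filter_upwards [ae_restrict_mem measurableSet_Ioc] with s hs
    exact Real.rpow_nonneg (by linarith [hs.2]) _

theorem rpow_sub_rpow_le_mul_rpow_sub_one {α x y : ℝ} (hα : α ≤ 1) (hy : 0 < y) (hyx : y ≤ x) :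
    x ^ α - y ^ α ≤ (x - y) * x ^ (α - 1) := by
  have hx : 0 < x := hy.trans_le hyx
  have hmul : ∀ z : ℝ, 0 < z → z ^ α = z * z ^ (α - 1) := fun z hz => by
    simpa using Real.rpow_add hz 1 (α - 1)
  have : x ^ (α - 1) ≤ y ^ (α - 1) := Real.rpow_le_rpow_of_nonpos hy hyx (by linarith)
  rw [hmul x hx, hmul y hy]
  nlinarith

theorem lintegral_Ioc_kernel_le {α : ℝ} (hα : α ∈ Ioo 0 1) {a b t : ℝ} (hab : a ≤ b)
    (hbt : b < t) :
    ∫⁻ s in Ioc a b, ENNReal.ofReal ((t - s) ^ (α - 1))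
      ≤ ENNReal.ofReal α⁻¹ * (ENNReal.ofReal ((t - a) ^ (α - 1)) * ENNReal.ofReal (b - a)) := by
  rw [lintegral_Ioc_kernel hα.1 hab hbt.le,
    ← ENNReal.ofReal_mul (Real.rpow_nonneg (by linarith) _),
    ← ENNReal.ofReal_mul (inv_nonneg.2 hα.1.le)]
  apply ENNReal.ofReal_le_ofReal
  have := rpow_sub_rpow_le_mul_rpow_sub_one hα.2.le (sub_pos.2 hbt) (by linarith : t - b ≤ t - a)
  rw [div_eq_inv_mul]
  gcongr
  · exact inv_nonneg.2 hα.1.le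
  · linarith

theorem lintegral_Ioc_kernel_le_of_le {α : ℝ} (hα : 0 < α) {a b t : ℝ} (hat : a ≤ t)
    (htb : t ≤ b) :
    ∫⁻ s in Ioc a t, ENNReal.ofReal ((t - s) ^ (α - 1))
      ≤ ENNReal.ofReal α⁻¹ * (ENNReal.ofReal ((b - a) ^ (α - 1)) * ENNReal.ofReal (b - a)) := by
  rw [lintegral_Ioc_kernel hα hat le_rfl,
    ← ENNReal.ofReal_mul (Real.rpow_nonneg (by linarith) _), ← ENNReal.ofReal_mul (by positivity),
    sub_self, Real.zero_rpow hα.ne', sub_zero, div_eq_inv_mul]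
  apply ENNReal.ofReal_le_ofReal
  gcongr
  rw [← Real.rpow_add_one' (by linarith) (by linarith), sub_add_cancel]
  exact Real.rpow_le_rpow (by linarith) (by linarith) hα.le

theorem kernel_mul_enorm_setAverage_rpow_le {E : Type*} [NormedAddCommGroup E]
    [NormedSpace ℝ E] {α p : ℝ} (hα : α ≤ 1) (hp : 1 ≤ p) {a b c : ℝ} (hbc : b ≤ c)
    (f : ℝ → E) :
    ENNReal.ofReal ((c - a) ^ (α - 1)) * (ENNReal.ofReal (b - a) * ‖⨍ u in Ioc a b, f u‖ₑ ^ p)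
      ≤ ∫⁻ u in Ioc a b, ENNReal.ofReal ((c - u) ^ (α - 1)) * ‖f u‖ₑ ^ p := by
  have hJ := measure_univ_mul_enorm_average_rpow_le (volume.restrict (Ioc a b)) hp f
  rw [Measure.restrict_apply_univ, Real.volume_Ioc] at hJ
  calc ENNReal.ofReal ((c - a) ^ (α - 1)) * (ENNReal.ofReal (b - a) * ‖⨍ u in Ioc a b, f u‖ₑ ^ p)
      ≤ ENNReal.ofReal ((c - a) ^ (α - 1)) * ∫⁻ u in Ioc a b, ‖f u‖ₑ ^ p := by gcongr
    _ = ∫⁻ u in Ioo a b, ENNReal.ofReal ((c - a) ^ (α - 1)) * ‖f u‖ₑ ^ p := by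
      rw [lintegral_const_mul' _ _ ENNReal.ofReal_ne_top, setLIntegral_congr Ioo_ae_eq_Ioc]
    _ ≤ ∫⁻ u in Ioo a b, ENNReal.ofReal ((c - u) ^ (α - 1)) * ‖f u‖ₑ ^ p := by
      refine lintegral_mono_ae ?_
      filter_upwards [ae_restrict_mem measurableSet_Ioo] with u hu
      gcongr ENNReal.ofReal ?_ * _
      exact Real.rpow_le_rpow_of_nonpos (sub_pos.2 (hu.2.trans_le hbc)) (by linarith [hu.1])
        (by linarith)
    _ = ∫⁻ u in Ioc a b, ENNReal.ofReal ((c - u) ^ (α - 1)) * ‖f u‖ₑ ^ p :=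
      setLIntegral_congr Ioo_ae_eq_Ioc

theorem lintegral_Ioc_kernel_mul_setAverage_le {E : Type*} [NormedAddCommGroup E]
    [NormedSpace ℝ E] {α p : ℝ} (hα : α ∈ Ioo 0 1) (hp : 1 ≤ p) {a b t : ℝ} (hab : a ≤ b)
    (hbt : b < t) {F f : ℝ → E} (hF : ∀ s ∈ Ioc a b, F s = ⨍ u in Ioc a b, f u) :
    ∫⁻ s in Ioc a b, ENNReal.ofReal ((t - s) ^ (α - 1)) * ‖F s‖ₑ ^ p
      ≤ ENNReal.ofReal α⁻¹ *
        ∫⁻ u in Ioc a b, ENNReal.ofReal ((t - u) ^ (α - 1)) * ‖f u‖ₑ ^ p := by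
  rw [setLIntegral_congr_fun measurableSet_Ioc fun s hs => by rw [hF s hs],
    lintegral_mul_const' _ _ (by simp [hp.trans' zero_le_one])]
  calc (∫⁻ s in Ioc a b, ENNReal.ofReal ((t - s) ^ (α - 1))) * ‖⨍ u in Ioc a b, f u‖ₑ ^ p
      ≤ ENNReal.ofReal α⁻¹ * (ENNReal.ofReal ((t - a) ^ (α - 1)) * ENNReal.ofReal (b - a)) *
          ‖⨍ u in Ioc a b, f u‖ₑ ^ p := by
        gcongr
        exact lintegral_Ioc_kernel_le hα hab hbt
    _ = ENNReal.ofReal α⁻¹ * (ENNReal.ofReal ((t - a) ^ (α - 1)) *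
          (ENNReal.ofReal (b - a) * ‖⨍ u in Ioc a b, f u‖ₑ ^ p)) := by ring
    _ ≤ _ := by
        gcongr
        exact kernel_mul_enorm_setAverage_rpow_le hα.2.le hp hbt.le f

theorem lintegral_Ioc_kernel_mul_setAverage_le_of_le {E : Type*} [NormedAddCommGroup E]
    [NormedSpace ℝ E] {α p : ℝ} (hα : α ∈ Ioo 0 1) (hp : 1 ≤ p) {a b t : ℝ} (hat : a ≤ t)
    (htb : t ≤ b) {F f : ℝ → E} (hF : ∀ s ∈ Ioc a t, F s = ⨍ u in Ioc a b, f u) :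
    ∫⁻ s in Ioc a t, ENNReal.ofReal ((t - s) ^ (α - 1)) * ‖F s‖ₑ ^ p
      ≤ ENNReal.ofReal α⁻¹ *
        ∫⁻ u in Ioc a b, ENNReal.ofReal ((b - u) ^ (α - 1)) * ‖f u‖ₑ ^ p := by
  rw [setLIntegral_congr_fun measurableSet_Ioc fun s hs => by rw [hF s hs],
    lintegral_mul_const' _ _ (by simp [hp.trans' zero_le_one])]
  calc (∫⁻ s in Ioc a t, ENNReal.ofReal ((t - s) ^ (α - 1))) * ‖⨍ u in Ioc a b, f u‖ₑ ^ p
      ≤ ENNReal.ofReal α⁻¹ * (ENNReal.ofReal ((b - a) ^ (α - 1)) * ENNReal.ofReal (b - a)) *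
          ‖⨍ u in Ioc a b, f u‖ₑ ^ p := by
        gcongr
        exact lintegral_Ioc_kernel_le_of_le hα.1 hat htb
    _ = ENNReal.ofReal α⁻¹ * (ENNReal.ofReal ((b - a) ^ (α - 1)) *
          (ENNReal.ofReal (b - a) * ‖⨍ u in Ioc a b, f u‖ₑ ^ p)) := by ring
    _ ≤ _ := by
        gcongr
        exact kernel_mul_enorm_setAverage_rpow_le hα.2.le hp le_rfl f

theorem lintegral_Ioc_kernel_mul_piecewise_le {E : Type*} [NormedAddCommGroup E]
    [NormedSpace ℝ E] {α p : ℝ} (hα : α ∈ Ioo 0 1) (hp : 1 ≤ p) {tP : ℕ → ℝ} {k : ℕ}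
    (hmono : MonotoneOn tP (Iic k)) {t : ℝ} (ht : tP k < t) {F f : ℝ → E}
    (hF : ∀ n < k, ∀ s ∈ Ioc (tP n) (tP (n + 1)), F s = ⨍ u in Ioc (tP n) (tP (n + 1)), f u) :
    ∫⁻ s in Ioc (tP 0) (tP k), ENNReal.ofReal ((t - s) ^ (α - 1)) * ‖F s‖ₑ ^ p
      ≤ ENNReal.ofReal α⁻¹ *
        ∫⁻ s in Ioc (tP 0) (tP k), ENNReal.ofReal ((t - s) ^ (α - 1)) * ‖f s‖ₑ ^ p := by
  induction k with
  | zero => simp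
  | succ k ih =>
    have h0k : tP 0 ≤ tP k := hmono (by simp) (by simp) (Nat.zero_le k)
    have hkk : tP k ≤ tP (k + 1) := hmono (by simp) (by simp) (Nat.le_succ k)
    rw [← Ioc_union_Ioc_eq_Ioc h0k hkk, lintegral_union measurableSet_Ioc
      (Ioc_disjoint_Ioc_of_le le_rfl), lintegral_union measurableSet_Ioc
      (Ioc_disjoint_Ioc_of_le le_rfl), mul_add]
    gcongr ?_ + ?_
    · exact ih (hmono.mono (Iic_subset_Iic.2 k.le_succ)) (hkk.trans_lt ht)
        (fun n hn => hF n (hn.trans k.lt_succ_self))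
    · exact lintegral_Ioc_kernel_mul_setAverage_le hα hp hkk ht (hF k k.lt_succ_self)

theorem lintegral_Ioc_kernel_mul_piecewise_le_of_mem_Ioc {E : Type*} [NormedAddCommGroup E]
    [NormedSpace ℝ E] {α p : ℝ} (hα : α ∈ Ioo 0 1) (hp : 1 ≤ p) {tP : ℕ → ℝ} {k : ℕ}
    (hmono : MonotoneOn tP (Iic (k + 1))) {t : ℝ} (ht : t ∈ Ioc (tP k) (tP (k + 1)))
    {F f : ℝ → E}
    (hF : ∀ n ≤ k, ∀ s ∈ Ioc (tP n) (tP (n + 1)), F s = ⨍ u in Ioc (tP n) (tP (n + 1)), f u) :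
    ∫⁻ s in Ioc (tP 0) t, ENNReal.ofReal ((t - s) ^ (α - 1)) * ‖F s‖ₑ ^ p
      ≤ ENNReal.ofReal α⁻¹ *
          (∫⁻ s in Ioc (tP 0) t, ENNReal.ofReal ((t - s) ^ (α - 1)) * ‖f s‖ₑ ^ p)
        + ENNReal.ofReal α⁻¹ * ∫⁻ s in Ioc (tP 0) (tP (k + 1)),
          ENNReal.ofReal ((tP (k + 1) - s) ^ (α - 1)) * ‖f s‖ₑ ^ p := by
  have hk0 : tP 0 ≤ tP k := hmono (by simp) (by simp) k.zero_le
  conv_lhs => rw [← Ioc_union_Ioc_eq_Ioc hk0 ht.1.le,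
    lintegral_union measurableSet_Ioc (Ioc_disjoint_Ioc_of_le le_rfl)]
  gcongr ?_ + ?_
  · refine (lintegral_Ioc_kernel_mul_piecewise_le hα hp
      (hmono.mono (Iic_subset_Iic.2 k.le_succ)) ht.1 fun n hn => hF n hn.le).trans ?_
    gcongr
    exact ht.1.le
  · refine (lintegral_Ioc_kernel_mul_setAverage_le_of_le hα hp ht.1.le ht.2
      fun s hs => hF k le_rfl s ⟨hs.1, hs.2.trans ht.2⟩).trans ?_
    gcongr

theorem eq_of_mem_Ioc_of_mem_Ioc {tP : ℕ → ℝ} {N : ℕ} (hmono : MonotoneOn tP (Iic N))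
    {i j : ℕ} (hi : i < N) (hj : j < N) {s : ℝ} (hsi : s ∈ Ioc (tP i) (tP (i + 1)))
    (hsj : s ∈ Ioc (tP j) (tP (j + 1))) : i = j := by
  by_contra hne
  rcases Nat.lt_or_gt_of_ne hne with hij | hji
  · have := hmono (mem_Iic.2 hi) (mem_Iic.2 hj.le) hij
    linarith [hsi.2, hsj.1]
  · have := hmono (mem_Iic.2 hj) (mem_Iic.2 hi.le) hji
    linarith [hsj.2, hsi.1]

theorem eq_setAverage_of_mem_Ioc {E : Type*} [NormedAddCommGroup E] [NormedSpace ℝ E]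
    {T : ℝ} {N : ℕ} {tP : ℕ → ℝ} (hmono : MonotoneOn tP (Iic N)) (h0 : tP 0 = 0)
    (hN : tP N = T) {nidx : ℝ → ℕ}
    (hnidx : ∀ s ∈ Ioc (0 : ℝ) T,
      1 ≤ nidx s ∧ nidx s ≤ N ∧ tP (nidx s - 1) < s ∧ s ≤ tP (nidx s))
    {f F : ℝ → E}
    (hF : ∀ s ∈ Ioc (0 : ℝ) T, F s = (tP (nidx s) - tP (nidx s - 1))⁻¹ •
      ∫ u in Ioc (tP (nidx s - 1)) (tP (nidx s)), f u)
    {n : ℕ} (hn : n < N) {s : ℝ} (hs : s ∈ Ioc (tP n) (tP (n + 1))) :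
    F s = ⨍ u in Ioc (tP n) (tP (n + 1)), f u := by
  have hsT : s ∈ Ioc (0 : ℝ) T :=
    ⟨h0 ▸ (hmono (by simp) (mem_Iic.2 hn.le) n.zero_le).trans_lt hs.1,
      hN ▸ hs.2.trans (hmono (mem_Iic.2 hn) (by simp) hn)⟩
  obtain ⟨h1, hle, hlt, hle'⟩ := hnidx s hsT
  have hidx : nidx s - 1 = n :=
    eq_of_mem_Ioc_of_mem_Ioc hmono (by omega) hn ⟨hlt, by rwa [Nat.sub_add_cancel h1]⟩ hs
  subst hidx
  rw [hF s hsT, setAverage_eq, Nat.sub_add_cancel h1,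
    Real.volume_real_Ioc_of_le (hlt.trans_le hle').le]

/-- continuity of averaging: there is a constant `C > 0` depending only on
`p` and `α` such that for every final time `T`, Banach space `𝓗`, partition `𝒫` of `[0,T]`,
and Bochner-integrable `f` with `‖f‖_{L^p_α} ≤ M`, the piecewise constant average `F̄`
satisfies `∫_0^t (t-s)^{α-1} ‖F̄(s)‖^p ds ≤ C^p M^p` for all `t ∈ [0,T]`,
i.e. `‖F̄‖_{L^p_α} ≤ C ‖f‖_{L^p_α}`. -/
theorem stmt2 (α p : ℝ) (hα : α ∈ Set.Ioo (0 : ℝ) 1) (hp : 1 ≤ p) :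
    ∃ C : ℝ, 0 < C ∧
      ∀ (T : ℝ), 0 < T →
      ∀ (𝓗 : Type u) [NormedAddCommGroup 𝓗] [NormedSpace ℝ 𝓗] [CompleteSpace 𝓗],
      ∀ (N : ℕ), 1 ≤ N →
      ∀ (tP : ℕ → ℝ), tP 0 = 0 → tP N = T → (∀ n < N, tP n < tP (n + 1)) →
      ∀ (nidx : ℝ → ℕ),
        (∀ s ∈ Set.Ioc (0 : ℝ) T,
          1 ≤ nidx s ∧ nidx s ≤ N ∧ tP (nidx s - 1) < s ∧ s ≤ tP (nidx s)) →
      ∀ (f Fbar : ℝ → 𝓗), IntegrableOn f (Set.Ioc 0 T) →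
        (∀ s ∈ Set.Ioc (0 : ℝ) T,
          Fbar s = (tP (nidx s) - tP (nidx s - 1))⁻¹ •
            ∫ u in Set.Ioc (tP (nidx s - 1)) (tP (nidx s)), f u) →
      ∀ (M : ℝ), 0 ≤ M →
        (∀ r ∈ Set.Icc (0 : ℝ) T,
          ∫⁻ s in Set.Ioc (0 : ℝ) r,
              ENNReal.ofReal ((r - s) ^ (α - 1)) * (‖f s‖₊ : ℝ≥0∞) ^ p
            ≤ ENNReal.ofReal (M ^ p)) →
      ∀ t ∈ Set.Icc (0 : ℝ) T,
        ∫⁻ s in Set.Ioc (0 : ℝ) t,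
            ENNReal.ofReal ((t - s) ^ (α - 1)) * (‖Fbar s‖₊ : ℝ≥0∞) ^ p
          ≤ ENNReal.ofReal (C ^ p * M ^ p) := by
  refine ⟨(2 / α) ^ p⁻¹, by have := hα.1; positivity, ?_⟩
  intro T _ 𝓗 _ _ _ N _ tP htP0 htPN hstep nidx hnidx f Fbar _ hFbar M hM hbound t ht
  simp only [← enorm_eq_nnnorm] at hbound ⊢
  have hmono : MonotoneOn tP (Iic N) := (strictMonoOn_Iic_of_lt_succ hstep).monotoneOn
  have hF := fun n (hn : n < N) s (hs : s ∈ Ioc (tP n) (tP (n + 1))) =>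
    eq_setAverage_of_mem_Ioc hmono htP0 htPN hnidx hFbar hn hs
  rcases ht.1.eq_or_lt with rfl | ht0
  · simp
  obtain ⟨hm1, hmN, hlt, hle⟩ := hnidx t ⟨ht0, ht.2⟩
  obtain ⟨k, hk⟩ : ∃ k, nidx t = k + 1 := ⟨nidx t - 1, by omega⟩
  rw [hk, Nat.add_sub_cancel] at hlt
  rw [hk] at hle hmN
  have hkT : tP (k + 1) ≤ T := htPN ▸ hmono (mem_Iic.2 hmN) (mem_Iic.2 le_rfl) hmN
  have hα0 := hα.1
  calc _ ≤ ENNReal.ofReal α⁻¹ * ENNReal.ofReal (M ^ p)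
        + ENNReal.ofReal α⁻¹ * ENNReal.ofReal (M ^ p) := by
        rw [← htP0]
        refine (lintegral_Ioc_kernel_mul_piecewise_le_of_mem_Ioc hα hp
          (hmono.mono (Iic_subset_Iic.2 hmN)) ⟨hlt, hle⟩ fun n hn => hF n (by omega)).trans ?_
        gcongr
        exacts [htP0 ▸ hbound t ⟨ht0.le, ht.2⟩, htP0 ▸ hbound _ ⟨ht0.le.trans hle, hkT⟩]
    _ = ENNReal.ofReal (((2 / α) ^ p⁻¹) ^ p * M ^ p) := by
      rw [Real.rpow_inv_rpow (by positivity) (by linarith), ← ENNReal.ofReal_mul (by positivity),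
        ← ENNReal.ofReal_add (by positivity) (by positivity)]
      ring_nf
end

section
/- Let α, β ∈ (0,1). There exists a constant C > 0, depending only on α and β, such that for all real numbers s, r, τ, δ with 0 ≤ s < r, τ > 0 and 0 < δ ≤ τ, one has ∫_s^{min(s+δ, r)} (r−t)^{α−1} (t−s)^{β−1} dt ≤ C (r−s)^{α−1} τ^{β}. -/
open MeasureTheory Set
open scoped ENNReal

/-!
Put `h = (r - s) / 2`. On the left half `(s, s + h]` the factor `(r - t)^(α-1)` is at most
`h^(α-1)`, and the other factor integrates to `(length)^β / β`; on the right half `(s + h, r]`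
the roles of the two factors are exchanged, and `h^(β-1) h^α = h^(α-1) h^β`. If `δ ≤ h` the
domain lies in the left half and has length `δ ≤ τ`; otherwise `h < δ ≤ τ` and both halves
contribute. This gives the bound with `C = 2^(1-α) (1/α + 1/β)`.
-/

lemma setLIntegral_ofReal_mul_le {S : Set ℝ} {f g : ℝ → ℝ} {c : ℝ} (hS : MeasurableSet S)
    (hf : ∀ t ∈ S, f t ≤ c) (hg : ∀ t ∈ S, 0 ≤ g t) :
    ∫⁻ t in S, ENNReal.ofReal (f t * g t)
      ≤ ENNReal.ofReal c * ∫⁻ t in S, ENNReal.ofReal (g t) := by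
  rw [← lintegral_const_mul' _ _ ENNReal.ofReal_ne_top]
  refine setLIntegral_mono' hS fun t ht => ?_
  rw [← ENNReal.ofReal_mul' (hg t ht)]
  exact ENNReal.ofReal_le_ofReal (mul_le_mul_of_nonneg_right (hf t ht) (hg t ht))

lemma lintegral_Ioc_rpow_sub_left {a b γ : ℝ} (hab : a ≤ b) (hγ : 0 < γ) :
    ∫⁻ t in Ioc a b, ENNReal.ofReal ((t - a) ^ (γ - 1))
      = ENNReal.ofReal ((b - a) ^ γ / γ) := by
  have hint : IntervalIntegrable (fun t => (t - a) ^ (γ - 1)) volume a b := by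
    simpa using (intervalIntegral.intervalIntegrable_rpow' (a := 0) (b := b - a)
      (by linarith : -1 < γ - 1)).comp_sub_right a
  rw [← ofReal_integral_eq_lintegral_ofReal hint.1, ← intervalIntegral.integral_of_le hab,
    intervalIntegral.integral_comp_sub_right (fun u => u ^ (γ - 1)) a,
    integral_rpow (Or.inl (by linarith)), sub_self, sub_add_cancel, Real.zero_rpow hγ.ne',
    sub_zero]
  filter_upwards [ae_restrict_mem measurableSet_Ioc] with t ht
  exact Real.rpow_nonneg (by linarith [ht.1]) _

lemma lintegral_Ioc_rpow_sub_right {a b γ : ℝ} (hab : a ≤ b) (hγ : 0 < γ) :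
    ∫⁻ t in Ioc a b, ENNReal.ofReal ((b - t) ^ (γ - 1))
      = ENNReal.ofReal ((b - a) ^ γ / γ) := by
  have hint : IntervalIntegrable (fun t => (b - t) ^ (γ - 1)) volume a b := by
    simpa using ((intervalIntegral.intervalIntegrable_rpow' (a := 0) (b := b - a)
      (by linarith : -1 < γ - 1)).comp_sub_left b).symm
  rw [← ofReal_integral_eq_lintegral_ofReal hint.1, ← intervalIntegral.integral_of_le hab,
    intervalIntegral.integral_comp_sub_left (fun u => u ^ (γ - 1)) b,
    integral_rpow (Or.inl (by linarith)), sub_self, sub_add_cancel, Real.zero_rpow hγ.ne',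
    sub_zero]
  filter_upwards [ae_restrict_mem measurableSet_Ioc] with t ht
  exact Real.rpow_nonneg (by linarith [ht.2]) _

section BetaKernel

variable {α β a b c h : ℝ}

lemma lintegral_Ioc_kernel_le_of_far_right (hα : α ≤ 1) (hβ : 0 < β) (hh : 0 < h)
    (hab : a ≤ b) (hbc : b + h ≤ c) :
    ∫⁻ t in Ioc a b, ENNReal.ofReal ((c - t) ^ (α - 1) * (t - a) ^ (β - 1))
      ≤ ENNReal.ofReal (h ^ (α - 1) * ((b - a) ^ β / β)) := by
  calc _ ≤ ENNReal.ofReal (h ^ (α - 1))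
          * ∫⁻ t in Ioc a b, ENNReal.ofReal ((t - a) ^ (β - 1)) :=
        setLIntegral_ofReal_mul_le measurableSet_Ioc
          (fun t ht => Real.rpow_le_rpow_of_nonpos hh (by linarith [ht.2]) (by linarith))
          (fun t ht => Real.rpow_nonneg (by linarith [ht.1]) _)
    _ = ENNReal.ofReal (h ^ (α - 1) * ((b - a) ^ β / β)) := by
        rw [lintegral_Ioc_rpow_sub_left hab hβ, ← ENNReal.ofReal_mul (by positivity)]

lemma lintegral_Ioc_kernel_le_of_far_left (hα : 0 < α) (hβ : β ≤ 1) (hh : 0 < h)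
    (hab : a + h ≤ b) (hbc : b ≤ c) :
    ∫⁻ t in Ioc b c, ENNReal.ofReal ((c - t) ^ (α - 1) * (t - a) ^ (β - 1))
      ≤ ENNReal.ofReal (h ^ (β - 1) * ((c - b) ^ α / α)) := by
  simp_rw [mul_comm ((c - _) ^ (α - 1))]
  calc _ ≤ ENNReal.ofReal (h ^ (β - 1))
          * ∫⁻ t in Ioc b c, ENNReal.ofReal ((c - t) ^ (α - 1)) :=
        setLIntegral_ofReal_mul_le measurableSet_Ioc
          (fun t ht => Real.rpow_le_rpow_of_nonpos hh (by linarith [ht.1]) (by linarith))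
          (fun t ht => Real.rpow_nonneg (by linarith [ht.2]) _)
    _ = ENNReal.ofReal (h ^ (β - 1) * ((c - b) ^ α / α)) := by
        rw [lintegral_Ioc_rpow_sub_right hbc hα, ← ENNReal.ofReal_mul (by positivity)]

lemma rpow_sub_one_mul_rpow_comm (hh : 0 < h) :
    h ^ (β - 1) * h ^ α = h ^ (α - 1) * h ^ β := by
  rw [← Real.rpow_add hh, ← Real.rpow_add hh]
  ring_nf

lemma lintegral_Ioc_kernel_le_s5 {s r τ δ : ℝ} (hα₀ : 0 < α) (hα₁ : α ≤ 1)
    (hβ₀ : 0 < β) (hβ₁ : β ≤ 1) (hsr : s < r) (hδ : 0 < δ) (hδτ : δ ≤ τ) :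
    ∫⁻ t in Ioc s (min (s + δ) r), ENNReal.ofReal ((r - t) ^ (α - 1) * (t - s) ^ (β - 1))
      ≤ ENNReal.ofReal ((1 / α + 1 / β) * ((r - s) / 2) ^ (α - 1) * τ ^ β) := by
  obtain ⟨h, hh, hr⟩ : ∃ h, 0 < h ∧ r = s + h + h := ⟨(r - s) / 2, by linarith, by ring⟩
  have hτ : 0 < τ := hδ.trans_le hδτ
  rw [show (r - s) / 2 = h by linarith]
  rcases le_or_gt δ h with hδh | hhδ
  · rw [min_eq_left (by linarith)]
    refine (lintegral_Ioc_kernel_le_of_far_right hα₁ hβ₀ hh (by linarith) (by linarith)).trans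
      (ENNReal.ofReal_le_ofReal ?_)
    rw [add_sub_cancel_left]
    calc h ^ (α - 1) * (δ ^ β / β) ≤ h ^ (α - 1) * (τ ^ β / β) := by gcongr
      _ = 1 / β * h ^ (α - 1) * τ ^ β := by ring
      _ ≤ (1 / α + 1 / β) * h ^ (α - 1) * τ ^ β := by gcongr; linarith [one_div_pos.2 hα₀]
  · calc _ ≤ ∫⁻ t in Ioc s r, ENNReal.ofReal ((r - t) ^ (α - 1) * (t - s) ^ (β - 1)) :=
          lintegral_mono_set (Ioc_subset_Ioc_right (min_le_right _ _))
      _ = (∫⁻ t in Ioc s (s + h), ENNReal.ofReal ((r - t) ^ (α - 1) * (t - s) ^ (β - 1))) +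
            ∫⁻ t in Ioc (s + h) r,
              ENNReal.ofReal ((r - t) ^ (α - 1) * (t - s) ^ (β - 1)) := by
          rw [← lintegral_union measurableSet_Ioc (Ioc_disjoint_Ioc_of_le le_rfl),
            Ioc_union_Ioc_eq_Ioc (by linarith) (by linarith)]
      _ ≤ ENNReal.ofReal (h ^ (α - 1) * ((s + h - s) ^ β / β)) +
            ENNReal.ofReal (h ^ (β - 1) * ((r - (s + h)) ^ α / α)) :=
          add_le_add (lintegral_Ioc_kernel_le_of_far_right hα₁ hβ₀ hh (by linarith) hr.ge)
            (lintegral_Ioc_kernel_le_of_far_left hα₀ hβ₁ hh le_rfl (by linarith))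
      _ = ENNReal.ofReal ((1 / α + 1 / β) * h ^ (α - 1) * h ^ β) := by
          rw [add_sub_cancel_left, show r - (s + h) = h by linarith,
            ← ENNReal.ofReal_add (by positivity) (by positivity),
            ← mul_div_assoc (h ^ (β - 1)), rpow_sub_one_mul_rpow_comm hh]
          ring_nf
      _ ≤ ENNReal.ofReal ((1 / α + 1 / β) * h ^ (α - 1) * τ ^ β) :=
          ENNReal.ofReal_le_ofReal <| by
            gcongr
            linarith

end BetaKernel

/-- for `α, β ∈ (0,1)` there is `C > 0` depending only on `α, β` such that
for all `0 ≤ s < r`, `τ > 0` and `0 < δ ≤ τ`,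
`∫_s^{min(s+δ,r)} (r-t)^{α-1} (t-s)^{β-1} dt ≤ C (r-s)^{α-1} τ^β`. -/
theorem stmt5 (α β : ℝ) (hα : α ∈ Set.Ioo (0 : ℝ) 1) (hβ : β ∈ Set.Ioo (0 : ℝ) 1) :
    ∃ C : ℝ, 0 < C ∧
      ∀ s r τ δ : ℝ, 0 ≤ s → s < r → 0 < τ → 0 < δ → δ ≤ τ →
        ∫⁻ t in Set.Ioc s (min (s + δ) r),
            ENNReal.ofReal ((r - t) ^ (α - 1) * (t - s) ^ (β - 1))
          ≤ ENNReal.ofReal (C * (r - s) ^ (α - 1) * τ ^ β) := by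
  obtain ⟨hα₀, hα₁⟩ := hα
  obtain ⟨hβ₀, hβ₁⟩ := hβ
  refine ⟨(1 / α + 1 / β) * 2 ^ (1 - α), by positivity,
    fun s r τ δ _ hsr _ hδ hδτ => ?_⟩
  have hhalf : ((r - s) / 2) ^ (α - 1) = 2 ^ (1 - α) * (r - s) ^ (α - 1) := by
    rw [Real.div_rpow (by linarith) zero_le_two, div_eq_mul_inv, ← Real.rpow_neg zero_le_two,
      neg_sub, mul_comm]
  refine (lintegral_Ioc_kernel_le_s5 hα₀ hα₁.le hβ₀ hβ₁.le hsr hδ hδτ).trans_eq ?_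
  rw [hhalf]
  ring_nf
end

section
/- Let α, β ∈ (0,1). There exists a constant C > 0, depending only on α and β, such that for all real numbers s, r, τ with 0 ≤ s < r and τ > 0, one has ∫_s^r (r−t)^{α−1} ( (t−s)^{β−1} − (t−s+τ)^{β−1} ) dt ≤ C τ^{β} (r−s)^{α−1}. -/
/-!
Split `(s, r]` at its midpoint and write `g(x) = x^{β-1} - (x+τ)^{β-1}`. On the left half
`(r - t)^{α-1} ≤ ((r-s)/2)^{α-1}`, and `g` integrates over `(0, L)` to
`(L^β + τ^β - (L+τ)^β)/β ≤ τ^β/β`. On the right half `g(x) ≤ τ^β/x ≤ 2τ^β/(r-s)`, while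
`(r - t)^{α-1}` integrates to `((r-s)/2)^α/α`. So each half contributes
`τ^β ((r-s)/2)^{α-1}` times `1/β`, resp. `1/α`.
-/

open MeasureTheory Set
open scoped ENNReal

namespace Real

lemma rpow_sub_one_sub_add_rpow_sub_one_le_div {β τ x : ℝ} (hβ0 : 0 ≤ β) (hβ1 : β ≤ 1)
    (hx : 0 < x) (hτ : 0 < τ) :
    x ^ (β - 1) - (x + τ) ^ (β - 1) ≤ τ ^ β / x := by
  have hxτ : 0 < x + τ := by linarith
  have hmono : x ^ β ≤ (x + τ) ^ β := rpow_le_rpow hx.le (by linarith) hβ0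
  have hanti : (x + τ) ^ (β - 1) ≤ τ ^ (β - 1) :=
    rpow_le_rpow_of_nonpos hτ (by linarith) (by linarith)
  rw [le_div_iff₀ hx]
  calc (x ^ (β - 1) - (x + τ) ^ (β - 1)) * x
      = x ^ β - (x + τ) ^ β + τ * (x + τ) ^ (β - 1) := by
        rw [rpow_sub_one hx.ne', rpow_sub_one hxτ.ne']; field_simp; ring
    _ ≤ τ * τ ^ (β - 1) := by nlinarith
    _ = τ ^ β := by rw [rpow_sub_one hτ.ne']; field_simp

lemma intervalIntegrable_add_const_rpow {r : ℝ} (hr : -1 < r) (c a b : ℝ) :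
    IntervalIntegrable (fun x : ℝ => (x + c) ^ r) volume a b := by
  simpa using
    (intervalIntegral.intervalIntegrable_rpow' (a := a + c) (b := b + c) hr).comp_add_right c

lemma intervalIntegrable_const_sub_rpow {r : ℝ} (hr : -1 < r) (c a b : ℝ) :
    IntervalIntegrable (fun x : ℝ => (c - x) ^ r) volume a b := by
  simpa using
    (intervalIntegral.intervalIntegrable_rpow' (a := c - a) (b := c - b) hr).comp_sub_left c

lemma integral_rpow_sub_one_sub_add_rpow_sub_one_le {β τ L : ℝ} (hβ : 0 < β) (hL : 0 ≤ L)
    (hτ : 0 < τ) :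
    ∫ x in (0 : ℝ)..L, (x ^ (β - 1) - (x + τ) ^ (β - 1)) ≤ τ ^ β / β := by
  have hpow : ∀ a b : ℝ, ∫ x in a..b, x ^ (β - 1) = (b ^ β - a ^ β) / β := fun a b => by
    rw [integral_rpow (Or.inl (by linarith)), sub_add_cancel]
  rw [intervalIntegral.integral_sub (intervalIntegral.intervalIntegrable_rpow' (by linarith))
      (intervalIntegrable_add_const_rpow (r := β - 1) (by linarith) τ 0 L),
    intervalIntegral.integral_comp_add_right (· ^ (β - 1)), hpow, hpow, zero_add,
    zero_rpow hβ.ne', ← sub_div, div_le_div_iff_of_pos_right hβ]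
  linarith [rpow_le_rpow hL (by linarith : L ≤ L + τ) hβ.le]

lemma integral_const_sub_rpow_sub_one {α : ℝ} (hα : 0 < α) (a b : ℝ) :
    ∫ x in a..b, (b - x) ^ (α - 1) = (b - a) ^ α / α := by
  rw [intervalIntegral.integral_comp_sub_left (· ^ (α - 1)), integral_rpow (Or.inl (by linarith)),
    sub_add_cancel, sub_self, zero_rpow hα.ne', sub_zero]

end Real

lemma setLIntegral_ofReal_le_ofReal_mul_integral {X : Type*} [MeasurableSpace X] {μ : Measure X}
    {S : Set X} (hS : MeasurableSet S) {f g : X → ℝ} {c : ℝ} (hc : 0 ≤ c)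
    (hg : IntegrableOn g S μ) (hg0 : ∀ x ∈ S, 0 ≤ g x) (hfg : ∀ x ∈ S, f x ≤ c * g x) :
    ∫⁻ x in S, ENNReal.ofReal (f x) ∂μ ≤ ENNReal.ofReal (c * ∫ x in S, g x ∂μ) := by
  rw [← integral_const_mul, ofReal_integral_eq_lintegral_ofReal (hg.const_mul c)]
  · exact setLIntegral_mono' hS fun x hx => ENNReal.ofReal_le_ofReal (hfg x hx)
  · filter_upwards [ae_restrict_mem hS] with x hx using mul_nonneg hc (hg0 x hx)

lemma setLIntegral_Ioc_eq_setLIntegral_Ioc_zero (f : ℝ → ℝ≥0∞) (s r : ℝ) :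
    ∫⁻ t in Ioc s r, f t = ∫⁻ u in Ioc 0 (r - s), f (s + u) := by
  rw [← (measurePreserving_add_left volume s).setLIntegral_comp_preimage_emb
    (measurableEmbedding_addLeft s), preimage_const_add_Ioc, sub_self]

open Real in
lemma setLIntegral_Ioc_zero_rpow_mul_rpow_sub_add_rpow_le {α β τ R : ℝ} (hα0 : 0 < α)
    (hα1 : α ≤ 1) (hβ0 : 0 < β) (hβ1 : β ≤ 1) (hR : 0 < R) (hτ : 0 < τ) :
    ∫⁻ u in Ioc 0 R, ENNReal.ofReal ((R - u) ^ (α - 1) * (u ^ (β - 1) - (u + τ) ^ (β - 1)))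
      ≤ ENNReal.ofReal ((1 / α + 1 / β) * τ ^ β * (R / 2) ^ (α - 1)) := by
  set m := R / 2 with hm_def
  have hm : 0 < m := by positivity
  have hRm : R - m = m := by rw [hm_def]; ring
  have hg0 : ∀ u ∈ Ioc 0 m, 0 ≤ u ^ (β - 1) - (u + τ) ^ (β - 1) := fun u hu =>
    sub_nonneg.2 (rpow_le_rpow_of_nonpos hu.1 (by linarith) (by linarith))
  have hnear : ∫⁻ u in Ioc 0 m,
      ENNReal.ofReal ((R - u) ^ (α - 1) * (u ^ (β - 1) - (u + τ) ^ (β - 1)))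
        ≤ ENNReal.ofReal (m ^ (α - 1) * (τ ^ β / β)) := by
    refine (setLIntegral_ofReal_le_ofReal_mul_integral measurableSet_Ioc (rpow_nonneg hm.le _)
      ((intervalIntegrable_iff_integrableOn_Ioc_of_le hm.le).1
        ((intervalIntegral.intervalIntegrable_rpow' (by linarith)).sub
          (intervalIntegrable_add_const_rpow (r := β - 1) (by linarith) τ 0 m)))
      hg0 fun u hu => mul_le_mul_of_nonneg_right
        (rpow_le_rpow_of_nonpos hm (by linarith [hu.2]) (by linarith)) (hg0 u hu)).trans ?_
    rw [← intervalIntegral.integral_of_le hm.le]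
    exact ENNReal.ofReal_le_ofReal (mul_le_mul_of_nonneg_left
      (integral_rpow_sub_one_sub_add_rpow_sub_one_le hβ0 hm.le hτ) (rpow_nonneg hm.le _))
  have hfar : ∫⁻ u in Ioc m R,
      ENNReal.ofReal ((R - u) ^ (α - 1) * (u ^ (β - 1) - (u + τ) ^ (β - 1)))
        ≤ ENNReal.ofReal (τ ^ β / m * (m ^ α / α)) := by
    refine (setLIntegral_ofReal_le_ofReal_mul_integral (c := τ ^ β / m) measurableSet_Ioc
      (by positivity)
      ((intervalIntegrable_iff_integrableOn_Ioc_of_le (by linarith)).1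
        (intervalIntegrable_const_sub_rpow (r := α - 1) (by linarith) R m R))
      (fun u hu => rpow_nonneg (by linarith [hu.2]) _) fun u hu => ?_).trans_eq ?_
    · rw [mul_comm]
      refine mul_le_mul_of_nonneg_right ?_ (rpow_nonneg (by linarith [hu.2]) _)
      calc u ^ (β - 1) - (u + τ) ^ (β - 1) ≤ τ ^ β / u :=
            rpow_sub_one_sub_add_rpow_sub_one_le_div hβ0.le hβ1 (hm.trans hu.1) hτ
        _ ≤ τ ^ β / m := div_le_div_of_nonneg_left (rpow_nonneg hτ.le _) hm hu.1.le
    · rw [← intervalIntegral.integral_of_le (by linarith), integral_const_sub_rpow_sub_one hα0,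
        hRm]
  rw [← Ioc_union_Ioc_eq_Ioc hm.le (by linarith : m ≤ R),
    lintegral_union measurableSet_Ioc (Ioc_disjoint_Ioc_of_le le_rfl)]
  refine (add_le_add hnear hfar).trans_eq ?_
  rw [← ENNReal.ofReal_add (by positivity) (by positivity), rpow_sub_one hm.ne']
  congr 1
  field_simp
  ring

/-- for `α, β ∈ (0,1)` there is `C > 0` depending only on `α, β` such that
for all `0 ≤ s < r` and `τ > 0`,
`∫_s^r (r-t)^{α-1} ((t-s)^{β-1} - (t-s+τ)^{β-1}) dt ≤ C τ^β (r-s)^{α-1}`. -/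
theorem stmt6 (α β : ℝ) (hα : α ∈ Set.Ioo (0 : ℝ) 1) (hβ : β ∈ Set.Ioo (0 : ℝ) 1) :
    ∃ C : ℝ, 0 < C ∧
      ∀ s r τ : ℝ, 0 ≤ s → s < r → 0 < τ →
        ∫⁻ t in Set.Ioc s r,
            ENNReal.ofReal ((r - t) ^ (α - 1) * ((t - s) ^ (β - 1) - (t - s + τ) ^ (β - 1)))
          ≤ ENNReal.ofReal (C * τ ^ β * (r - s) ^ (α - 1)) := by
  obtain ⟨hα0, hα1⟩ := hα
  obtain ⟨hβ0, hβ1⟩ := hβ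
  refine ⟨2 ^ (1 - α) * (1 / α + 1 / β), by positivity, fun s r τ _ hsr hτ => ?_⟩
  have hR : 0 < r - s := sub_pos.2 hsr
  have hhalf : ((r - s) / 2) ^ (α - 1) = 2 ^ (1 - α) * (r - s) ^ (α - 1) := by
    rw [Real.div_rpow hR.le zero_le_two, show 1 - α = -(α - 1) by ring,
      Real.rpow_neg zero_le_two, div_eq_mul_inv, mul_comm]
  rw [setLIntegral_Ioc_eq_setLIntegral_Ioc_zero]
  simp only [add_sub_cancel_left, sub_add_eq_sub_sub]
  refine (setLIntegral_Ioc_zero_rpow_mul_rpow_sub_add_rpow_le hα0 hα1.le hβ0 hβ1.le hR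
    hτ).trans_eq ?_
  rw [hhalf]
  congr 1
  ring
end

section
/- Let T > 0, α ∈ (0,1), and let g_1, g_2 : [0,T] × ℝ → ℝ be nondecreasing in their second argument, with g_2 measurable. Let v, w ∈ C([0,T]; ℝ) satisfy v(0) < w(0), suppose that for every t ∈ [0,T] the functions s ↦ (t−s)^{α−1} g_2(s, v(s)) and s ↦ (t−s)^{α−1} g_2(s, w(s)) are Lebesgue integrable on (0,t), and assume that for every t ∈ [0,T]: v(t) ≤ g_1(t, v(t)) + (1/Γ(α)) ∫_0^t (t−s)^{α−1} g_2(s, v(s)) ds and w(t) > g_1(t, w(t)) + (1/Γ(α)) ∫_0^t (t−s)^{α−1} g_2(s, w(s)) ds. Then v(t) < w(t) for every t ∈ [0,T]. -/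
/-!
Suppose `v < w` fails somewhere and let `c` be the first point of `[0,T]` where `w ≤ v`; since
`v 0 < w 0`, continuity gives `c > 0`, `v c = w c` and `v ≤ w` on `(0,c]`. Then the `g₁`-terms at
`c` agree and, `g₂` being nondecreasing and the kernel `(c-s)^(α-1)` nonnegative, the fractional
integral of `g₂(·, v)` at `c` is at most that of `g₂(·, w)`. Hence
`v c ≤ g₁ c (v c) + I_v ≤ g₁ c (w c) + I_w < w c = v c`, a contradiction.
-/

open MeasureTheory Set

theorem ContinuousOn.exists_first_eq {α β : Type*} [LinearOrder α] [TopologicalSpace α]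
    [OrderTopology α] [DenselyOrdered α] [CompactIccSpace α]
    [LinearOrder β] [TopologicalSpace β] [OrderClosedTopology β]
    {v w : α → β} {a b : α} (hv : ContinuousOn v (Icc a b)) (hw : ContinuousOn w (Icc a b))
    (ha : v a < w a) (hle : ∃ t ∈ Icc a b, w t ≤ v t) :
    ∃ c ∈ Ioc a b, v c = w c ∧ ∀ s ∈ Ico a c, v s < w s := by
  obtain ⟨t₀, ht₀, hwv⟩ := hle
  have hS : IsClosed (Icc a b ∩ (fun t => (w t, v t)) ⁻¹' {p | p.1 ≤ p.2}) :=
    (hw.prodMk hv).preimage_isClosed_of_isClosed isClosed_Icc OrderClosedTopology.isClosed_le'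
  obtain ⟨c, ⟨hcI, hwvc⟩, hleast⟩ :=
    (isCompact_Icc.of_isClosed_subset hS inter_subset_left).exists_isLeast ⟨t₀, ht₀, hwv⟩
  have hac : a < c := hcI.1.lt_of_ne (by rintro rfl; exact hwvc.not_gt ha)
  have hbefore : ∀ s ∈ Ico a c, v s < w s := fun s hs =>
    not_le.1 fun h => (hleast ⟨⟨hs.1, hs.2.le.trans hcI.2⟩, h⟩).not_gt hs.2
  have hvc : v c ≤ w c := by
    have hA : IsClosed (Icc a b ∩ (fun t => (v t, w t)) ⁻¹' {p | p.1 ≤ p.2}) :=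
      (hv.prodMk hw).preimage_isClosed_of_isClosed isClosed_Icc OrderClosedTopology.isClosed_le'
    have hsub : Icc a c ⊆ Icc a b ∩ (fun t => (v t, w t)) ⁻¹' {p | p.1 ≤ p.2} := by
      rw [← closure_Ico hac.ne]
      exact hA.closure_subset_iff.2 fun s hs => ⟨⟨hs.1, hs.2.le.trans hcI.2⟩, (hbefore s hs).le⟩
    exact (hsub (right_mem_Icc.2 hac.le)).2
  exact ⟨c, ⟨hac, hcI.2⟩, hvc.antisymm hwvc, hbefore⟩

noncomputable def riemannLiouvilleIntegral (α : ℝ) (f : ℝ → ℝ) (t : ℝ) : ℝ :=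
  (Real.Gamma α)⁻¹ * ∫ s in Ioc 0 t, (t - s) ^ (α - 1) * f s

theorem riemannLiouvilleIntegral_mono_on {α t : ℝ} {f g : ℝ → ℝ} (hα : 0 < α)
    (hf : IntegrableOn (fun s => (t - s) ^ (α - 1) * f s) (Ioc 0 t))
    (hg : IntegrableOn (fun s => (t - s) ^ (α - 1) * g s) (Ioc 0 t))
    (hfg : ∀ s ∈ Ioc 0 t, f s ≤ g s) :
    riemannLiouvilleIntegral α f t ≤ riemannLiouvilleIntegral α g t := by
  refine mul_le_mul_of_nonneg_left ?_ (inv_nonneg.2 (Real.Gamma_pos_of_pos hα).le)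
  refine setIntegral_mono_on hf hg measurableSet_Ioc fun s hs => ?_
  exact mul_le_mul_of_nonneg_left (hfg s hs) (Real.rpow_nonneg (sub_nonneg.2 hs.2) _)

theorem stmt8_general (T α : ℝ) (hα : α ∈ Set.Ioo (0 : ℝ) 1)
    (g₁ g₂ : ℝ → ℝ → ℝ)
    (hg₂ : ∀ t ∈ Set.Icc (0 : ℝ) T, ∀ x y : ℝ, x ≤ y → g₂ t x ≤ g₂ t y)
    (v w : ℝ → ℝ)
    (hv : ContinuousOn v (Set.Icc 0 T)) (hw : ContinuousOn w (Set.Icc 0 T))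
    (h0 : v 0 < w 0)
    (hvint : ∀ t ∈ Set.Icc (0 : ℝ) T,
      IntegrableOn (fun s => (t - s) ^ (α - 1) * g₂ s (v s)) (Set.Ioc 0 t))
    (hwint : ∀ t ∈ Set.Icc (0 : ℝ) T,
      IntegrableOn (fun s => (t - s) ^ (α - 1) * g₂ s (w s)) (Set.Ioc 0 t))
    (hvineq : ∀ t ∈ Set.Icc (0 : ℝ) T,
      v t ≤ g₁ t (v t) +
        (Real.Gamma α)⁻¹ * ∫ s in Set.Ioc (0 : ℝ) t, (t - s) ^ (α - 1) * g₂ s (v s))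
    (hwineq : ∀ t ∈ Set.Icc (0 : ℝ) T,
      g₁ t (w t) +
        (Real.Gamma α)⁻¹ * ∫ s in Set.Ioc (0 : ℝ) t, (t - s) ^ (α - 1) * g₂ s (w s) < w t) :
    ∀ t ∈ Set.Icc (0 : ℝ) T, v t < w t := by
  by_contra! hfail
  obtain ⟨c, hc, hvc, hbefore⟩ := hv.exists_first_eq hw h0 hfail
  have hcI : c ∈ Icc 0 T := Ioc_subset_Icc_self hc
  have hle : ∀ s ∈ Ioc 0 c, v s ≤ w s := fun s hs =>
    hs.2.lt_or_eq.elim (fun h => (hbefore s ⟨hs.1.le, h⟩).le) fun h => h ▸ hvc.le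
  have hmono : riemannLiouvilleIntegral α (fun s => g₂ s (v s)) c ≤
      riemannLiouvilleIntegral α (fun s => g₂ s (w s)) c :=
    riemannLiouvilleIntegral_mono_on hα.1 (hvint c hcI) (hwint c hcI) fun s hs =>
      hg₂ s ⟨hs.1.le, hs.2.trans hcI.2⟩ _ _ (hle s hs)
  have hvsub : v c ≤ g₁ c (v c) + riemannLiouvilleIntegral α (fun s => g₂ s (v s)) c :=
    hvineq c hcI
  have hwsup : g₁ c (w c) + riemannLiouvilleIntegral α (fun s => g₂ s (w s)) c < w c :=
    hwineq c hcI
  rw [hvc] at hvsub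
  linarith

/-- comparison principle: if `g₁, g₂` are nondecreasing in their second
argument, `g₂` is measurable, `v, w` are continuous on `[0,T]` with `v(0) < w(0)`, the
weighted compositions are integrable, and for every `t ∈ [0,T]`
`v(t) ≤ g₁(t,v(t)) + Γ(α)⁻¹ ∫_0^t (t-s)^{α-1} g₂(s,v(s)) ds` while
`w(t) > g₁(t,w(t)) + Γ(α)⁻¹ ∫_0^t (t-s)^{α-1} g₂(s,w(s)) ds`, then `v < w` on `[0,T]`. -/
theorem stmt8 (T α : ℝ) (hT : 0 < T) (hα : α ∈ Set.Ioo (0 : ℝ) 1)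
    (g₁ g₂ : ℝ → ℝ → ℝ)
    (hg₁ : ∀ t ∈ Set.Icc (0 : ℝ) T, ∀ x y : ℝ, x ≤ y → g₁ t x ≤ g₁ t y)
    (hg₂ : ∀ t ∈ Set.Icc (0 : ℝ) T, ∀ x y : ℝ, x ≤ y → g₂ t x ≤ g₂ t y)
    (hg₂m : Measurable (Function.uncurry g₂))
    (v w : ℝ → ℝ)
    (hv : ContinuousOn v (Set.Icc 0 T)) (hw : ContinuousOn w (Set.Icc 0 T))
    (h0 : v 0 < w 0)
    (hvint : ∀ t ∈ Set.Icc (0 : ℝ) T,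
      IntegrableOn (fun s => (t - s) ^ (α - 1) * g₂ s (v s)) (Set.Ioc 0 t))
    (hwint : ∀ t ∈ Set.Icc (0 : ℝ) T,
      IntegrableOn (fun s => (t - s) ^ (α - 1) * g₂ s (w s)) (Set.Ioc 0 t))
    (hvineq : ∀ t ∈ Set.Icc (0 : ℝ) T,
      v t ≤ g₁ t (v t) +
        (Real.Gamma α)⁻¹ * ∫ s in Set.Ioc (0 : ℝ) t, (t - s) ^ (α - 1) * g₂ s (v s))
    (hwineq : ∀ t ∈ Set.Icc (0 : ℝ) T,
      g₁ t (w t) +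
        (Real.Gamma α)⁻¹ * ∫ s in Set.Ioc (0 : ℝ) t, (t - s) ^ (α - 1) * g₂ s (w s) < w t) :
    ∀ t ∈ Set.Icc (0 : ℝ) T, v t < w t :=
  stmt8_general T α hα g₁ g₂ hg₂ v w hv hw h0 hvint hwint hvineq hwineq
end

section
/- Let α ∈ (0,1), T > 0, and let 𝒫 be a partition of [0,T] with N ≥ 1 subintervals. Then the matrix K ∈ ℝ^{N×N} defined by K_{ni} = (1/Γ(α+1))((t_n − t_{i−1})^α − (t_n − t_i)^α) for 1 ≤ i ≤ n ≤ N and K_{ni} = 0 for i > n is invertible, and its inverse M = K^{−1} satisfies: (i) M_{ii} > 0 for every i ∈ {1,…,N}; (ii) M_{ni} < 0 whenever 1 ≤ i < n ≤ N; and (iii) Σ_{j=1}^n M_{nj} > 0 for every n ∈ {1,…,N}. -/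
/-!
`K` is lower triangular with positive entries on and below the diagonal, so it is invertible and
`K⁻¹` has diagonal `1 / K_{ii} > 0`. The remaining signs come from the row equations of
`K K⁻¹ = 1` by induction on the row: subtracting a suitable multiple of row `n - 1` from row `n`
expresses `K_{nn} (K⁻¹)_{ni}` (resp. `K_{nn}` times the `n`-th row sum) as a sum of terms whose
signs are already known. The signs come from two facts about the increments
`(x - a)^α - (x - b)^α` of the concave power `s ↦ s^α`: they strictly decrease in `x`, and for
intervals `[a, b]` left of `[c, d]` the quotient of the increments at `x` and at `y < x` is
smaller for `[c, d]`. Both follow from Cauchy's mean value theorem, which writes that quotient as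
`((x - ξ) / (y - ξ))^(α - 1)` with `ξ` in the interval, and this is decreasing in `ξ`.
-/

open Finset

/-- `K_{ni} = Γ(α+1)⁻¹ * powIncrement α t_n t_{i-1} t_i`. -/
noncomputable def powIncrement (α x a b : ℝ) : ℝ := (x - a) ^ α - (x - b) ^ α

section powIncrement

open Real Set

variable {α x y a b c d : ℝ}

theorem powIncrement_pos (hα : 0 < α) (hab : a < b) (hbx : b ≤ x) :
    0 < powIncrement α x a b :=
  sub_pos.2 (rpow_lt_rpow (by linarith) (by linarith) hα)

theorem exists_powIncrement_mul_eq (hα : 0 < α) (hab : a < b) (hby : b ≤ y) (hbx : b ≤ x) :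
    ∃ ξ ∈ Ioo a b, powIncrement α x a b * (y - ξ) ^ (α - 1) =
      powIncrement α y a b * (x - ξ) ^ (α - 1) := by
  have hcont (z : ℝ) : ContinuousOn (fun s => (z - s) ^ α) (Icc a b) :=
    ((continuous_rpow_const hα.le).comp (continuous_sub_left z)).continuousOn
  have hderiv (z : ℝ) (hbz : b ≤ z) :
      ∀ s ∈ Ioo a b, HasDerivAt (fun s => (z - s) ^ α) (-1 * α * (z - s) ^ (α - 1)) s :=
    fun s hs => ((hasDerivAt_id s).const_sub z).rpow_const (Or.inl (by simp; linarith [hs.2]))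
  obtain ⟨ξ, hξ, h⟩ := exists_ratio_hasDerivAt_eq_ratio_slope _ _ hab (hcont y) (hderiv y hby)
    _ _ (hcont x) (hderiv x hbx)
  refine ⟨ξ, hξ, mul_left_cancel₀ hα.ne' ?_⟩
  unfold powIncrement
  linear_combination h

theorem powIncrement_lt_of_lt (hα0 : 0 < α) (hα1 : α < 1) (hab : a < b) (hby : b ≤ y)
    (hyx : y < x) : powIncrement α x a b < powIncrement α y a b := by
  obtain ⟨ξ, ⟨-, hξb⟩, hξ⟩ := exists_powIncrement_mul_eq hα0 hab hby (hby.trans hyx.le)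
  have hpow : (x - ξ) ^ (α - 1) < (y - ξ) ^ (α - 1) :=
    rpow_lt_rpow_of_neg (by linarith) (by linarith) (by linarith)
  refine lt_of_mul_lt_mul_right (a := (y - ξ) ^ (α - 1)) ?_
    (rpow_pos_of_pos (by linarith) _).le
  rw [hξ]
  exact mul_lt_mul_of_pos_left hpow (powIncrement_pos hα0 hab hby)

theorem powIncrement_mul_lt_mul (hα0 : 0 < α) (hα1 : α < 1) (hab : a < b) (hbc : b ≤ c)
    (hcd : c < d) (hdy : d ≤ y) (hyx : y < x) :
    powIncrement α x c d * powIncrement α y a b < powIncrement α x a b * powIncrement α y c d := by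
  obtain ⟨ξ, ⟨-, hξb⟩, hξ⟩ :=
    exists_powIncrement_mul_eq (y := y) (x := x) hα0 hab (by linarith) (by linarith)
  obtain ⟨η, ⟨hcη, hηd⟩, hη⟩ := exists_powIncrement_mul_eq (x := x) hα0 hcd hdy (by linarith)
  have hpow : (y - ξ) ^ (α - 1) * (x - η) ^ (α - 1) < (y - η) ^ (α - 1) * (x - ξ) ^ (α - 1) := by
    rw [← mul_rpow (by linarith) (by linarith), ← mul_rpow (by linarith) (by linarith)]
    -- `(y - ξ) (x - η) - (y - η) (x - ξ) = (x - y) (η - ξ)`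
    exact rpow_lt_rpow_of_neg (mul_pos (by linarith) (by linarith))
      (by nlinarith [mul_pos (by linarith : 0 < x - y) (by linarith : 0 < η - ξ)]) (by linarith)
  have hQS : 0 < (x - ξ) ^ (α - 1) * (x - η) ^ (α - 1) :=
    mul_pos (rpow_pos_of_pos (by linarith) _) (rpow_pos_of_pos (by linarith) _)
  have hAC : 0 < powIncrement α x a b * powIncrement α x c d :=
    mul_pos (powIncrement_pos hα0 hab (by linarith)) (powIncrement_pos hα0 hcd (by linarith))
  refine lt_of_mul_lt_mul_right ?_ hQS.le
  calc _ = powIncrement α x a b * powIncrement α x c d *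
          ((y - ξ) ^ (α - 1) * (x - η) ^ (α - 1)) := by
        linear_combination (-(powIncrement α x c d * (x - η) ^ (α - 1))) * hξ
    _ < powIncrement α x a b * powIncrement α x c d *
          ((y - η) ^ (α - 1) * (x - ξ) ^ (α - 1)) :=
        mul_lt_mul_of_pos_left hpow hAC
    _ = _ := by linear_combination (powIncrement α x a b * (x - ξ) ^ (α - 1)) * hη

end powIncrement

section Partition

variable {α : ℝ} {N : ℕ} {t : ℕ → ℝ} {i j p n : ℕ}

theorem powIncrement_partition_pos (hα : 0 < α) (ht : StrictMonoOn t (Set.Iic N)) (hin : i ≤ n)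
    (hn : n < N) : 0 < powIncrement α (t (n + 1)) (t i) (t (i + 1)) :=
  powIncrement_pos hα (ht (show i ≤ N by omega) (show i + 1 ≤ N by omega) (by omega))
    (ht.monotoneOn (show i + 1 ≤ N by omega) (show n + 1 ≤ N by omega) (by omega))

theorem powIncrement_partition_lt (hα0 : 0 < α) (hα1 : α < 1) (ht : StrictMonoOn t (Set.Iic N))
    (hjp : j ≤ p) (hpn : p < n) (hn : n < N) :
    powIncrement α (t (n + 1)) (t j) (t (j + 1)) < powIncrement α (t (p + 1)) (t j) (t (j + 1)) :=
  powIncrement_lt_of_lt hα0 hα1 (ht (show j ≤ N by omega) (show j + 1 ≤ N by omega) (by omega))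
    (ht.monotoneOn (show j + 1 ≤ N by omega) (show p + 1 ≤ N by omega) (by omega))
    (ht (show p + 1 ≤ N by omega) (show n + 1 ≤ N by omega) (by omega))

theorem powIncrement_partition_mul_lt_mul (hα0 : 0 < α) (hα1 : α < 1)
    (ht : StrictMonoOn t (Set.Iic N)) (hij : i < j) (hjp : j ≤ p) (hpn : p < n) (hn : n < N) :
    powIncrement α (t (n + 1)) (t j) (t (j + 1)) * powIncrement α (t (p + 1)) (t i) (t (i + 1)) <
      powIncrement α (t (n + 1)) (t i) (t (i + 1)) *
        powIncrement α (t (p + 1)) (t j) (t (j + 1)) :=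
  powIncrement_mul_lt_mul hα0 hα1 (ht (show i ≤ N by omega) (show i + 1 ≤ N by omega) (by omega))
    (ht.monotoneOn (show i + 1 ≤ N by omega) (show j ≤ N by omega) hij)
    (ht (show j ≤ N by omega) (show j + 1 ≤ N by omega) (by omega))
    (ht.monotoneOn (show j + 1 ≤ N by omega) (show p + 1 ≤ N by omega) (by omega))
    (ht (show p + 1 ≤ N by omega) (show n + 1 ≤ N by omega) (by omega))

end Partition

theorem Finset.Iio_eq_Iic_of_covBy {ι : Type*} [LinearOrder ι] [LocallyFiniteOrderBot ι]
    {p n : ι} (h : p ⋖ n) : Iio n = Iic p := by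
  ext j
  simp [h.lt_iff_le_left]

namespace Matrix

variable {ι R : Type*} [LinearOrder ι]

theorem IsLowerTriangular.apply_eq_zero_of_lt [Zero R] {A : Matrix ι ι R}
    (hA : A.IsLowerTriangular) {i j : ι} (h : i < j) : A i j = 0 :=
  hA h

variable [Fintype ι]

theorem IsLowerTriangular.inv [CommRing R] {A : Matrix ι ι R} (hA : A.IsLowerTriangular) :
    A⁻¹.IsLowerTriangular := by
  by_cases h : IsUnit A.det
  · have := A.invertibleOfIsUnitDet h
    exact blockTriangular_inv_of_blockTriangular hA
  · rw [nonsing_inv_apply_not_isUnit A h]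
    exact fun _ _ _ => rfl

section Semiring

variable [NonUnitalNonAssocSemiring R] {A B : Matrix ι ι R}

theorem IsLowerTriangular.mulVec_apply [LocallyFiniteOrderBot ι] (hA : A.IsLowerTriangular)
    (v : ι → R) (i : ι) : (A *ᵥ v) i = ∑ j ∈ Iic i, A i j * v j := by
  simp only [mulVec, dotProduct]
  refine (sum_subset (subset_univ _) fun j _ hj => ?_).symm
  rw [hA.apply_eq_zero_of_lt (not_le.1 (Finset.mem_Iic.not.1 hj)), zero_mul]

theorem IsLowerTriangular.mulVec_apply_eq_add [LocallyFiniteOrderBot ι]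
    (hA : A.IsLowerTriangular) (v : ι → R) (i : ι) :
    (A *ᵥ v) i = A i i * v i + ∑ j ∈ Iio i, A i j * v j := by
  rw [hA.mulVec_apply, ← add_sum_Iio_eq_sum_Iic]

theorem IsLowerTriangular.mul_apply_self (hA : A.IsLowerTriangular) (hB : B.IsLowerTriangular)
    (i : ι) : (A * B) i i = A i i * B i i := by
  rw [mul_apply]
  refine sum_eq_single i (fun j _ hji => ?_) (by simp)
  rcases hji.lt_or_gt with h | h
  · rw [hB.apply_eq_zero_of_lt h, mul_zero]
  · rw [hA.apply_eq_zero_of_lt h, zero_mul]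

end Semiring

theorem IsLowerTriangular.inv_apply_self [Field R] {A : Matrix ι ι R} (hA : A.IsLowerTriangular)
    (h : IsUnit A.det) (i : ι) : A⁻¹ i i = (A i i)⁻¹ := by
  refine eq_inv_of_mul_eq_one_right ?_
  rw [← hA.mul_apply_self hA.inv, mul_nonsing_inv A h, one_apply_eq]

variable [Field R] [LinearOrder R] [IsStrictOrderedRing R] {K : Matrix ι ι R}

theorem IsLowerTriangular.det_pos (hK : K.IsLowerTriangular) (hdiag : ∀ i, 0 < K i i) :
    0 < K.det := by
  rw [det_of_isLowerTriangular K hK]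
  exact prod_pos fun i _ => hdiag i

variable [LocallyFiniteOrderBot ι]

theorem IsLowerTriangular.inv_apply_neg_of_lt (hK : K.IsLowerTriangular)
    (hpos : ∀ n i, i ≤ n → 0 < K n i)
    (hcross : ∀ p n, p ⋖ n → ∀ i j, i < j → j ≤ p → K n j * K p i < K n i * K p j)
    {i n : ι} (hin : i < n) : K⁻¹ n i < 0 := by
  have hunit : IsUnit K.det := (hK.det_pos fun i => hpos i i le_rfl).ne'.isUnit
  set v : ι → R := fun j => K⁻¹ j i
  have hv (l : ι) : (K *ᵥ v) l = (1 : Matrix ι ι R) l i := by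
    rw [← mul_nonsing_inv K hunit]; rfl
  induction n using WellFoundedLT.induction with
  | _ n ih =>
  obtain ⟨p, hip, hpn⟩ := exists_le_covBy_of_lt hin
  set c := K n i / K p i
  -- `c` is chosen so that column `i` drops out of (row `n`) - `c` (row `p`)
  have hrow : K n n * v n =
      ∑ j ∈ Iic p, (c * K p j - K n j) * v j - c * (1 : Matrix ι ι R) p i := by
    have hn := hv n
    rw [hK.mulVec_apply_eq_add, Finset.Iio_eq_Iic_of_covBy hpn, one_apply_ne hin.ne'] at hn
    rw [← hv p, hK.mulVec_apply]
    simp only [sub_mul, sum_sub_distrib, mul_assoc, ← mul_sum]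
    linear_combination hn
  have hlt : ∀ j, i < j → j ≤ p → (c * K p j - K n j) * v j < 0 := by
    intro j hij hjp
    refine mul_neg_of_pos_of_neg (sub_pos.2 ?_) (ih j (hjp.trans_lt hpn.lt) hij)
    rw [div_mul_eq_mul_div, lt_div_iff₀ (hpos p i hip)]
    exact hcross p n hpn i j hij hjp
  have hle : ∀ j ∈ Iic p, (c * K p j - K n j) * v j ≤ 0 := by
    intro j hj
    rcases lt_trichotomy j i with hji | rfl | hij
    · simp [v, hK.inv.apply_eq_zero_of_lt hji]
    · simp [c, div_mul_cancel₀ _ (hpos p j hip).ne']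
    · exact (hlt j hij (mem_Iic.1 hj)).le
  have hnn : K n n * v n < 0 := by
    rw [hrow]
    rcases hip.eq_or_lt with rfl | hip
    · have hc : 0 < c := div_pos (hpos n i hin.le) (hpos i i le_rfl)
      rw [one_apply_eq, mul_one]
      linarith [sum_nonpos hle]
    · rw [one_apply_ne hip.ne', mul_zero, sub_zero]
      exact sum_neg' hle ⟨p, Finset.mem_Iic.2 le_rfl, hlt p hip le_rfl⟩
  exact neg_of_mul_neg_right hnn (hpos n n le_rfl).le

theorem IsLowerTriangular.sum_Iic_inv_apply_pos (hK : K.IsLowerTriangular)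
    (hpos : ∀ n i, i ≤ n → 0 < K n i) (hdecr : ∀ p n, p ⋖ n → ∀ j ≤ p, K n j < K p j)
    (n : ι) : 0 < ∑ j ∈ Iic n, K⁻¹ n j := by
  have hunit : IsUnit K.det := (hK.det_pos fun i => hpos i i le_rfl).ne'.isUnit
  set S : ι → R := K⁻¹ *ᵥ 1
  have hS (l : ι) : (K *ᵥ S) l = 1 := by
    simp [S, mulVec_mulVec, mul_nonsing_inv K hunit]
  suffices 0 < S n by simpa [S, hK.inv.mulVec_apply] using this
  induction n using WellFoundedLT.induction with
  | _ n ih =>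
  have hn := hS n
  rw [hK.mulVec_apply_eq_add] at hn
  refine pos_of_mul_pos_right (a := K n n) ?_ (hpos n n le_rfl).le
  by_cases hmin : IsMin n
  · rw [hmin.finsetIio_eq, sum_empty, add_zero] at hn
    exact hn ▸ one_pos
  obtain ⟨j, hj⟩ := not_isMin_iff.1 hmin
  obtain ⟨p, -, hpn⟩ := exists_le_covBy_of_lt hj
  rw [Finset.Iio_eq_Iic_of_covBy hpn] at hn
  have hrow : K n n * S n = ∑ j ∈ Iic p, (K p j - K n j) * S j := by
    have hp := hS p
    rw [hK.mulVec_apply] at hp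
    simp only [sub_mul, sum_sub_distrib]
    linear_combination hn - hp
  rw [hrow]
  refine sum_pos (fun j hj => mul_pos ?_ (ih j ((mem_Iic.1 hj).trans_lt hpn.lt))) nonempty_Iic
  exact sub_pos.2 (hdecr p n hpn j (mem_Iic.1 hj))

end Matrix

-- Indices are shifted by one: row `n` and column `i` of `K` are the paper's `n + 1` and `i + 1`.
theorem stmt11_general (α : ℝ) (hα : α ∈ Set.Ioo (0 : ℝ) 1)
    (N : ℕ) (tP : ℕ → ℝ)
    (hmono : ∀ n < N, tP n < tP (n + 1))
    (K : Matrix (Fin N) (Fin N) ℝ)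
    (hK : ∀ n i : Fin N, K n i =
      if (i : ℕ) ≤ (n : ℕ) then
        (Real.Gamma (α + 1))⁻¹ *
          ((tP ((n : ℕ) + 1) - tP (i : ℕ)) ^ α - (tP ((n : ℕ) + 1) - tP ((i : ℕ) + 1)) ^ α)
      else 0) :
    IsUnit K ∧
    (∀ i : Fin N, 0 < K⁻¹ i i) ∧
    (∀ i n : Fin N, i < n → K⁻¹ n i < 0) ∧
    (∀ n : Fin N, 0 < ∑ j ∈ Finset.Iic n, K⁻¹ n j) := by
  obtain ⟨hα0, hα1⟩ := hα
  have ht : StrictMonoOn tP (Set.Iic N) := strictMonoOn_Iic_of_lt_succ hmono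
  have hΓ : 0 < (Real.Gamma (α + 1))⁻¹ := inv_pos.2 (Real.Gamma_pos_of_pos (by linarith))
  have hKle (n i : Fin N) (h : i ≤ n) :
      K n i = (Real.Gamma (α + 1))⁻¹ * powIncrement α (tP (n + 1)) (tP i) (tP (i + 1)) := by
    rw [hK, if_pos (Fin.le_def.1 h), powIncrement]
  have hlower : K.IsLowerTriangular := fun n i (h : n < i) => by
    rw [hK, if_neg (not_le.2 (Fin.lt_def.1 h))]
  have hpos (n i : Fin N) (h : i ≤ n) : 0 < K n i := by
    rw [hKle n i h]
    exact mul_pos hΓ (powIncrement_partition_pos hα0 ht h n.isLt)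
  have hdecr (p n : Fin N) (hpn : p ⋖ n) (j : Fin N) (hjp : j ≤ p) : K n j < K p j := by
    rw [hKle n j (hjp.trans hpn.le), hKle p j hjp]
    exact mul_lt_mul_of_pos_left (powIncrement_partition_lt hα0 hα1 ht hjp hpn.lt n.isLt) hΓ
  have hcross (p n : Fin N) (hpn : p ⋖ n) (i j : Fin N) (hij : i < j) (hjp : j ≤ p) :
      K n j * K p i < K n i * K p j := by
    rw [hKle n j (hjp.trans hpn.le), hKle p i (hij.le.trans hjp),
      hKle n i (hij.le.trans (hjp.trans hpn.le)), hKle p j hjp]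
    have := powIncrement_partition_mul_lt_mul hα0 hα1 ht hij hjp hpn.lt n.isLt
    linarith [mul_lt_mul_of_pos_left this (mul_pos hΓ hΓ)]
  have hunit : IsUnit K.det := (hlower.det_pos fun i => hpos i i le_rfl).ne'.isUnit
  refine ⟨(Matrix.isUnit_iff_isUnit_det K).2 hunit, fun i => ?_,
    fun i n h => hlower.inv_apply_neg_of_lt hpos hcross h, hlower.sum_Iic_inv_apply_pos hpos hdecr⟩
  rw [hlower.inv_apply_self hunit]
  exact inv_pos.2 (hpos i i le_rfl)

/-- properties of `K_𝒫⁻¹`: the lower triangular matrix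
`K_{ni} = Γ(α+1)⁻¹((t_n - t_{i-1})^α - (t_n - t_i)^α)` (here `0`-indexed: row `n`
and column `i` of the Lean matrix correspond to the paper's indices `n+1`, `i+1`)
is invertible, its inverse has positive diagonal entries, strictly negative strictly
lower triangular entries, and positive row sums `Σ_{j=1}^n (K⁻¹)_{nj} > 0`
(equivalently `K⁻¹_{n0} := -Σ_{j=1}^n (K⁻¹)_{nj} < 0`). -/
theorem stmt11 (α T : ℝ) (hα : α ∈ Set.Ioo (0 : ℝ) 1) (hT : 0 < T)
    (N : ℕ) (hN : 1 ≤ N) (tP : ℕ → ℝ) (htP0 : tP 0 = 0) (htPN : tP N = T)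
    (hmono : ∀ n < N, tP n < tP (n + 1))
    (K : Matrix (Fin N) (Fin N) ℝ)
    (hK : ∀ n i : Fin N, K n i =
      if (i : ℕ) ≤ (n : ℕ) then
        (Real.Gamma (α + 1))⁻¹ *
          ((tP ((n : ℕ) + 1) - tP (i : ℕ)) ^ α - (tP ((n : ℕ) + 1) - tP ((i : ℕ) + 1)) ^ α)
      else 0) :
    IsUnit K ∧
    (∀ i : Fin N, 0 < K⁻¹ i i) ∧
    (∀ i n : Fin N, i < n → K⁻¹ n i < 0) ∧
    (∀ n : Fin N, 0 < ∑ j ∈ Finset.Iic n, K⁻¹ n j) :=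
  stmt11_general α hα N tP hmono K hK
end

section
/- Let α ∈ (0,1), T > 0, let 𝒫 be a partition of [0,T] with N ≥ 2 subintervals, let K ∈ ℝ^{N×N} be the matrix with entries K_{ni} = (1/Γ(α+1))((t_n − t_{i−1})^α − (t_n − t_i)^α) for 1 ≤ i ≤ n ≤ N and K_{ni} = 0 for i > n, and let M = K^{−1}. Then for every n ∈ {1,…,N−1} one has Σ_{j=1}^{n} M_{nj} > Σ_{j=1}^{n+1} M_{n+1,j}; equivalently, setting M_{n0} := −Σ_{j=1}^n M_{nj}, one has M_{n0} < M_{n+1,0}. -/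
/-!
Let `s` be the vector of row sums of `K⁻¹`, so that `K s = 1`, and let `e₀ = s₀`,
`e_k = s_k - s_{k-1}`. Summation by parts turns row `m` of `K s = 1` into
`φ_m(t_{m+1}) = Γ(α+1)` with `φ_m(x) = ∑_{k ≤ m} e_k (x - t_k)^α`, and the claim is
`e_{n+1} < 0`.

Write `φ_m' = α ψ_m` and `G_m(x) = ψ_m(x) (x - t_{m+1})^{1-α}`. By induction, `G_m` is positive
and strictly increasing on `(t_{m+1}, ∞)`. Indeed, as `φ_{m+1}(t_{m+2}) = φ_m(t_{m+1})`,
`-e_{m+1} (t_{m+2} - t_{m+1})^α = φ_m(t_{m+2}) - φ_m(t_{m+1})`; this is positive since `ψ_m > 0`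
on `(t_{m+1}, t_{m+2})`, and at most `G_m(t_{m+2}) (t_{m+2} - t_{m+1})^α` since there
`ψ_m(x) ≤ G_m(t_{m+2}) (x - t_{m+1})^{α-1}`. So `0 < -e_{m+1} ≤ G_m(t_{m+2})`, and then
`G_{m+1}(x) = (G_m(x) + e_{m+1}) ((x - t_{m+2}) / (x - t_{m+1}))^{1-α}` is again positive and
strictly increasing.
-/

open Matrix Set

lemma Matrix.IsLowerTriangular.sum_Iic_inv_apply {ι R : Type*} [Fintype ι] [DecidableEq ι]
    [LinearOrder ι] [LocallyFiniteOrderBot ι] [CommRing R] {A : Matrix ι ι R}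
    (hA : A.IsLowerTriangular) (hdet : IsUnit A.det) (i : ι) :
    ∑ j ∈ Finset.Iic i, A⁻¹ i j = ∑ j, A⁻¹ i j := by
  have := A.invertibleOfIsUnitDet hdet
  refine Finset.sum_subset (Finset.subset_univ _) fun j _ hj => ?_
  have hij : i < j := not_le.1 fun h => hj (Finset.mem_Iic.2 h)
  exact blockTriangular_inv_of_blockTriangular hA hij

lemma MonotoneOn.mul_strictMonoOn_of_pos {β : Type*} [Preorder β] {f g : β → ℝ} {s : Set β}
    (hf : MonotoneOn f s) (hf0 : ∀ x ∈ s, 0 < f x) (hg : StrictMonoOn g s)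
    (hg0 : ∀ x ∈ s, 0 < g x) : StrictMonoOn (fun x => f x * g x) s :=
  fun x hx y hy hxy => (mul_lt_mul_of_pos_left (hg hx hy hxy) (hf0 x hx)).trans_le
    (mul_le_mul_of_nonneg_right (hf hx hy hxy.le) (hg0 y hy).le)

namespace FractionalRowSums

noncomputable def phi (α : ℝ) (t e : ℕ → ℝ) (n : ℕ) (x : ℝ) : ℝ :=
  ∑ k ∈ Finset.range (n + 1), e k * (x - t k) ^ α

noncomputable def psi (α : ℝ) (t e : ℕ → ℝ) (n : ℕ) (x : ℝ) : ℝ :=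
  ∑ k ∈ Finset.range (n + 1), e k * (x - t k) ^ (α - 1)

noncomputable def scaledPsi (α : ℝ) (t e : ℕ → ℝ) (n : ℕ) (x : ℝ) : ℝ :=
  psi α t e n x * (x - t (n + 1)) ^ (1 - α)

variable {α : ℝ} {t e : ℕ → ℝ} {n : ℕ} {a b c x : ℝ}

lemma phi_succ : phi α t e (n + 1) x = phi α t e n x + e (n + 1) * (x - t (n + 1)) ^ α :=
  Finset.sum_range_succ _ _

lemma psi_succ :
    psi α t e (n + 1) x = psi α t e n x + e (n + 1) * (x - t (n + 1)) ^ (α - 1) :=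
  Finset.sum_range_succ _ _

lemma hasDerivAt_phi (hx : ∀ k ≤ n, t k < x) :
    HasDerivAt (phi α t e n) (α * psi α t e n x) x := by
  have hterm : ∀ k ∈ Finset.range (n + 1), HasDerivAt (fun y => e k * (y - t k) ^ α)
      (e k * (1 * α * (x - t k) ^ (α - 1))) x := fun k hk =>
    (((hasDerivAt_id x).sub_const (t k)).rpow_const (Or.inl (sub_pos.2
      (hx k (Nat.lt_succ_iff.1 (Finset.mem_range.1 hk)))).ne')).const_mul (e k)
  refine (HasDerivAt.fun_sum hterm).congr_deriv ?_
  simp only [psi, Finset.mul_sum]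
  exact Finset.sum_congr rfl fun k _ => by ring

lemma continuousOn_phi (ha : ∀ k ≤ n, t k < a) : ContinuousOn (phi α t e n) (Icc a b) :=
  fun _ hx => (hasDerivAt_phi fun k hk => (ha k hk).trans_le hx.1).continuousAt.continuousWithinAt

lemma phi_lt_of_psi_pos (hα : 0 < α) (ha : ∀ k ≤ n, t k < a) (hab : a < b)
    (hψ : ∀ x ∈ Ioo a b, 0 < psi α t e n x) : phi α t e n a < phi α t e n b := by
  refine strictMonoOn_of_hasDerivWithinAt_pos (convex_Icc a b) (continuousOn_phi ha)
    (f' := fun x => α * psi α t e n x) (fun x hx => ?_) (fun x hx => ?_)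
    (left_mem_Icc.2 hab.le) (right_mem_Icc.2 hab.le) hab
  · rw [interior_Icc] at hx
    exact (hasDerivAt_phi fun k hk => (ha k hk).trans hx.1).hasDerivWithinAt
  · rw [interior_Icc] at hx
    exact mul_pos hα (hψ x hx)

lemma phi_sub_le_of_psi_le (hα : 0 < α) (ha : ∀ k ≤ n, t k < a) (hab : a ≤ b)
    (hψ : ∀ x ∈ Ioo a b, psi α t e n x ≤ c * (x - a) ^ (α - 1)) :
    phi α t e n b - phi α t e n a ≤ c * (b - a) ^ α := by
  have hanti : AntitoneOn (fun x => phi α t e n x - c * (x - a) ^ α) (Icc a b) := by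
    refine antitoneOn_of_hasDerivWithinAt_nonpos (convex_Icc a b)
      ((continuousOn_phi ha).sub (continuousOn_const.mul
        ((continuousOn_id.sub continuousOn_const).rpow_const fun _ _ => Or.inr hα.le)))
      (fun x hx => ?_) (fun x hx => ?_)
      (f' := fun x => α * psi α t e n x - c * (1 * α * (x - a) ^ (α - 1)))
    · rw [interior_Icc] at hx
      exact ((hasDerivAt_phi fun k hk => (ha k hk).trans hx.1).sub
        ((((hasDerivAt_id x).sub_const a).rpow_const
          (Or.inl (sub_pos.2 hx.1).ne')).const_mul c)).hasDerivWithinAt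
    · rw [interior_Icc] at hx
      have := mul_le_mul_of_nonneg_left (hψ x hx) hα.le
      linarith
  have := hanti (left_mem_Icc.2 hab) (right_mem_Icc.2 hab) hab
  simp only [sub_self, Real.zero_rpow hα.ne', mul_zero, sub_zero] at this
  linarith

lemma psi_eq_scaledPsi_mul (hx : t (n + 1) < x) :
    psi α t e n x = scaledPsi α t e n x * (x - t (n + 1)) ^ (α - 1) := by
  rw [scaledPsi, mul_assoc, ← Real.rpow_add (sub_pos.2 hx)]
  norm_num

lemma rpow_sub_mul_rpow_sub (hab : a < b) (hbx : b ≤ x) :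
    (x - a) ^ (α - 1) * (x - b) ^ (1 - α) = ((x - b) / (x - a)) ^ (1 - α) := by
  have hxa : 0 < x - a := by linarith
  rw [Real.div_rpow (by linarith) hxa.le, show α - 1 = -(1 - α) by ring,
    Real.rpow_neg hxa.le, inv_mul_eq_div]

lemma scaledPsi_zero (h01 : t 0 < t 1) (hx : t 1 ≤ x) :
    scaledPsi α t e 0 x = e 0 * ((x - t 1) / (x - t 0)) ^ (1 - α) := by
  simp [scaledPsi, psi, mul_assoc, rpow_sub_mul_rpow_sub h01 hx]

lemma scaledPsi_succ (hab : t (n + 1) < t (n + 2)) (hx : t (n + 2) ≤ x) :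
    scaledPsi α t e (n + 1) x =
      (scaledPsi α t e n x + e (n + 1)) * ((x - t (n + 2)) / (x - t (n + 1))) ^ (1 - α) := by
  rw [scaledPsi, psi_succ, psi_eq_scaledPsi_mul (hab.trans_le hx), ← add_mul, mul_assoc,
    ← rpow_sub_mul_rpow_sub hab hx]

lemma strictMonoOn_div_rpow (hα : α < 1) (hab : a < b) :
    StrictMonoOn (fun x => ((x - b) / (x - a)) ^ (1 - α)) (Ioi b) := by
  intro x hx y hy hxy
  have hxa : 0 < x - a := by linarith [mem_Ioi.1 hx]
  have hya : 0 < y - a := by linarith [mem_Ioi.1 hy]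
  refine Real.rpow_lt_rpow (div_nonneg (sub_nonneg.2 (le_of_lt hx)) hxa.le) ?_ (by linarith)
  rw [div_lt_div_iff₀ hxa hya]
  nlinarith

lemma div_rpow_pos (hab : a < b) (hx : x ∈ Ioi b) : 0 < ((x - b) / (x - a)) ^ (1 - α) :=
  Real.rpow_pos_of_pos (div_pos (sub_pos.2 hx) (by linarith [mem_Ioi.1 hx])) _

lemma neg_increment_mul_rpow (hφ : phi α t e (n + 1) (t (n + 2)) = phi α t e n (t (n + 1))) :
    -e (n + 1) * (t (n + 2) - t (n + 1)) ^ α =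
      phi α t e n (t (n + 2)) - phi α t e n (t (n + 1)) := by
  rw [← hφ, phi_succ]
  ring

lemma lt_of_strictMonoOn_Iic (ht : StrictMonoOn t (Iic (n + 2))) :
    (∀ k ≤ n, t k < t (n + 1)) ∧ t (n + 1) < t (n + 2) :=
  ⟨fun k hk => ht (mem_Iic.2 (by omega)) (mem_Iic.2 (by omega)) (by omega),
    ht (mem_Iic.2 (by omega)) (mem_Iic.2 le_rfl) (by omega)⟩

section Step

variable (hα : 0 < α) (ht : StrictMonoOn t (Iic (n + 2)))
  (hφ : phi α t e (n + 1) (t (n + 2)) = phi α t e n (t (n + 1)))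
include hα ht hφ

lemma increment_succ_neg (hG : ∀ x ∈ Ioi (t (n + 1)), 0 < scaledPsi α t e n x) :
    e (n + 1) < 0 := by
  obtain ⟨hta, hab⟩ := lt_of_strictMonoOn_Iic ht
  have hlt := phi_lt_of_psi_pos hα hta hab fun x hx => by
    rw [psi_eq_scaledPsi_mul hx.1]
    exact mul_pos (hG x hx.1) (Real.rpow_pos_of_pos (sub_pos.2 hx.1) _)
  have hpos : 0 < -e (n + 1) * (t (n + 2) - t (n + 1)) ^ α := by
    rw [neg_increment_mul_rpow hφ]
    linarith
  have := pos_of_mul_pos_left hpos (Real.rpow_nonneg (sub_pos.2 hab).le _)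
  linarith

lemma neg_increment_succ_le (hG : MonotoneOn (scaledPsi α t e n) (Ioi (t (n + 1)))) :
    -e (n + 1) ≤ scaledPsi α t e n (t (n + 2)) := by
  obtain ⟨hta, hab⟩ := lt_of_strictMonoOn_Iic ht
  have hle := phi_sub_le_of_psi_le hα hta hab.le (c := scaledPsi α t e n (t (n + 2)))
    fun x hx => by
      rw [psi_eq_scaledPsi_mul hx.1]
      exact mul_le_mul_of_nonneg_right (hG hx.1 hab hx.2.le)
        (Real.rpow_nonneg (sub_pos.2 hx.1).le _)
  rw [← neg_increment_mul_rpow hφ] at hle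
  exact le_of_mul_le_mul_right hle (Real.rpow_pos_of_pos (sub_pos.2 hab) _)

lemma scaledPsi_succ_pos_strictMonoOn (hα1 : α < 1)
    (hmono : StrictMonoOn (scaledPsi α t e n) (Ioi (t (n + 1)))) :
    (∀ x ∈ Ioi (t (n + 2)), 0 < scaledPsi α t e (n + 1) x) ∧
      StrictMonoOn (scaledPsi α t e (n + 1)) (Ioi (t (n + 2))) := by
  have hab := (lt_of_strictMonoOn_Iic ht).2
  have hle := neg_increment_succ_le hα ht hφ hmono.monotoneOn
  have hshift : ∀ x ∈ Ioi (t (n + 2)), 0 < scaledPsi α t e n x + e (n + 1) := fun x hx => by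
    have := hmono hab (hab.trans hx) hx
    linarith
  have heq : EqOn (fun x => (scaledPsi α t e n x + e (n + 1)) *
      ((x - t (n + 2)) / (x - t (n + 1))) ^ (1 - α)) (scaledPsi α t e (n + 1))
      (Ioi (t (n + 2))) := fun x hx => (scaledPsi_succ hab (le_of_lt hx)).symm
  refine ⟨fun x hx => heq hx ▸ mul_pos (hshift x hx) (div_rpow_pos hab hx), ?_⟩
  refine (MonotoneOn.mul_strictMonoOn_of_pos ?_ hshift (strictMonoOn_div_rpow hα1 hab)
    fun x hx => div_rpow_pos hab hx).congr heq
  exact fun x hx y hy hxy => add_le_add_left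
    (hmono.monotoneOn (Ioi_subset_Ioi hab.le hx) (Ioi_subset_Ioi hab.le hy) hxy) _

end Step

lemma scaledPsi_zero_pos_strictMonoOn (hα1 : α < 1) (h01 : t 0 < t 1) (he0 : 0 < e 0) :
    (∀ x ∈ Ioi (t 1), 0 < scaledPsi α t e 0 x) ∧
      StrictMonoOn (scaledPsi α t e 0) (Ioi (t 1)) := by
  have heq : EqOn (fun x => e 0 * ((x - t 1) / (x - t 0)) ^ (1 - α)) (scaledPsi α t e 0)
      (Ioi (t 1)) := fun x hx => (scaledPsi_zero h01 (le_of_lt hx)).symm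
  refine ⟨fun x hx => heq hx ▸ mul_pos he0 (div_rpow_pos h01 hx), ?_⟩
  exact (MonotoneOn.mul_strictMonoOn_of_pos monotoneOn_const (fun _ _ => he0)
    (strictMonoOn_div_rpow hα1 h01) fun x hx => div_rpow_pos h01 hx).congr heq

lemma scaledPsi_pos_strictMonoOn (hα : α ∈ Ioo 0 1) (ht : StrictMonoOn t (Iic (n + 1)))
    (he0 : 0 < e 0)
    (hφ : ∀ m < n, phi α t e (m + 1) (t (m + 2)) = phi α t e m (t (m + 1))) :
    (∀ x ∈ Ioi (t (n + 1)), 0 < scaledPsi α t e n x) ∧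
      StrictMonoOn (scaledPsi α t e n) (Ioi (t (n + 1))) := by
  induction n with
  | zero => exact scaledPsi_zero_pos_strictMonoOn hα.2 (ht (by simp) (by simp) one_pos) he0
  | succ n ih =>
    obtain ⟨-, hmono⟩ := ih (ht.mono (Iic_subset_Iic.2 (by omega)))
      fun m hm => hφ m (by omega)
    exact scaledPsi_succ_pos_strictMonoOn hα.1 ht (hφ n (by omega)) hα.2 hmono

theorem increment_succ_neg_of_phi_eq {g : ℝ} (hα : α ∈ Ioo 0 1)
    (ht : StrictMonoOn t (Iic (n + 2))) (hg : 0 < g)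
    (hφ : ∀ m ≤ n + 1, phi α t e m (t (m + 1)) = g) : e (n + 1) < 0 := by
  have he0 : 0 < e 0 := by
    have h0 := hφ 0 (by omega)
    simp only [phi, zero_add, Finset.range_one, Finset.sum_singleton] at h0
    have h01 : t 0 < t 1 := ht (mem_Iic.2 (by omega)) (mem_Iic.2 (by omega)) one_pos
    exact pos_of_mul_pos_left (h0 ▸ hg) (Real.rpow_nonneg (sub_pos.2 h01).le _)
  have hφ' : ∀ m < n + 1, phi α t e (m + 1) (t (m + 2)) = phi α t e m (t (m + 1)) :=
    fun m hm => (hφ (m + 1) hm).trans (hφ m hm.le).symm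
  exact increment_succ_neg hα.1 ht (hφ' n (by omega))
    (scaledPsi_pos_strictMonoOn hα (ht.mono (Iic_subset_Iic.2 (by omega))) he0
      fun m hm => hφ' m (by omega)).1

def increments (s : ℕ → ℝ) : ℕ → ℝ
  | 0 => s 0
  | k + 1 => s (k + 1) - s k

lemma sum_range_sub_mul_eq (A s : ℕ → ℝ) (m : ℕ) :
    ∑ i ∈ Finset.range (m + 1), (A i - A (i + 1)) * s i =
      ∑ k ∈ Finset.range (m + 1), increments s k * A k - A (m + 1) * s m := by
  induction m with
  | zero => simp [increments]; ring
  | succ m ih =>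
    rw [Finset.sum_range_succ, ih, Finset.sum_range_succ _ (m + 1), increments]
    ring

section KernelMatrix

variable {N : ℕ} {K : Matrix (Fin N) (Fin N) ℝ}
  (hK : ∀ n i : Fin N, K n i =
    if (i : ℕ) ≤ (n : ℕ) then
      (Real.Gamma (α + 1))⁻¹ *
        ((t ((n : ℕ) + 1) - t (i : ℕ)) ^ α - (t ((n : ℕ) + 1) - t ((i : ℕ) + 1)) ^ α)
    else 0)
include hK

lemma isLowerTriangular_of_eq : K.IsLowerTriangular := fun i j hij => by
  rw [hK, if_neg (not_le.2 (show (i : ℕ) < j from hij))]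

lemma isUnit_det_of_eq (hα : 0 < α) (ht : ∀ n < N, t n < t (n + 1)) : IsUnit K.det := by
  rw [det_of_isLowerTriangular K (isLowerTriangular_of_eq hK), isUnit_iff_ne_zero]
  refine Finset.prod_ne_zero_iff.2 fun i _ => ?_
  rw [hK, if_pos le_rfl, sub_self, Real.zero_rpow hα.ne', sub_zero]
  exact mul_ne_zero (inv_ne_zero (Real.Gamma_pos_of_pos (by linarith)).ne')
    (Real.rpow_pos_of_pos (sub_pos.2 (ht i i.isLt)) _).ne'

lemma phi_increments_eq_Gamma (hα : α ≠ 0) {s : ℕ → ℝ}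
    (hs : K *ᵥ (fun j : Fin N => s j) = 1) (m : Fin N) :
    phi α t (increments s) m (t (m + 1)) = Real.Gamma (α + 1) := by
  have hrow := congrFun hs m
  simp only [mulVec, dotProduct, hK, Pi.one_apply, ite_mul, zero_mul] at hrow
  rw [Fin.sum_univ_eq_sum_range (fun j => if j ≤ m then (Real.Gamma (α + 1))⁻¹ *
      ((t (m + 1) - t j) ^ α - (t (m + 1) - t (j + 1)) ^ α) * s j else 0),
    ← Finset.sum_filter] at hrow
  have hfilter : (Finset.range N).filter (· ≤ (m : ℕ)) = Finset.range (m + 1) := by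
    ext j
    simp only [Finset.mem_filter, Finset.mem_range]
    omega
  simp only [hfilter, mul_assoc, ← Finset.mul_sum, sum_range_sub_mul_eq, sub_self,
    Real.zero_rpow hα, zero_mul, sub_zero] at hrow
  have hΓ : Real.Gamma (α + 1) ≠ 0 := fun h => left_ne_zero_of_mul_eq_one hrow (by simp [h])
  rw [phi, ← (inv_mul_eq_one₀ hΓ).1 hrow]

end KernelMatrix

end FractionalRowSums

open FractionalRowSums

-- Rows and columns are `0`-indexed: Lean's row `n` and column `i` are the paper's `n+1`, `i+1`.
theorem stmt12_general (α : ℝ) (hα : α ∈ Set.Ioo (0 : ℝ) 1)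
    (N : ℕ) (tP : ℕ → ℝ)
    (hmono : ∀ n < N, tP n < tP (n + 1))
    (K : Matrix (Fin N) (Fin N) ℝ)
    (hK : ∀ n i : Fin N, K n i =
      if (i : ℕ) ≤ (n : ℕ) then
        (Real.Gamma (α + 1))⁻¹ *
          ((tP ((n : ℕ) + 1) - tP (i : ℕ)) ^ α - (tP ((n : ℕ) + 1) - tP ((i : ℕ) + 1)) ^ α)
      else 0) :
    ∀ n m : Fin N, (m : ℕ) = (n : ℕ) + 1 →
      ∑ j ∈ Finset.Iic m, K⁻¹ m j < ∑ j ∈ Finset.Iic n, K⁻¹ n j := by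
  intro n m hm
  have hdet := isUnit_det_of_eq hK hα.1 hmono
  set s : ℕ → ℝ := fun i => if h : i < N then ∑ j, K⁻¹ ⟨i, h⟩ j else 0
  have hrowSum : ∀ i : Fin N, s i = ∑ j, K⁻¹ i j := fun i => by simp [s]
  have hs : K *ᵥ (fun j : Fin N => s j) = 1 := by
    have : (fun j : Fin N => s j) = K⁻¹ *ᵥ 1 := funext fun j => by
      simp [hrowSum, mulVec, dotProduct]
    rw [this, mulVec_mulVec, mul_nonsing_inv K hdet, one_mulVec]
  have hneg := increment_succ_neg_of_phi_eq (n := n) (e := increments s) hα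
    ((strictMonoOn_Iic_of_lt_succ fun k hk => hmono k hk).mono (Iic_subset_Iic.2 (by omega)))
    (Real.Gamma_pos_of_pos (by linarith [hα.1]))
    fun k hk => phi_increments_eq_Gamma hK hα.1.ne' hs ⟨k, by omega⟩
  rw [increments, ← hm, hrowSum, hrowSum, sub_neg] at hneg
  rwa [(isLowerTriangular_of_eq hK).sum_Iic_inv_apply hdet,
    (isLowerTriangular_of_eq hK).sum_Iic_inv_apply hdet]

/-- monotonicity of the row sums of `K_𝒫⁻¹`: with
`K_{ni} = Γ(α+1)⁻¹((t_n - t_{i-1})^α - (t_n - t_i)^α)` (here `0`-indexed: Lean row `n`,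
column `i` correspond to the paper's `n+1`, `i+1`), for consecutive rows `n, m = n+1`
one has `Σ_{j=1}^{n} (K⁻¹)_{nj} > Σ_{j=1}^{n+1} (K⁻¹)_{n+1,j}`; equivalently, with
`(K⁻¹)_{n0} := -Σ_j (K⁻¹)_{nj}`, one has `(K⁻¹)_{n0} < (K⁻¹)_{n+1,0}`. -/
theorem stmt12 (α T : ℝ) (hα : α ∈ Set.Ioo (0 : ℝ) 1) (hT : 0 < T)
    (N : ℕ) (hN : 2 ≤ N) (tP : ℕ → ℝ) (htP0 : tP 0 = 0) (htPN : tP N = T)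
    (hmono : ∀ n < N, tP n < tP (n + 1))
    (K : Matrix (Fin N) (Fin N) ℝ)
    (hK : ∀ n i : Fin N, K n i =
      if (i : ℕ) ≤ (n : ℕ) then
        (Real.Gamma (α + 1))⁻¹ *
          ((tP ((n : ℕ) + 1) - tP (i : ℕ)) ^ α - (tP ((n : ℕ) + 1) - tP ((i : ℕ) + 1)) ^ α)
      else 0) :
    ∀ n m : Fin N, (m : ℕ) = (n : ℕ) + 1 →
      ∑ j ∈ Finset.Iic m, K⁻¹ m j < ∑ j ∈ Finset.Iic n, K⁻¹ n j :=
  stmt12_general α hα N tP hmono K hK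
end

section
/- Let α ∈ (0,1), T > 0, let 𝒫 be a partition of [0,T] with N ≥ 3 subintervals, let K ∈ ℝ^{N×N} be the matrix with entries K_{ni} = (1/Γ(α+1))((t_n − t_{i−1})^α − (t_n − t_i)^α) for 1 ≤ i ≤ n ≤ N and K_{ni} = 0 for i > n, and let M = K^{−1}. Then M_{ni} < M_{n+1,i} whenever 1 ≤ i < n < N. -/
open Matrix

/-!
Fix a column `i` of `M = K⁻¹` and put `s_k = t_{i+k}`, `x_0 = M_{i,i}` and
`x_k = M_{i+k,i} - M_{i+k-1,i}`. Summation by parts turns the rows of `K M = 1` into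
`∑_{q ≤ n} x_q (s_{n+1} - s_q)^α = Γ(α+1) δ_{n0}`, so `x_0 > 0`, `x_1 < 0`, and the claim is
`x_{n+1} > 0` for `n ≥ 1`, proved by induction on `n`.

Dividing the left-hand side by `(t - s_0)^α` gives `H(t) = ∑_{q ≤ n} x_q ((t - s_q)/(t - s_0))^α`,
which vanishes at `t = s_{n+1}` and, for `n ≥ 2`, also at `t = s_n`. Its derivative is a positive
multiple of `h(t) = ∑_{q ≤ n} x_q (s_q - s_0) ((t - s_1)/(t - s_q))^{1-α}`: for `n = 1` this is the
constant `x_1 (s_1 - s_0) < 0`, and for `n ≥ 2` it is strictly decreasing because `x_q > 0` for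
`2 ≤ q ≤ n`, while it vanishes somewhere in `(s_n, s_{n+1})` by Rolle. Either way `h < 0` beyond
`s_{n+1}`, so `H(s_{n+2}) < 0`, and row `n + 1` then forces `x_{n+1} > 0`.
-/

namespace FractionalKernelInverse

open Finset

variable (α : ℝ) (s x : ℕ → ℝ)

noncomputable def powSum (n : ℕ) (t : ℝ) : ℝ :=
  ∑ q ∈ range (n + 1), x q * (t - s q) ^ α

noncomputable def normPowSum (n : ℕ) (t : ℝ) : ℝ :=
  ∑ q ∈ range (n + 1), x q * ((t - s q) / (t - s 0)) ^ α

noncomputable def normPowSumSlope (n : ℕ) (t : ℝ) : ℝ :=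
  ∑ q ∈ range (n + 1), x q * (s q - s 0) * ((t - s 1) / (t - s q)) ^ (1 - α)

variable {α s x}

lemma powSum_succ_self {n : ℕ} (hα : α ≠ 0) :
    powSum α s x (n + 1) (s (n + 1)) = powSum α s x n (s (n + 1)) := by
  rw [powSum, sum_range_succ, sub_self, Real.zero_rpow hα, mul_zero, add_zero, powSum]

lemma normPowSum_eq_div {n : ℕ} {t : ℝ} (hs : ∀ q ≤ n, s q ≤ t) :
    normPowSum α s x n t = powSum α s x n t / (t - s 0) ^ α := by
  rw [normPowSum, powSum, sum_div]
  refine sum_congr rfl fun q hq => ?_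
  rw [Real.div_rpow (sub_nonneg.2 (hs q (mem_range_succ_iff.1 hq)))
    (sub_nonneg.2 (hs 0 (Nat.zero_le n))), mul_div_assoc]

lemma continuousAt_normPowSum (hα : 0 ≤ α) (n : ℕ) {t : ℝ} (ht : t ≠ s 0) :
    ContinuousAt (normPowSum α s x n) t := by
  have ht' : t - s 0 ≠ 0 := sub_ne_zero.2 ht
  unfold normPowSum
  refine tendsto_finsetSum _ fun q _ => ContinuousAt.mul continuousAt_const ?_
  exact ((continuousAt_id.sub continuousAt_const).div
    (continuousAt_id.sub continuousAt_const) ht').rpow_const (Or.inr hα)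

lemma rpow_div_eq_mul_rpow_div {a b c : ℝ} (ha : 0 < a) (hb : 0 < b) (hc : 0 < c) :
    (a / b) ^ (α - 1) = (c / b) ^ (α - 1) * (c / a) ^ (1 - α) := by
  have flip : ∀ {u v : ℝ}, 0 < u → 0 < v → (u / v) ^ (α - 1) = (v / u) ^ (1 - α) := by
    intro u v hu hv
    rw [show α - 1 = -(1 - α) by ring, Real.rpow_neg (div_pos hu hv).le,
      ← Real.inv_rpow (div_pos hu hv).le, inv_div]
  rw [flip ha hb, flip hc hb, ← Real.mul_rpow (div_pos hb hc).le (div_pos hc ha).le]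
  congr 1
  field_simp

lemma hasDerivAt_normPowSum (hα : 0 < α) {n : ℕ} (hn : 1 ≤ n) {t : ℝ}
    (hs : ∀ q ≤ n, s q < t) :
    ∃ c > 0, HasDerivAt (normPowSum α s x n) (c * normPowSumSlope α s x n t) t := by
  have h0 := sub_pos.2 (hs 0 (Nat.zero_le n))
  have h1 := sub_pos.2 (hs 1 hn)
  refine ⟨α * ((t - s 1) / (t - s 0)) ^ (α - 1) / (t - s 0) ^ 2,
    by have := Real.rpow_pos_of_pos (div_pos h1 h0) (α - 1); positivity, ?_⟩
  rw [normPowSumSlope, mul_sum]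
  refine HasDerivAt.fun_sum fun q hq => ?_
  have hq := sub_pos.2 (hs q (mem_range_succ_iff.1 hq))
  have hquot : HasDerivAt (fun t => (t - s q) / (t - s 0))
      ((1 * (t - s 0) - (t - s q) * 1) / (t - s 0) ^ 2) t :=
    ((hasDerivAt_id t).sub_const _).div ((hasDerivAt_id t).sub_const _) h0.ne'
  refine ((hquot.rpow_const (Or.inl (div_pos hq h0).ne')).const_mul (x q)).congr_deriv ?_
  rw [rpow_div_eq_mul_rpow_div hq h0 h1]
  ring

lemma normPowSumSlope_one {t : ℝ} (ht : t ≠ s 1) :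
    normPowSumSlope α s x 1 t = x 1 * (s 1 - s 0) := by
  rw [normPowSumSlope, sum_range_succ, sum_range_one, div_self (sub_ne_zero.2 ht),
    Real.one_rpow]
  ring

lemma rpow_div_sub_lt_rpow_div_sub {β a b t₁ t₂ : ℝ} (hβ : 0 < β) (hab : a < b) (hb : b < t₁)
    (ht : t₁ < t₂) : ((t₂ - a) / (t₂ - b)) ^ β < ((t₁ - a) / (t₁ - b)) ^ β := by
  refine Real.rpow_lt_rpow (div_nonneg (by linarith) (by linarith)) ?_ hβ
  rw [div_lt_div_iff₀ (by linarith) (by linarith)]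
  nlinarith

lemma normPowSumSlope_strictAntiOn (hα : α < 1) {n : ℕ} (hn : 2 ≤ n)
    (hs : StrictMonoOn s (Set.Iic n)) (hx : ∀ q, 2 ≤ q → q ≤ n → 0 < x q) :
    StrictAntiOn (normPowSumSlope α s x n) (Set.Ioi (s n)) := by
  have hsq : ∀ {a b}, a < b → b ≤ n → s a < s b := fun hab hb =>
    hs (Set.mem_Iic.2 (by omega)) (Set.mem_Iic.2 hb) hab
  intro t₁ ht₁ t₂ ht₂ ht
  have hterm : ∀ q, 2 ≤ q → q ≤ n →
      x q * (s q - s 0) * ((t₂ - s 1) / (t₂ - s q)) ^ (1 - α)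
        < x q * (s q - s 0) * ((t₁ - s 1) / (t₁ - s q)) ^ (1 - α) := by
    intro q h2q hqn
    have hsqn : s q ≤ s n := hs.monotoneOn (Set.mem_Iic.2 hqn) (Set.mem_Iic.2 le_rfl) hqn
    exact mul_lt_mul_of_pos_left
      (rpow_div_sub_lt_rpow_div_sub (by linarith) (hsq (by omega) hqn) (hsqn.trans_lt ht₁) ht)
      (mul_pos (hx q h2q hqn) (sub_pos.2 (hsq (by omega) hqn)))
  refine sum_lt_sum (fun q hq => ?_) ⟨n, self_mem_range_succ n, hterm n hn le_rfl⟩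
  have hqn : q ≤ n := mem_range_succ_iff.1 hq
  rcases (by omega : q = 0 ∨ q = 1 ∨ 2 ≤ q) with rfl | rfl | h2q
  · simp
  · have h1n : s 1 < s n := hsq (by omega) le_rfl
    rw [div_self (sub_ne_zero.2 (h1n.trans ht₂).ne'),
      div_self (sub_ne_zero.2 (h1n.trans ht₁).ne')]
  · exact (hterm q h2q hqn).le

lemma pos_of_normPowSumSlope_neg (hα : 0 < α) {n : ℕ} (hn : 1 ≤ n)
    (hs : StrictMonoOn s (Set.Iic (n + 2)))
    (hslope : ∀ t, s (n + 1) < t → normPowSumSlope α s x n t < 0)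
    (hrel : powSum α s x n (s (n + 1)) = 0) (hrel' : powSum α s x (n + 1) (s (n + 2)) = 0) :
    0 < x (n + 1) := by
  have hsq : ∀ {a b}, a < b → b ≤ n + 2 → s a < s b := fun hab hb =>
    hs (Set.mem_Iic.2 (by omega)) (Set.mem_Iic.2 hb) hab
  have hle : ∀ {t}, s (n + 1) ≤ t → ∀ q ≤ n, s q < t := fun ht q hq =>
    (hsq (Nat.lt_succ_of_le hq) (by omega)).trans_le ht
  have hanti : StrictAntiOn (normPowSum α s x n) (Set.Ici (s (n + 1))) := by
    refine strictAntiOn_of_deriv_neg (convex_Ici _) (fun t ht => ?_) (fun t ht => ?_)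
    · exact (continuousAt_normPowSum hα.le n (hle ht 0 (Nat.zero_le n)).ne').continuousWithinAt
    · rw [interior_Ici] at ht
      obtain ⟨c, hc, hderiv⟩ := hasDerivAt_normPowSum (x := x) hα hn (hle (le_of_lt ht))
      rw [hderiv.deriv]
      exact mul_neg_of_pos_of_neg hc (hslope t ht)
  have hdecr := hanti (Set.mem_Ici.2 le_rfl) (Set.mem_Ici.2 (hsq (by omega) le_rfl).le)
    (hsq (by omega) le_rfl)
  have h0 : 0 < s (n + 2) - s 0 := sub_pos.2 (hsq (by omega) le_rfl)
  rw [normPowSum_eq_div (fun q hq => (hle le_rfl q hq).le), hrel, zero_div,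
    normPowSum_eq_div (fun q hq => (hle (hsq (by omega) le_rfl).le q hq).le),
    div_lt_iff₀ (Real.rpow_pos_of_pos h0 α), zero_mul] at hdecr
  rw [powSum, sum_range_succ, ← powSum] at hrel'
  have hd : 0 < (s (n + 2) - s (n + 1)) ^ α :=
    Real.rpow_pos_of_pos (sub_pos.2 (hsq (by omega) le_rfl)) α
  exact pos_of_mul_pos_left (by linarith) hd.le

lemma normPowSumSlope_neg (hα₀ : 0 < α) (hα₁ : α < 1) {n : ℕ} (hn : 1 ≤ n)
    (hs : StrictMonoOn s (Set.Iic (n + 2))) (hx : ∀ q, 2 ≤ q → q ≤ n + 1 → 0 < x q)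
    (hrel : powSum α s x n (s (n + 1)) = 0) (hrel' : powSum α s x (n + 1) (s (n + 2)) = 0) :
    ∀ t, s (n + 2) < t → normPowSumSlope α s x (n + 1) t < 0 := by
  have hsq : ∀ {a b}, a < b → b ≤ n + 2 → s a < s b := fun hab hb =>
    hs (Set.mem_Iic.2 (by omega)) (Set.mem_Iic.2 hb) hab
  have hle : ∀ {t}, s (n + 1) ≤ t → ∀ q ≤ n + 1, s q ≤ t := fun ht q hq =>
    (hs.monotoneOn (Set.mem_Iic.2 (by omega)) (Set.mem_Iic.2 (by omega)) hq).trans ht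
  have hzero₁ : normPowSum α s x (n + 1) (s (n + 1)) = 0 := by
    rw [normPowSum_eq_div (hle le_rfl), powSum_succ_self hα₀.ne', hrel, zero_div]
  have hzero₂ : normPowSum α s x (n + 1) (s (n + 2)) = 0 := by
    rw [normPowSum_eq_div (hle (hsq (by omega) le_rfl).le), hrel', zero_div]
  have h0 : s 0 < s (n + 1) := hsq (by omega) (by omega)
  obtain ⟨ξ, hξ, hderiv_zero⟩ := exists_deriv_eq_zero (hsq (a := n + 1) (by omega) le_rfl)
    (fun t ht => (continuousAt_normPowSum hα₀.le (n + 1) (h0.trans_le ht.1).ne').continuousWithinAt)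
    (hzero₁.trans hzero₂.symm)
  obtain ⟨c, hc, hderiv⟩ := hasDerivAt_normPowSum (x := x) hα₀ (by omega : 1 ≤ n + 1)
    (fun q hq => (hle le_rfl q hq).trans_lt hξ.1)
  rw [hderiv.deriv, mul_eq_zero, or_iff_right hc.ne'] at hderiv_zero
  intro t ht
  rw [← hderiv_zero]
  exact normPowSumSlope_strictAntiOn hα₁ (by omega) (hs.mono (Set.Iic_subset_Iic.2 (by omega)))
    hx hξ.1 ((hξ.1.trans hξ.2).trans ht) (hξ.2.trans ht)

theorem pos_of_powSum_eq (hα₀ : 0 < α) (hα₁ : α < 1) {γ : ℝ} (hγ : 0 < γ) {j : ℕ} (hj : 2 ≤ j)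
    (hs : StrictMonoOn s (Set.Iic (j + 1)))
    (hrel : ∀ n ≤ j, powSum α s x n (s (n + 1)) = if n = 0 then γ else 0) :
    0 < x j := by
  induction j using Nat.strong_induction_on with
  | _ j ih =>
  have hsq : ∀ {a b}, a < b → b ≤ j + 1 → 0 < s b - s a := fun hab hb =>
    sub_pos.2 (hs (Set.mem_Iic.2 (by omega)) (Set.mem_Iic.2 hb) hab)
  have hx₀ : 0 < x 0 := by
    have h := hrel 0 (Nat.zero_le j)
    rw [powSum, sum_range_one, if_pos rfl] at h
    exact pos_of_mul_pos_left (h ▸ hγ) (Real.rpow_pos_of_pos (hsq zero_lt_one (by omega)) α).le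
  have hx₁ : x 1 < 0 := by
    have h := hrel 1 (by omega)
    rw [powSum, sum_range_succ, sum_range_one, if_neg one_ne_zero, one_add_one_eq_two] at h
    have := Real.rpow_pos_of_pos (hsq zero_lt_two (by omega)) α
    have := Real.rpow_pos_of_pos (hsq one_lt_two (by omega)) α
    nlinarith
  obtain ⟨n, rfl⟩ : ∃ n, j = n + 1 := ⟨j - 1, by omega⟩
  have hrel₀ : ∀ m, 1 ≤ m → m ≤ n + 1 → powSum α s x m (s (m + 1)) = 0 := fun m h1 hm => by
    rw [hrel m hm, if_neg (by omega)]
  refine pos_of_normPowSumSlope_neg hα₀ (by omega) hs (fun t ht => ?_)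
    (hrel₀ n (by omega) (by omega)) (hrel₀ (n + 1) (by omega) le_rfl)
  obtain rfl | ⟨m, rfl⟩ : n = 1 ∨ ∃ m, n = m + 2 := by
    rcases n with _ | _ | m <;> simp_all
  · rw [normPowSumSlope_one ((sub_pos.1 (hsq one_lt_two (by omega))).trans ht).ne']
    exact mul_neg_of_neg_of_pos hx₁ (hsq zero_lt_one (by omega))
  · exact normPowSumSlope_neg hα₀ hα₁ (by omega) (hs.mono (Set.Iic_subset_Iic.2 (by omega)))
      (fun q h2q hq => ih q (by omega) h2q (hs.mono (Set.Iic_subset_Iic.2 (by omega)))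
        fun k hk => hrel k (by omega))
      (hrel₀ (m + 1) (by omega) (by omega)) (hrel₀ (m + 2) (by omega) (by omega)) t ht

section Algebra

variable {R : Type*} [CommRing R]

def firstDiff (v : ℕ → R) : ℕ → R
  | 0 => v 0
  | q + 1 => v (q + 1) - v q

lemma sum_range_sub_mul_eq_sum_mul_firstDiff (A v : ℕ → R) (n : ℕ) :
    ∑ q ∈ range (n + 1), (A q - A (q + 1)) * v q
      = ∑ q ∈ range (n + 1), A q * firstDiff v q - A (n + 1) * v n := by
  induction n with
  | zero => simp [firstDiff]; ring
  | succ n ih =>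
    rw [sum_range_succ, ih, sum_range_succ _ (n + 1), firstDiff]
    ring

def natCol {N : ℕ} (A : Matrix (Fin N) (Fin N) R) (i : Fin N) (j : ℕ) : R :=
  if h : j < N then A ⟨j, h⟩ i else 0

@[simp]
lemma natCol_val {N : ℕ} (A : Matrix (Fin N) (Fin N) R) (i j : Fin N) :
    natCol A i j = A j i := by
  simp [natCol]

end Algebra

lemma sum_kernel_mul_natCol_inv {𝕜 : Type*} [Field 𝕜] {N : ℕ} {K : Matrix (Fin N) (Fin N) 𝕜}
    {k : ℕ → ℕ → 𝕜} (hK : ∀ n j : Fin N, K n j = if (j : ℕ) ≤ n then k n j else 0)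
    (hdiag : ∀ n < N, k n n ≠ 0) (i : Fin N) {n : ℕ} (hn : i + n < N) :
    ∑ q ∈ range (n + 1), k (i + n) (i + q) * natCol K⁻¹ i (i + q) = if n = 0 then 1 else 0 := by
  have hlower : K.IsLowerTriangular := fun a b (hab : a < b) => by
    rw [hK, if_neg (by simpa using hab)]
  have hdet : IsUnit K.det := by
    rw [det_of_isLowerTriangular K hlower]
    refine IsUnit.mk0 _ (prod_ne_zero_iff.2 fun r _ => ?_)
    rw [hK, if_pos le_rfl]
    exact hdiag r r.isLt
  have := K.invertibleOfIsUnitDet hdet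
  have hinv : K⁻¹.IsLowerTriangular := blockTriangular_inv_of_blockTriangular hlower
  set f : ℕ → 𝕜 := fun j => (if j ≤ i + n then k (i + n) j else 0) * natCol K⁻¹ i j
  have hrow := congr_fun (congr_fun (mul_nonsing_inv K hdet) ⟨i + n, hn⟩) i
  simp only [mul_apply, one_apply, Fin.ext_iff, add_eq_left] at hrow
  have hsum : ∑ j : Fin N, K ⟨i + n, hn⟩ j * K⁻¹ j i = ∑ j ∈ range N, f j := by
    rw [← Fin.sum_univ_eq_sum_range f N]
    refine sum_congr rfl fun j _ => ?_
    simp only [f, hK, natCol_val]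
  have hsupp : ∑ j ∈ Ico (i : ℕ) (i + n + 1), f j = ∑ j ∈ range N, f j := by
    refine sum_subset (fun j hj => mem_range.2 (by simp at hj; omega)) fun j _ hj => ?_
    by_cases hij : (i : ℕ) ≤ j
    · have hjn : ¬ j ≤ i + n := by simp at hj; omega
      simp only [f, if_neg hjn, zero_mul]
    · have hjN : j < N := by omega
      simp only [f, natCol, dif_pos hjN]
      rw [hinv (show (⟨j, hjN⟩ : Fin N) < i from not_le.1 hij), mul_zero]
  rw [← hrow, hsum, ← hsupp, sum_Ico_eq_sum_range, show (i : ℕ) + n + 1 - i = n + 1 by omega]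
  refine sum_congr rfl fun q hq => ?_
  simp only [f, if_pos (by simp at hq; omega : (i : ℕ) + q ≤ i + n)]

lemma powSum_firstDiff {α : ℝ} (hα : α ≠ 0) (s v : ℕ → ℝ) (n : ℕ) :
    powSum α s (firstDiff v) n (s (n + 1))
      = ∑ q ∈ range (n + 1), ((s (n + 1) - s q) ^ α - (s (n + 1) - s (q + 1)) ^ α) * v q := by
  rw [sum_range_sub_mul_eq_sum_mul_firstDiff (fun q => (s (n + 1) - s q) ^ α), sub_self,
    Real.zero_rpow hα, zero_mul, sub_zero, powSum]
  exact sum_congr rfl fun q _ => mul_comm _ _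

end FractionalKernelInverse

open FractionalKernelInverse Finset in
/-- Rows and columns are `0`-indexed: Lean's row `n` and column `i` are the paper's `n + 1` and
`i + 1`, and `tP k` is `t_k`. -/
theorem stmt13_general (α : ℝ) (hα : α ∈ Set.Ioo (0 : ℝ) 1)
    (N : ℕ) (tP : ℕ → ℝ)
    (hmono : ∀ n < N, tP n < tP (n + 1))
    (K : Matrix (Fin N) (Fin N) ℝ)
    (hK : ∀ n i : Fin N, K n i =
      if (i : ℕ) ≤ (n : ℕ) then
        (Real.Gamma (α + 1))⁻¹ *
          ((tP ((n : ℕ) + 1) - tP (i : ℕ)) ^ α - (tP ((n : ℕ) + 1) - tP ((i : ℕ) + 1)) ^ α)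
      else 0) :
    ∀ i n m : Fin N, i < n → (m : ℕ) = (n : ℕ) + 1 →
      K⁻¹ n i < K⁻¹ m i := by
  intro i n m hin hm
  obtain ⟨hα₀, hα₁⟩ := hα
  have hΓ : 0 < Real.Gamma (α + 1) := Real.Gamma_pos_of_pos (by linarith)
  have hdiag : ∀ r < N, (Real.Gamma (α + 1))⁻¹ *
      ((tP (r + 1) - tP r) ^ α - (tP (r + 1) - tP (r + 1)) ^ α) ≠ 0 := fun r hr => by
    rw [sub_self, Real.zero_rpow hα₀.ne', sub_zero]
    exact (mul_pos (inv_pos.2 hΓ) (Real.rpow_pos_of_pos (sub_pos.2 (hmono r hr)) α)).ne'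
  set s : ℕ → ℝ := fun q => tP (i + q)
  set v : ℕ → ℝ := fun q => natCol K⁻¹ i (i + q)
  have hrel : ∀ k, i + k < N → powSum α s (firstDiff v) k (s (k + 1))
      = if k = 0 then Real.Gamma (α + 1) else 0 := fun k hk => by
    have hrow := sum_kernel_mul_natCol_inv (k := fun a b => (Real.Gamma (α + 1))⁻¹ *
      ((tP (a + 1) - tP b) ^ α - (tP (a + 1) - tP (b + 1)) ^ α)) hK hdiag i hk
    simp_rw [mul_assoc, ← mul_sum, inv_mul_eq_iff_eq_mul₀ hΓ.ne', mul_ite, mul_one,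
      mul_zero] at hrow
    rw [powSum_firstDiff hα₀.ne']
    exact hrow
  obtain ⟨j, hj⟩ : ∃ j, (n : ℕ) = i + j := ⟨n - i, by omega⟩
  have hs : StrictMonoOn s (Set.Iic (j + 2)) := strictMonoOn_Iic_of_lt_succ fun q hq => by
    rw [Order.succ_eq_add_one]
    exact hmono (i + q) (by omega)
  have hx : firstDiff v (j + 1) = K⁻¹ m i - K⁻¹ n i := by
    simp only [firstDiff, v]
    rw [← add_assoc, ← hj, ← hm, natCol_val, natCol_val]
  have hpos := pos_of_powSum_eq hα₀ hα₁ hΓ (j := j + 1) (by omega) hs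
    fun k hk => hrel k (by omega)
  linarith

/-- columnwise monotonicity of `K_𝒫⁻¹`: with
`K_{ni} = Γ(α+1)⁻¹((t_n - t_{i-1})^α - (t_n - t_i)^α)` (here `0`-indexed: Lean row `n`,
column `i` correspond to the paper's `n+1`, `i+1`), the strictly lower triangular
entries of the inverse increase along columns: `(K⁻¹)_{ni} < (K⁻¹)_{n+1,i}` whenever
`1 ≤ i < n < N` in the paper's indexing. -/
theorem stmt13 (α T : ℝ) (hα : α ∈ Set.Ioo (0 : ℝ) 1) (hT : 0 < T)
    (N : ℕ) (hN : 3 ≤ N) (tP : ℕ → ℝ) (htP0 : tP 0 = 0) (htPN : tP N = T)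
    (hmono : ∀ n < N, tP n < tP (n + 1))
    (K : Matrix (Fin N) (Fin N) ℝ)
    (hK : ∀ n i : Fin N, K n i =
      if (i : ℕ) ≤ (n : ℕ) then
        (Real.Gamma (α + 1))⁻¹ *
          ((tP ((n : ℕ) + 1) - tP (i : ℕ)) ^ α - (tP ((n : ℕ) + 1) - tP ((i : ℕ) + 1)) ^ α)
      else 0) :
    ∀ i n m : Fin N, i < n → (m : ℕ) = (n : ℕ) + 1 →
      K⁻¹ n i < K⁻¹ m i :=
  stmt13_general α hα N tP hmono K hK
end

section
/- Let α ∈ (0,1) and let c_1, c_2, c_3 be real numbers with 0 ≤ c_1 < c_2 < c_3. Then the function h(x) = ((x+c_3)^α − (x+c_2)^α) / ((x+c_2)^α − (x+c_1)^α) is well defined (the denominator is positive) and strictly increasing on [0,∞): for all 0 ≤ x_1 < x_2 one has h(x_1) < h(x_2). -/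
/-!
By Cauchy's mean value theorem applied to `t ↦ (x₂ + t)^α` and `t ↦ (x₁ + t)^α` on `[a, b]`,
the ratio `((x₂+b)^α - (x₂+a)^α) / ((x₁+b)^α - (x₁+a)^α)` equals `((x₂+ξ)/(x₁+ξ))^(α-1)` for some
`ξ ∈ (a, b)`. For `x₁ < x₂` and `α < 1` this is strictly increasing in `ξ`, so the ratio taken over
`[c₂, c₃]` exceeds the one over `[c₁, c₂]`, which is `h(x₁) < h(x₂)` after cross-multiplying.
-/

open Set

lemma exists_rpow_add_sub_div_eq_div_rpow {α x₁ x₂ a b : ℝ} (hα : 0 < α)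
    (hx₁ : 0 ≤ x₁ + a) (hx₂ : 0 ≤ x₂ + a) (hab : a < b) :
    ∃ ξ ∈ Ioo a b, ((x₂ + b) ^ α - (x₂ + a) ^ α) / ((x₁ + b) ^ α - (x₁ + a) ^ α) =
      ((x₂ + ξ) / (x₁ + ξ)) ^ (α - 1) := by
  have hcont : ∀ x, ContinuousOn (fun t => (x + t) ^ α) (Icc a b) := fun x =>
    ContinuousOn.rpow_const (by fun_prop) fun _ _ => Or.inr hα.le
  have hderiv : ∀ x, 0 ≤ x + a → ∀ t ∈ Ioo a b,
      HasDerivAt (fun t => (x + t) ^ α) (α * (x + t) ^ (α - 1)) t := by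
    intro x hx t ht
    simpa using ((hasDerivAt_id t).const_add x).rpow_const (p := α)
      (Or.inl (by linarith [ht.1] : 0 < x + t).ne')
  obtain ⟨ξ, hξ, hcauchy⟩ := exists_ratio_hasDerivAt_eq_ratio_slope _ _ hab (hcont x₁)
    (hderiv x₁ hx₁) _ _ (hcont x₂) (hderiv x₂ hx₂)
  have hx₁ξ : 0 < x₁ + ξ := by linarith [hξ.1]
  have hx₂ξ : 0 < x₂ + ξ := by linarith [hξ.1]
  have hden : 0 < (x₁ + b) ^ α - (x₁ + a) ^ α :=
    sub_pos.2 (Real.rpow_lt_rpow hx₁ (by linarith) hα)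
  refine ⟨ξ, hξ, ?_⟩
  rw [Real.div_rpow hx₂ξ.le hx₁ξ.le, div_eq_div_iff hden.ne' (by positivity)]
  apply mul_left_cancel₀ hα.ne'
  linear_combination hcauchy

lemma strictMonoOn_div_add_rpow {x₁ x₂ p : ℝ} (hx : x₁ < x₂) (hp : p < 0) :
    StrictMonoOn (fun t => ((x₂ + t) / (x₁ + t)) ^ p) (Ioi (-x₁)) := by
  intro s hs t ht hst
  have hs' : 0 < x₁ + s := by linarith [mem_Ioi.1 hs]
  have ht' : 0 < x₁ + t := by linarith [mem_Ioi.1 ht]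
  have hdecr : (x₂ + t) / (x₁ + t) < (x₂ + s) / (x₁ + s) := by
    rw [div_lt_div_iff₀ ht' hs']
    nlinarith
  exact Real.rpow_lt_rpow_of_neg (div_pos (by linarith) ht') hdecr hp

/-- for `α ∈ (0,1)` and `0 ≤ c₁ < c₂ < c₃`, the function
`h(x) = ((x+c₃)^α - (x+c₂)^α)/((x+c₂)^α - (x+c₁)^α)` is well defined (its denominator
is positive) and strictly increasing on `[0,∞)`. -/
theorem stmt14 (α c₁ c₂ c₃ : ℝ) (hα : α ∈ Set.Ioo (0 : ℝ) 1)
    (hc₁ : 0 ≤ c₁) (h12 : c₁ < c₂) (h23 : c₂ < c₃) :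
    (∀ x : ℝ, 0 ≤ x → 0 < (x + c₂) ^ α - (x + c₁) ^ α) ∧
    (∀ x₁ x₂ : ℝ, 0 ≤ x₁ → x₁ < x₂ →
      ((x₁ + c₃) ^ α - (x₁ + c₂) ^ α) / ((x₁ + c₂) ^ α - (x₁ + c₁) ^ α) <
        ((x₂ + c₃) ^ α - (x₂ + c₂) ^ α) / ((x₂ + c₂) ^ α - (x₂ + c₁) ^ α)) := by
  obtain ⟨hα0, hα1⟩ := hα
  have hpos : ∀ x a b : ℝ, 0 ≤ x + a → a < b → 0 < (x + b) ^ α - (x + a) ^ α :=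
    fun x a b hxa hab => sub_pos.2 (Real.rpow_lt_rpow hxa (by linarith) hα0)
  refine ⟨fun x hx => hpos x c₁ c₂ (by linarith) h12, fun x₁ x₂ hx₁ hx => ?_⟩
  have hD₁ := hpos x₁ c₁ c₂ (by linarith) h12
  have hD₂ := hpos x₂ c₁ c₂ (by linarith) h12
  have hN₁ := hpos x₁ c₂ c₃ (by linarith) h23
  obtain ⟨η, hη, hlow⟩ :=
    exists_rpow_add_sub_div_eq_div_rpow (x₁ := x₁) (x₂ := x₂) hα0 (by linarith) (by linarith) h12
  obtain ⟨ξ, hξ, hhigh⟩ :=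
    exists_rpow_add_sub_div_eq_div_rpow (x₁ := x₁) (x₂ := x₂) hα0 (by linarith) (by linarith) h23
  have hratio : ((x₂ + η) / (x₁ + η)) ^ (α - 1) < ((x₂ + ξ) / (x₁ + ξ)) ^ (α - 1) :=
    strictMonoOn_div_add_rpow hx (by linarith) (mem_Ioi.2 (by linarith [hη.1]))
      (mem_Ioi.2 (by linarith [hξ.1])) (hη.2.trans hξ.1)
  rw [← hlow, ← hhigh, div_lt_div_iff₀ hD₁ hN₁] at hratio
  rw [div_lt_div_iff₀ hD₁ hD₂]
  linarith
end

section
/- Let α ∈ (0,1) and let a, b, c be real numbers with 0 < a < b < c. Then the function h_1(x) = ((1 − x/c)^α − (1 − x/b)^α) / ((1 − x/b)^α − (1 − x/a)^α) is well defined on (0, a) (both numerator and denominator are positive there) and strictly decreasing on (0, a): for all 0 < x_1 < x_2 < a one has h_1(x_1) > h_1(x_2). -/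
/-!
By the fundamental theorem of calculus the numerator and denominator of `h₁(x)` are `α x` times
the integrals of `(1 - x t)^(α-1)` over `[1/c, 1/b]` and `[1/b, 1/a]`. For `x₁ < x₂` the quotient
`(1 - x₂ t)^(α-1) / (1 - x₁ t)^(α-1)` of the integrands is strictly increasing in `t` since
`α < 1`; bounding it on each interval by its value at the common endpoint `1/b` shows that the
ratio of the two integrals, hence `h₁`, is smaller at `x₂` than at `x₁`.
-/

open Real Set intervalIntegral

theorem integral_mul_integral_lt_of_strictMonoOn_div {f g : ℝ → ℝ} {u v w : ℝ}
    (huv : u < v) (hvw : v < w) (hf : ContinuousOn f (Icc u w)) (hg : ContinuousOn g (Icc u w))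
    (hg_pos : ∀ t ∈ Icc u w, 0 < g t) (hfg : StrictMonoOn (fun t ↦ f t / g t) (Icc u w)) :
    (∫ t in u..v, f t) * (∫ t in v..w, g t) < (∫ t in u..v, g t) * ∫ t in v..w, f t := by
  have hIuv : Icc u v ⊆ Icc u w := Icc_subset_Icc_right hvw.le
  have hIvw : Icc v w ⊆ Icc u w := Icc_subset_Icc_left huv.le
  have hu : u ∈ Icc u w := hIuv (left_mem_Icc.2 huv.le)
  have hv : v ∈ Icc u w := ⟨huv.le, hvw.le⟩
  set r := f v / g v
  have h_left : (∫ t in u..v, f t) < r * ∫ t in u..v, g t := by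
    rw [← integral_const_mul]
    refine integral_lt_integral_of_continuousOn_of_le_of_exists_lt huv (hf.mono hIuv)
      (continuousOn_const.mul (hg.mono hIuv)) (fun t ht ↦ ?_)
      ⟨u, left_mem_Icc.2 huv.le, (div_lt_iff₀ (hg_pos u hu)).1 (hfg hu hv huv)⟩
    have ht' : t ∈ Icc u w := hIuv (Ioc_subset_Icc_self ht)
    exact (div_le_iff₀ (hg_pos t ht')).1 (hfg.monotoneOn ht' hv ht.2)
  have h_right : r * (∫ t in v..w, g t) ≤ ∫ t in v..w, f t := by
    rw [← integral_const_mul]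
    refine integral_mono_on hvw.le (((hg.mono hIvw).intervalIntegrable_of_Icc hvw.le).const_mul r)
      ((hf.mono hIvw).intervalIntegrable_of_Icc hvw.le) (fun t ht ↦ ?_)
    exact (le_div_iff₀ (hg_pos t (hIvw ht))).1 (hfg.monotoneOn hv (hIvw ht) ht.1)
  have hg_uv : 0 < ∫ t in u..v, g t := intervalIntegral_pos_of_pos_on
    ((hg.mono hIuv).intervalIntegrable_of_Icc huv.le)
    (fun t ht ↦ hg_pos t (hIuv (Ioo_subset_Icc_self ht))) huv
  have hg_vw : 0 < ∫ t in v..w, g t := intervalIntegral_pos_of_pos_on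
    ((hg.mono hIvw).intervalIntegrable_of_Icc hvw.le)
    (fun t ht ↦ hg_pos t (hIvw (Ioo_subset_Icc_self ht))) hvw
  calc (∫ t in u..v, f t) * (∫ t in v..w, g t)
      < (r * ∫ t in u..v, g t) * ∫ t in v..w, g t := mul_lt_mul_of_pos_right h_left hg_vw
    _ = (∫ t in u..v, g t) * (r * ∫ t in v..w, g t) := by ring
    _ ≤ (∫ t in u..v, g t) * ∫ t in v..w, f t := mul_le_mul_of_nonneg_left h_right hg_uv.le

theorem one_sub_mul_pos_of_lt_inv {x t : ℝ} (hx : 0 < x) (ht : t < x⁻¹) : 0 < 1 - x * t := by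
  have := mul_lt_mul_of_pos_left ht hx
  rw [mul_inv_cancel₀ hx.ne'] at this
  linarith

theorem continuousOn_one_sub_mul_rpow {x β : ℝ} {s : Set ℝ} (hs : ∀ t ∈ s, 0 < 1 - x * t) :
    ContinuousOn (fun t ↦ (1 - x * t) ^ β) s :=
  (continuousOn_const.sub (continuousOn_const.mul continuousOn_id)).rpow_const
    fun t ht ↦ Or.inl (hs t ht).ne'

theorem one_sub_mul_rpow_sub_eq_integral {α x p q : ℝ} (hpq : p ≤ q)
    (hpos : ∀ t ∈ Icc p q, 0 < 1 - x * t) :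
    (1 - x * p) ^ α - (1 - x * q) ^ α = α * x * ∫ t in p..q, (1 - x * t) ^ (α - 1) := by
  have hderiv : ∀ t ∈ uIcc p q,
      HasDerivAt (fun t ↦ -(1 - x * t) ^ α) (α * x * (1 - x * t) ^ (α - 1)) t := by
    intro t ht
    rw [uIcc_of_le hpq] at ht
    have hlin : HasDerivAt (fun t : ℝ ↦ 1 - x * t) (-x) t := by
      simpa using ((hasDerivAt_id t).const_mul x).const_sub 1
    exact (hlin.rpow_const (Or.inl (hpos t ht).ne')).neg.congr_deriv (by ring)
  have hint : IntervalIntegrable (fun t ↦ α * x * (1 - x * t) ^ (α - 1)) MeasureTheory.volume p q :=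
    (continuousOn_const.mul (continuousOn_one_sub_mul_rpow hpos)).intervalIntegrable_of_Icc hpq
  rw [← integral_const_mul, integral_eq_sub_of_hasDerivAt hderiv hint]
  ring

theorem strictMonoOn_one_sub_mul_rpow_div {α x₁ x₂ : ℝ} (hα : α < 1) (hx₁ : 0 ≤ x₁)
    (hx : x₁ < x₂) :
    StrictMonoOn (fun t ↦ (1 - x₂ * t) ^ (α - 1) / (1 - x₁ * t) ^ (α - 1)) (Iio x₂⁻¹) := by
  have hpos₂ : ∀ t ∈ Iio x₂⁻¹, 0 < 1 - x₂ * t :=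
    fun t ht ↦ one_sub_mul_pos_of_lt_inv (hx₁.trans_lt hx) ht
  have hpos₁ : ∀ t ∈ Iio x₂⁻¹, 0 < 1 - x₁ * t := fun t ht ↦ by
    have := hpos₂ t ht
    rcases le_or_gt t 0 with h | h <;> nlinarith
  intro s hs t ht hst
  dsimp only
  rw [← div_rpow (hpos₂ s hs).le (hpos₁ s hs).le, ← div_rpow (hpos₂ t ht).le (hpos₁ t ht).le]
  refine rpow_lt_rpow_of_neg (div_pos (hpos₂ t ht) (hpos₁ t ht)) ?_ (by linarith)
  rw [div_lt_div_iff₀ (hpos₁ t ht) (hpos₁ s hs)]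
  nlinarith

theorem rpow_one_sub_div_lt {α x p q : ℝ} (hα : 0 < α) (hx : 0 < x) (hxp : x < p) (hpq : p < q) :
    (1 - x / p) ^ α < (1 - x / q) ^ α := by
  have hp := hx.trans hxp
  refine rpow_lt_rpow ?_ ?_ hα
  · linarith [(div_lt_one hp).2 hxp]
  · linarith [div_lt_div_of_pos_left hx hp hpq]

theorem one_sub_div_rpow_sub_eq_integral {α x p q : ℝ} (hx : 0 < x) (hxp : x < p) (hpq : p ≤ q) :
    (1 - x / q) ^ α - (1 - x / p) ^ α = α * x * ∫ t in q⁻¹..p⁻¹, (1 - x * t) ^ (α - 1) := by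
  simpa only [div_eq_mul_inv] using one_sub_mul_rpow_sub_eq_integral
    (inv_anti₀ (hx.trans hxp) hpq)
    fun t ht ↦ one_sub_mul_pos_of_lt_inv hx (ht.2.trans_lt (inv_strictAnti₀ hx hxp))

/-- for `α ∈ (0,1)` and `0 < a < b < c`, the function
`h₁(x) = ((1-x/c)^α - (1-x/b)^α)/((1-x/b)^α - (1-x/a)^α)` is well defined on `(0,a)`
(numerator and denominator are positive there) and strictly decreasing on `(0,a)`. -/
theorem stmt15 (α a b c : ℝ) (hα : α ∈ Set.Ioo (0 : ℝ) 1)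
    (ha : 0 < a) (hab : a < b) (hbc : b < c) :
    (∀ x : ℝ, 0 < x → x < a →
      0 < (1 - x / c) ^ α - (1 - x / b) ^ α ∧ 0 < (1 - x / b) ^ α - (1 - x / a) ^ α) ∧
    (∀ x₁ x₂ : ℝ, 0 < x₁ → x₁ < x₂ → x₂ < a →
      ((1 - x₂ / c) ^ α - (1 - x₂ / b) ^ α) / ((1 - x₂ / b) ^ α - (1 - x₂ / a) ^ α) <
        ((1 - x₁ / c) ^ α - (1 - x₁ / b) ^ α) / ((1 - x₁ / b) ^ α - (1 - x₁ / a) ^ α)) := by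
  obtain ⟨hα₀, hα₁⟩ := hα
  have hpos : ∀ x : ℝ, 0 < x → x < a →
      0 < (1 - x / c) ^ α - (1 - x / b) ^ α ∧ 0 < (1 - x / b) ^ α - (1 - x / a) ^ α :=
    fun x hx hxa ↦ ⟨sub_pos.2 (rpow_one_sub_div_lt hα₀ hx (hxa.trans hab) hbc),
      sub_pos.2 (rpow_one_sub_div_lt hα₀ hx hxa hab)⟩
  refine ⟨hpos, fun x₁ x₂ hx₁ hx₁₂ hx₂a ↦ ?_⟩
  have hx₂ : 0 < x₂ := hx₁.trans hx₁₂
  have hx₁a : x₁ < a := hx₁₂.trans hx₂a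
  have hden_pos : ∀ x, 0 < x → x < a → 0 < ∫ t in b⁻¹..a⁻¹, (1 - x * t) ^ (α - 1) :=
    fun x hx hxa ↦ (mul_pos_iff_of_pos_left (by positivity)).1
      (one_sub_div_rpow_sub_eq_integral hx hxa hab.le ▸ (hpos x hx hxa).2)
  rw [one_sub_div_rpow_sub_eq_integral hx₁ (hx₁a.trans hab) hbc.le,
    one_sub_div_rpow_sub_eq_integral hx₂ (hx₂a.trans hab) hbc.le,
    one_sub_div_rpow_sub_eq_integral hx₁ hx₁a hab.le,
    one_sub_div_rpow_sub_eq_integral hx₂ hx₂a hab.le,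
    mul_div_mul_left _ _ (by positivity), mul_div_mul_left _ _ (by positivity),
    div_lt_div_iff₀ (hden_pos x₂ hx₂ hx₂a) (hden_pos x₁ hx₁ hx₁a)]
  have hsub : ∀ x, 0 < x → x < a → Icc c⁻¹ a⁻¹ ⊆ Iio x⁻¹ :=
    fun x hx hxa t ht ↦ ht.2.trans_lt (inv_strictAnti₀ hx hxa)
  have hbase : ∀ x, 0 < x → x < a → ∀ t ∈ Icc c⁻¹ a⁻¹, 0 < 1 - x * t :=
    fun x hx hxa t ht ↦ one_sub_mul_pos_of_lt_inv hx (hsub x hx hxa ht)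
  exact integral_mul_integral_lt_of_strictMonoOn_div (inv_strictAnti₀ (ha.trans hab) hbc)
    (inv_strictAnti₀ ha hab)
    (continuousOn_one_sub_mul_rpow (hbase x₂ hx₂ hx₂a))
    (continuousOn_one_sub_mul_rpow (hbase x₁ hx₁ hx₁a))
    (fun t ht ↦ rpow_pos_of_pos (hbase x₁ hx₁ hx₁a t ht) _)
    ((strictMonoOn_one_sub_mul_rpow_div hα₁ hx₁.le hx₁₂).mono (hsub x₂ hx₂ hx₂a))
end

section
/- Let α ∈ (0,1), T > 0, let 𝒫 be a partition of [0,T] with N subintervals, and let K ∈ ℝ^{N×N} have entries K_{ni} = (1/Γ(α+1))((t_n − t_{i−1})^α − (t_n − t_i)^α) for 1 ≤ i ≤ n ≤ N and K_{ni} = 0 for i > n. Let 𝓗 be a real inner product space, Φ : 𝓗 → ℝ, U_0 ∈ 𝓗, and F_1, …, F_N ∈ 𝓗. Suppose U_1, …, U_N ∈ 𝓗 and V_1, …, V_N ∈ 𝓗 satisfy: (a) U_n = U_0 + Σ_{i=1}^n K_{ni} V_i for every n ∈ {1,…,N}; and (b) the subgradient inequality Φ(U_n) + ⟨F_n − V_n,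 w − U_n⟩ ≤ Φ(w) for every n ∈ {1,…,N} and every w ∈ 𝓗. Then for every n ∈ {1,…,N}, Φ(U_n) ≤ Φ(U_0) + (1/4) Σ_{i=1}^n K_{ni} ‖F_i‖². -/
/-!
Write `K_{mi} = Γ(α)⁻¹ ∫_{t_{i-1}}^{t_i} (t_m - s)^{α-1} ds`. For each `n`, the row `(K_{ni})_{i<n}`
is a combination `Σ_{m<n} θ_m K_{m·}` of the earlier rows with `θ_m ≥ 0` and `Σ θ_m ≤ 1`.
Putting the remaining weight `1 - Σ θ_m` on `U_0`, the convex combination `W = Σ w_m U_m`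
satisfies `U_n - W = K_{nn} V_n`, so testing the subgradient inequality at every `U_m` gives
`Φ(U_n) ≤ Σ w_m Φ(U_m) + K_{nn} ⟪F_n - V_n, V_n⟫`; with `⟪F - V, V⟫ ≤ ‖F‖² / 4` this closes an
induction on `n`.

The `θ_m` are computed by back substitution. They are nonnegative because, downward in `i`, the
residual kernel `(t_n - s)^{α-1} - Σ_{i<m<n} θ_m (t_m - s)^{α-1}` divided by `(t_i - s)^{α-1}` stays
nonnegative and nonincreasing on `s < t_i`: integrating it against `(t_i - s)^{α-1}` over
`[t_{i-1}, t_i]` yields `θ_i` (times `K_{ii}`), which is therefore squeezed between `0` and the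
residual on `s ≤ t_{i-1}`. Finally `Σ θ_m ≤ 1` follows from the first column, where
`K_{n1} ≤ K_{m1}` for `m ≤ n`.
-/

open scoped RealInnerProductSpace

open Finset MeasureTheory

section Energy

variable {𝓗 : Type*} [NormedAddCommGroup 𝓗] [InnerProductSpace ℝ 𝓗]

lemma inner_sub_self_le_norm_sq_div_four (f v : 𝓗) : ⟪f - v, v⟫ ≤ ‖f‖ ^ 2 / 4 := by
  have h : 0 ≤ ‖(1 / 2 : ℝ) • f - v‖ ^ 2 := sq_nonneg _
  rw [← real_inner_self_eq_norm_sq] at h ⊢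
  simp only [inner_sub_left, inner_sub_right, real_inner_smul_left, real_inner_smul_right,
    real_inner_comm f v] at h ⊢
  linarith

lemma le_sum_mul_add_inner_of_subgradient {ι : Type*} {Φ : 𝓗 → ℝ} {u ξ : 𝓗}
    (hξ : ∀ w, Φ u + ⟪ξ, w - u⟫ ≤ Φ w) (s : Finset ι) (w : ι → 𝓗) (c : ι → ℝ)
    (hc₀ : ∀ i ∈ s, 0 ≤ c i) (hc₁ : ∑ i ∈ s, c i = 1) :
    Φ u ≤ ∑ i ∈ s, c i * Φ (w i) + ⟪ξ, u - ∑ i ∈ s, c i • w i⟫ := by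
  have hcomb : ∑ i ∈ s, c i * (Φ u + ⟪ξ, w i - u⟫)
      = Φ u - ⟪ξ, u - ∑ i ∈ s, c i • w i⟫ := by
    simp only [mul_add, sum_add_distrib, ← sum_mul, hc₁, inner_sub_right, mul_sub, sum_sub_distrib,
      inner_sum, real_inner_smul_right]
    ring
  have := sum_le_sum fun i hi => mul_le_mul_of_nonneg_left (hξ (w i)) (hc₀ i hi)
  linarith

lemma sum_smul_sum_eq_of_rows {M : Type*} [AddCommMonoid M] [Module ℝ M] {n : ℕ}
    {K : ℕ → ℕ → ℝ} {c : ℕ → ℝ}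
    (hrow : ∀ i ∈ Ico 1 n, ∑ m ∈ Ico i n, c m * K m i = K n i) (a : ℕ → M) :
    ∑ m ∈ range n, c m • ∑ i ∈ Icc 1 m, K m i • a i = ∑ i ∈ Ico 1 n, K n i • a i := by
  simp_rw [smul_sum, smul_smul]
  rw [sum_comm' (t' := Ico 1 n) (s' := fun i => Ico i n)]
  · refine sum_congr rfl fun i hi => ?_
    rw [← sum_smul, hrow i hi]
  · intro m i
    simp only [mem_range, mem_Icc, mem_Ico]
    omega

theorem energy_le_of_convex_row_weights {N : ℕ} {K : ℕ → ℕ → ℝ}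
    (hdiag : ∀ n, 1 ≤ n → n ≤ N → 0 ≤ K n n)
    (hrows : ∀ n, 1 ≤ n → n ≤ N → ∃ c : ℕ → ℝ, (∀ m ∈ range n, 0 ≤ c m) ∧
      ∑ m ∈ range n, c m = 1 ∧ ∀ i ∈ Ico 1 n, ∑ m ∈ Ico i n, c m * K m i = K n i)
    {Φ : 𝓗 → ℝ} {U V F : ℕ → 𝓗}
    (hU : ∀ n, 1 ≤ n → n ≤ N → U n = U 0 + ∑ i ∈ Icc 1 n, K n i • V i)
    (hsub : ∀ n, 1 ≤ n → n ≤ N → ∀ w, Φ (U n) + ⟪F n - V n, w - U n⟫ ≤ Φ w) :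
    ∀ n ≤ N, Φ (U n) ≤ Φ (U 0) + 1 / 4 * ∑ i ∈ Icc 1 n, K n i * ‖F i‖ ^ 2 := by
  intro n
  induction n using Nat.strong_induction_on with
  | _ n ih =>
  intro hnN
  rcases Nat.eq_zero_or_pos n with rfl | hn
  · simp
  obtain ⟨c, hc₀, hc₁, hrow⟩ := hrows n hn hnN
  have hU' : ∀ m ∈ range n, U m = U 0 + ∑ i ∈ Icc 1 m, K m i • V i := by
    intro m hm
    rcases Nat.eq_zero_or_pos m with rfl | hm0
    · simp
    · exact hU m hm0 (by rw [mem_range] at hm; omega)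
  have hW : ∑ m ∈ range n, c m • U m = U 0 + ∑ i ∈ Ico 1 n, K n i • V i := by
    rw [sum_congr rfl fun m hm => by rw [hU' m hm]]
    simp only [smul_add, sum_add_distrib, ← sum_smul, hc₁, one_smul,
      sum_smul_sum_eq_of_rows hrow]
  have hIcc : Icc 1 n = insert n (Ico 1 n) := (Ico_insert_right hn).symm
  have hUW : U n - ∑ m ∈ range n, c m • U m = K n n • V n := by
    rw [hW, hU n hn hnN, hIcc, sum_insert (by simp)]
    abel
  have hstep := le_sum_mul_add_inner_of_subgradient (hsub n hn hnN) (range n) U c hc₀ hc₁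
  rw [hUW, real_inner_smul_right] at hstep
  have hIH : ∑ m ∈ range n, c m * Φ (U m)
      ≤ ∑ m ∈ range n, c m * (Φ (U 0) + 1 / 4 * ∑ i ∈ Icc 1 m, K m i * ‖F i‖ ^ 2) :=
    sum_le_sum fun m hm => mul_le_mul_of_nonneg_left
      (ih m (mem_range.1 hm) (by rw [mem_range] at hm; omega)) (hc₀ m hm)
  have hrow_norm : ∑ m ∈ range n, c m * (Φ (U 0) + 1 / 4 * ∑ i ∈ Icc 1 m, K m i * ‖F i‖ ^ 2)
      = Φ (U 0) + 1 / 4 * ∑ i ∈ Ico 1 n, K n i * ‖F i‖ ^ 2 := by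
    have := sum_smul_sum_eq_of_rows hrow (fun i => ‖F i‖ ^ 2)
    simp only [smul_eq_mul] at this
    simp only [mul_add, sum_add_distrib, ← sum_mul, hc₁, one_mul, mul_left_comm (c _) (1 / 4),
      ← mul_sum, this]
  have hV := mul_le_mul_of_nonneg_left
    (inner_sub_self_le_norm_sq_div_four (F n) (V n)) (hdiag n hn hnN)
  rw [hIcc, sum_insert (by simp)]
  linarith

end Energy

noncomputable def rowCoeff (K : ℕ → ℕ → ℝ) (n i : ℕ) : ℝ :=
  (K n i - ∑ m ∈ (Ioo i n).attach, rowCoeff K n m * K m i) / K i i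
termination_by n - i
decreasing_by have := mem_Ioo.mp m.2; omega

lemma diag_mul_rowCoeff {K : ℕ → ℕ → ℝ} {i : ℕ} (n : ℕ) (hK : K i i ≠ 0) :
    K i i * rowCoeff K n i = K n i - ∑ m ∈ Ioo i n, rowCoeff K n m * K m i := by
  rw [rowCoeff, ← sum_attach (Ioo i n) (fun m => rowCoeff K n m * K m i)]
  field_simp

lemma sum_rowCoeff_mul {K : ℕ → ℕ → ℝ} {n i : ℕ} (hK : K i i ≠ 0) (hin : i < n) :
    ∑ m ∈ Ico i n, rowCoeff K n m * K m i = K n i := by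
  rw [← Ioo_insert_left hin, sum_insert (by simp), mul_comm, diag_mul_rowCoeff n hK]
  ring

lemma intervalIntegrable_sub_rpow {α : ℝ} (hα : 0 < α) (x a b : ℝ) :
    IntervalIntegrable (fun s => (x - s) ^ (α - 1)) volume a b := by
  simpa using (intervalIntegral.intervalIntegrable_rpow' (a := x - a) (b := x - b)
    (by linarith : (-1 : ℝ) < α - 1)).comp_sub_left x

lemma integral_sub_rpow {α : ℝ} (hα : 0 < α) (x a b : ℝ) :
    ∫ s in a..b, (x - s) ^ (α - 1) = ((x - a) ^ α - (x - b) ^ α) / α := by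
  rw [intervalIntegral.integral_comp_sub_left (fun s => s ^ (α - 1)) x,
    integral_rpow (Or.inl (by linarith)), sub_add_cancel]

lemma antitoneOn_rpow_mul_rpow {α a b : ℝ} (hα : α < 1) (hab : a ≤ b) :
    AntitoneOn (fun s => (a - s) ^ (1 - α) * (b - s) ^ (α - 1)) (Set.Iio a) := by
  intro s₁ hs₁ s₂ hs₂ hs
  simp only [Set.mem_Iio] at hs₁ hs₂
  have hratio : ∀ s < a, (a - s) ^ (1 - α) * (b - s) ^ (α - 1) = ((b - s) / (a - s)) ^ (α - 1) := by
    intro s hs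
    rw [Real.div_rpow (by linarith) (by linarith), show 1 - α = -(α - 1) by ring,
      Real.rpow_neg (by linarith)]
    ring
  simp only [hratio s₁ hs₁, hratio s₂ hs₂]
  refine Real.rpow_le_rpow_of_nonpos (by apply div_pos <;> linarith) ?_ (by linarith)
  rw [div_le_div_iff₀ (by linarith) (by linarith)]
  nlinarith

section FractionalKernel

variable {α c : ℝ} {t : ℕ → ℝ} {n : ℕ} {K : ℕ → ℕ → ℝ}

noncomputable def residualKernel (K : ℕ → ℕ → ℝ) (α : ℝ) (t : ℕ → ℝ) (n i : ℕ) (s : ℝ) : ℝ :=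
  (t n - s) ^ (α - 1) - ∑ m ∈ Ioo i n, rowCoeff K n m * (t m - s) ^ (α - 1)

noncomputable def normalizedResidual (K : ℕ → ℕ → ℝ) (α : ℝ) (t : ℕ → ℝ) (n i : ℕ) (s : ℝ) :
    ℝ :=
  (t i - s) ^ (1 - α) * residualKernel K α t n i s

lemma residualKernel_eq_mul_normalizedResidual {i : ℕ} {s : ℝ} (hs : s < t i) :
    residualKernel K α t n i s = (t i - s) ^ (α - 1) * normalizedResidual K α t n i s := by
  rw [normalizedResidual, ← mul_assoc, ← Real.rpow_add (by linarith)]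
  norm_num

lemma normalizedResidual_succ_self (i : ℕ) (s : ℝ) :
    normalizedResidual K α t (i + 1) i s = (t i - s) ^ (1 - α) * (t (i + 1) - s) ^ (α - 1) := by
  have hempty : Ioo i (i + 1) = ∅ :=
    eq_empty_of_forall_notMem fun m hm => by rw [mem_Ioo] at hm; omega
  simp [normalizedResidual, residualKernel, hempty]

lemma normalizedResidual_of_succ_lt {i : ℕ} {s : ℝ} (hi : i + 1 < n) (hs : s < t (i + 1)) :
    normalizedResidual K α t n i s = (t i - s) ^ (1 - α) * (t (i + 1) - s) ^ (α - 1) *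
      (normalizedResidual K α t n (i + 1) s - rowCoeff K n (i + 1)) := by
  have hsplit : residualKernel K α t n i s
      = residualKernel K α t n (i + 1) s - rowCoeff K n (i + 1) * (t (i + 1) - s) ^ (α - 1) := by
    have hIoo : Ioo i n = insert (i + 1) (Ioo (i + 1) n) := by
      ext m; simp only [mem_Ioo, mem_insert]; omega
    rw [residualKernel, residualKernel, hIoo, sum_insert (by simp)]
    ring
  rw [normalizedResidual, hsplit, residualKernel_eq_mul_normalizedResidual hs]
  ring

lemma intervalIntegrable_sum_rowCoeff_mul (hα₀ : 0 < α) (i : ℕ) (a b : ℝ) :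
    IntervalIntegrable (fun s => ∑ m ∈ Ioo i n, rowCoeff K n m * (t m - s) ^ (α - 1))
      volume a b := by
  simpa only [Finset.sum_fn] using IntervalIntegrable.sum (Ioo i n) fun m _ =>
    (intervalIntegrable_sub_rpow hα₀ (t m) a b).const_mul (rowCoeff K n m)

lemma intervalIntegrable_residualKernel (hα₀ : 0 < α) (i : ℕ) (a b : ℝ) :
    IntervalIntegrable (residualKernel K α t n i) volume a b :=
  (intervalIntegrable_sub_rpow hα₀ (t n) a b).sub
    (intervalIntegrable_sum_rowCoeff_mul hα₀ i a b)

variable (hα₀ : 0 < α) (hc : 0 < c) (ht : StrictMonoOn t (Set.Iic n))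
  (hK : ∀ m i, 1 ≤ i → i ≤ m → m ≤ n → K m i = c * ∫ s in t (i - 1)..t i, (t m - s) ^ (α - 1))
include hα₀ hc ht hK

lemma entry_pos {m i : ℕ} (hi : 1 ≤ i) (him : i ≤ m) (hmn : m ≤ n) : 0 < K m i := by
  have hti : t (i - 1) < t i := ht (by simp; omega) (by simp; omega) (by omega)
  have htm : t i ≤ t m := ht.monotoneOn (by simp; omega) (by simp; omega) him
  rw [hK m i hi him hmn]
  refine mul_pos hc (intervalIntegral.intervalIntegral_pos_of_pos_on
    (intervalIntegrable_sub_rpow hα₀ _ _ _) (fun s hs => ?_) hti)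
  exact Real.rpow_pos_of_pos (by linarith [hs.2]) _

lemma integral_residualKernel {i : ℕ} (hi : 1 ≤ i) (hin : i < n) :
    c * ∫ s in t (i - 1)..t i, residualKernel K α t n i s = K i i * rowCoeff K n i := by
  have hint := fun x => intervalIntegrable_sub_rpow hα₀ x (t (i - 1)) (t i)
  simp only [residualKernel]
  rw [diag_mul_rowCoeff n (entry_pos hα₀ hc ht hK hi le_rfl hin.le).ne',
    intervalIntegral.integral_sub (hint _)
      (intervalIntegrable_sum_rowCoeff_mul (K := K) (t := t) hα₀ i _ _),
    intervalIntegral.integral_finsetSum fun m _ => (hint (t m)).const_mul _,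
    mul_sub, mul_sum, hK n i hi hin.le le_rfl]
  congr 1
  refine sum_congr rfl fun m hm => ?_
  rw [mem_Ioo] at hm
  rw [intervalIntegral.integral_const_mul, hK m i hi hm.1.le hm.2.le]
  ring

lemma rowCoeff_nonneg_and_le {i : ℕ} (hi : 1 ≤ i) (hin : i < n)
    (hanti : AntitoneOn (normalizedResidual K α t n i) (Set.Iio (t i)))
    (hnonneg : ∀ s < t i, 0 ≤ normalizedResidual K α t n i s) :
    0 ≤ rowCoeff K n i ∧ ∀ s₀ ≤ t (i - 1), rowCoeff K n i ≤ normalizedResidual K α t n i s₀ := by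
  have hti : t (i - 1) < t i := ht (by simp; omega) (by simp; omega) (by omega)
  have hKii : 0 < K i i := entry_pos hα₀ hc ht hK hi le_rfl hin.le
  have hint := fun x => intervalIntegrable_sub_rpow hα₀ x (t (i - 1)) (t i)
  have hres_int := intervalIntegrable_residualKernel (K := K) (t := t) (n := n) hα₀ i
    (t (i - 1)) (t i)
  have hres : ∀ s ∈ Set.Ioo (t (i - 1)) (t i), residualKernel K α t n i s
      = (t i - s) ^ (α - 1) * normalizedResidual K α t n i s :=
    fun s hs => residualKernel_eq_mul_normalizedResidual hs.2
  have hkernel : ∀ s ∈ Set.Ioo (t (i - 1)) (t i), 0 ≤ (t i - s) ^ (α - 1) :=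
    fun s hs => Real.rpow_nonneg (by linarith [hs.2]) _
  have hmain := integral_residualKernel hα₀ hc ht hK hi hin
  constructor
  · have h₀ : ∫ _ in t (i - 1)..t i, (0 : ℝ) ≤ ∫ s in t (i - 1)..t i, residualKernel K α t n i s :=
      intervalIntegral.integral_mono_on_of_le_Ioo hti.le intervalIntegrable_const hres_int
        fun s hs => by rw [hres s hs]; exact mul_nonneg (hkernel s hs) (hnonneg s hs.2)
    rw [intervalIntegral.integral_zero] at h₀
    exact nonneg_of_mul_nonneg_right (hmain ▸ mul_nonneg hc.le h₀) hKii
  · intro s₀ hs₀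
    have h₁ : ∫ s in t (i - 1)..t i, residualKernel K α t n i s
        ≤ ∫ s in t (i - 1)..t i, normalizedResidual K α t n i s₀ * (t i - s) ^ (α - 1) :=
      intervalIntegral.integral_mono_on_of_le_Ioo hti.le hres_int ((hint (t i)).const_mul _)
        fun s hs => by
          rw [hres s hs, mul_comm]
          exact mul_le_mul_of_nonneg_right
            (hanti (show s₀ < t i by linarith) hs.2 (by linarith [hs.1])) (hkernel s hs)
    rw [intervalIntegral.integral_const_mul] at h₁
    have h₂ := mul_le_mul_of_nonneg_left h₁ hc.le
    rw [hmain, mul_left_comm, ← hK i i hi le_rfl hin.le] at h₂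
    exact le_of_mul_le_mul_left (by linarith) hKii

lemma antitoneOn_normalizedResidual_and_nonneg (hα₁ : α < 1) {i : ℕ} (hin : i < n) :
    AntitoneOn (normalizedResidual K α t n i) (Set.Iio (t i)) ∧
      ∀ s < t i, 0 ≤ normalizedResidual K α t n i s := by
  obtain ⟨n, rfl⟩ : ∃ k, n = k + 1 := ⟨n - 1, by omega⟩
  have htt : ∀ k < n + 1, t k < t (k + 1) := fun k hk =>
    ht (by simp; omega) (by simp; omega) (by omega)
  have hQ₀ : ∀ k s, s < t k → k < n + 1 → 0 ≤ (t k - s) ^ (1 - α) * (t (k + 1) - s) ^ (α - 1) :=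
    fun k s hs hk => mul_nonneg (Real.rpow_nonneg (by linarith) _)
      (Real.rpow_nonneg (by linarith [htt k hk]) _)
  replace hin : i ≤ n := by omega
  induction hin using Nat.decreasingInduction with
  | self =>
    rw [funext (normalizedResidual_succ_self n)]
    exact ⟨antitoneOn_rpow_mul_rpow hα₁ (htt n (by omega)).le,
      fun s hs => hQ₀ n s hs (by omega)⟩
  | of_succ k hk ih =>
    obtain ⟨hanti, hnonneg⟩ := ih
    obtain ⟨-, hle⟩ := rowCoeff_nonneg_and_le hα₀ hc ht hK (by omega) (by omega) hanti hnonneg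
    simp only [Nat.add_sub_cancel] at hle
    have htk := htt k (by omega)
    have hR := fun s (hs : s < t k) => normalizedResidual_of_succ_lt (K := K) (α := α)
      (n := n + 1) (i := k) (by omega) (hs.trans htk)
    refine ⟨fun s₁ hs₁ s₂ hs₂ h₁₂ => ?_, fun s hs => ?_⟩
    · rw [hR s₁ hs₁, hR s₂ hs₂]
      exact mul_le_mul (antitoneOn_rpow_mul_rpow hα₁ htk.le hs₁ hs₂ h₁₂)
        (sub_le_sub_right (hanti (Set.mem_Iio.2 ((Set.mem_Iio.1 hs₁).trans htk))
          (Set.mem_Iio.2 ((Set.mem_Iio.1 hs₂).trans htk)) h₁₂) _)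
        (sub_nonneg.2 (hle s₂ (le_of_lt hs₂))) (hQ₀ k s₁ hs₁ (by omega))
    · rw [hR s hs]
      exact mul_nonneg (hQ₀ k s hs (by omega)) (sub_nonneg.2 (hle s hs.le))

lemma rowCoeff_nonneg (hα₁ : α < 1) {i : ℕ} (hi : 1 ≤ i) (hin : i < n) :
    0 ≤ rowCoeff K n i :=
  (rowCoeff_nonneg_and_le hα₀ hc ht hK hi hin
    (antitoneOn_normalizedResidual_and_nonneg hα₀ hc ht hK hα₁ hin).1
    (antitoneOn_normalizedResidual_and_nonneg hα₀ hc ht hK hα₁ hin).2).1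

lemma entry_one_le (hα₁ : α < 1) {m : ℕ} (hm : 1 ≤ m) (hmn : m ≤ n) : K n 1 ≤ K m 1 := by
  have hint := fun x => intervalIntegrable_sub_rpow hα₀ x (t 0) (t 1)
  have ht₁ : t 1 ≤ t m := ht.monotoneOn (by simp; omega) (by simp; omega) hm
  have htm : t m ≤ t n := ht.monotoneOn (by simp; omega) (by simp) hmn
  rw [hK n 1 le_rfl (hm.trans hmn) le_rfl, hK m 1 le_rfl hm hmn]
  refine mul_le_mul_of_nonneg_left (intervalIntegral.integral_mono_on_of_le_Ioo
    (ht.monotoneOn (by simp) (by simp; omega) zero_le_one) (hint _) (hint _)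
    fun s hs => Real.rpow_le_rpow_of_nonpos ?_ ?_ (by linarith)) hc.le
  · linarith [hs.2]
  · linarith

lemma sum_rowCoeff_le_one (hα₁ : α < 1) : ∑ i ∈ Ico 1 n, rowCoeff K n i ≤ 1 := by
  rcases le_or_gt n 1 with hn | hn
  · simp [Ico_eq_empty_of_le hn]
  have hKn1 : 0 < K n 1 := entry_pos hα₀ hc ht hK le_rfl hn.le le_rfl
  have hcol := sum_rowCoeff_mul (entry_pos hα₀ hc ht hK le_rfl le_rfl hn.le).ne' hn
  refine (mul_le_iff_le_one_left hKn1).1 ?_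
  calc (∑ i ∈ Ico 1 n, rowCoeff K n i) * K n 1
      ≤ ∑ m ∈ Ico 1 n, rowCoeff K n m * K m 1 := by
        rw [sum_mul]
        refine sum_le_sum fun m hm => ?_
        rw [mem_Ico] at hm
        exact mul_le_mul_of_nonneg_left (entry_one_le hα₀ hc ht hK hα₁ hm.1 hm.2.le)
          (rowCoeff_nonneg hα₀ hc ht hK hα₁ hm.1 hm.2)
    _ = K n 1 := hcol

lemma exists_convex_row_weights (hα₁ : α < 1) (hn : 1 ≤ n) :
    ∃ w : ℕ → ℝ, (∀ m ∈ range n, 0 ≤ w m) ∧ ∑ m ∈ range n, w m = 1 ∧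
      ∀ i ∈ Ico 1 n, ∑ m ∈ Ico i n, w m * K m i = K n i := by
  refine ⟨fun m => if m = 0 then 1 - ∑ i ∈ Ico 1 n, rowCoeff K n i else rowCoeff K n m,
    fun m hm => ?_, ?_, fun i hi => ?_⟩
  · rw [mem_range] at hm
    dsimp only
    split_ifs with h0
    · linarith [sum_rowCoeff_le_one hα₀ hc ht hK hα₁]
    · exact rowCoeff_nonneg hα₀ hc ht hK hα₁ (by omega) hm
  · rw [range_eq_Ico, sum_eq_sum_Ico_succ_bot hn, if_pos rfl,
      sum_congr rfl fun m hm => if_neg (by rw [mem_Ico] at hm; omega)]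
    ring
  · rw [mem_Ico] at hi
    rw [← sum_rowCoeff_mul (entry_pos hα₀ hc ht hK hi.1 le_rfl hi.2.le).ne' hi.2]
    exact sum_congr rfl fun m hm => by dsimp only; rw [if_neg (by rw [mem_Ico] at hm; omega)]

end FractionalKernel

theorem stmt17_general (α : ℝ) (hα : α ∈ Set.Ioo (0 : ℝ) 1)
    (N : ℕ) (tP : ℕ → ℝ)
    (hmono : ∀ n < N, tP n < tP (n + 1))
    (Kf : ℕ → ℕ → ℝ)
    (hKf : ∀ n i, 1 ≤ i → i ≤ n → n ≤ N →
      Kf n i = (Real.Gamma (α + 1))⁻¹ * ((tP n - tP (i - 1)) ^ α - (tP n - tP i) ^ α))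
    {𝓗 : Type*} [NormedAddCommGroup 𝓗] [InnerProductSpace ℝ 𝓗]
    (Φ : 𝓗 → ℝ) (U V F : ℕ → 𝓗)
    (hU : ∀ n, 1 ≤ n → n ≤ N → U n = U 0 + ∑ i ∈ Finset.Icc 1 n, Kf n i • V i)
    (hsub : ∀ n, 1 ≤ n → n ≤ N → ∀ w : 𝓗, Φ (U n) + ⟪F n - V n, w - U n⟫ ≤ Φ w) :
    ∀ n, 1 ≤ n → n ≤ N →
      Φ (U n) ≤ Φ (U 0) + (1 / 4) * ∑ i ∈ Finset.Icc 1 n, Kf n i * ‖F i‖ ^ 2 := by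
  obtain ⟨hα₀, hα₁⟩ := hα
  have ht : StrictMonoOn tP (Set.Iic N) := strictMonoOn_Iic_of_lt_succ hmono
  have hc : 0 < (Real.Gamma α)⁻¹ := inv_pos.2 (Real.Gamma_pos_of_pos hα₀)
  have hK : ∀ m i, 1 ≤ i → i ≤ m → m ≤ N →
      Kf m i = (Real.Gamma α)⁻¹ * ∫ s in tP (i - 1)..tP i, (tP m - s) ^ (α - 1) := by
    intro m i hi him hmN
    rw [hKf m i hi him hmN, integral_sub_rpow hα₀, Real.Gamma_add_one hα₀.ne']
    field_simp
  intro n hn hnN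
  exact energy_le_of_convex_row_weights
    (fun m hm hmN => (entry_pos hα₀ hc ht hK hm le_rfl hmN).le)
    (fun m hm hmN => exists_convex_row_weights hα₀ hc (ht.mono (Set.Iic_subset_Iic.2 hmN))
      (fun k i hi hik hkm => hK k i hi hik (hkm.trans hmN)) hα₁ hm)
    hU hsub n hnN

/-- discrete energy bound for the fractional minimizing movements scheme:
if `U_n = U_0 + Σ_{i=1}^n K_{ni} V_i` (so `V` is the discrete Caputo derivative of `U`)
and `F_n - V_n ∈ ∂Φ(U_n)` for all `n`, then
`Φ(U_n) ≤ Φ(U_0) + (1/4) Σ_{i=1}^n K_{ni} ‖F_i‖²`. -/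
theorem stmt17 (α T : ℝ) (hα : α ∈ Set.Ioo (0 : ℝ) 1) (hT : 0 < T)
    (N : ℕ) (hN : 1 ≤ N) (tP : ℕ → ℝ) (htP0 : tP 0 = 0) (htPN : tP N = T)
    (hmono : ∀ n < N, tP n < tP (n + 1))
    (Kf : ℕ → ℕ → ℝ)
    (hKf : ∀ n i, 1 ≤ i → i ≤ n → n ≤ N →
      Kf n i = (Real.Gamma (α + 1))⁻¹ * ((tP n - tP (i - 1)) ^ α - (tP n - tP i) ^ α))
    {𝓗 : Type*} [NormedAddCommGroup 𝓗] [InnerProductSpace ℝ 𝓗]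
    (Φ : 𝓗 → ℝ) (U V F : ℕ → 𝓗)
    (hU : ∀ n, 1 ≤ n → n ≤ N → U n = U 0 + ∑ i ∈ Finset.Icc 1 n, Kf n i • V i)
    (hsub : ∀ n, 1 ≤ n → n ≤ N → ∀ w : 𝓗, Φ (U n) + ⟪F n - V n, w - U n⟫ ≤ Φ w) :
    ∀ n, 1 ≤ n → n ≤ N →
      Φ (U n) ≤ Φ (U 0) + (1 / 4) * ∑ i ∈ Finset.Icc 1 n, Kf n i * ‖F i‖ ^ 2 :=
  stmt17_general α hα N tP hmono Kf hKf Φ U V F hU hsub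
end

section
/- Let α ∈ (0,1), T > 0, let 𝒫 be a partition of [0,T] with N subintervals, and let K ∈ ℝ^{N×N} have entries K_{ni} = (1/Γ(α+1))((t_n − t_{i−1})^α − (t_n − t_i)^α) for 1 ≤ i ≤ n ≤ N and K_{ni} = 0 for i > n. Let 𝓗 be a real inner product space, let Φ : 𝓗 → ℝ be bounded below with m ≤ Φ(w) for all w ∈ 𝓗, let U_0 ∈ 𝓗 and F_1, …, F_N ∈ 𝓗, and suppose U_1, …, U_N ∈ 𝓗 and V_1, …, V_N ∈ 𝓗 satisfy: (a) U_n = U_0 + Σ_{i=1}^n K_{ni} V_i for every n ∈ {1,…,N}; and (b) Φ(U_n) + ⟨F_n − V_n, w − U_n⟩ ≤ Φ(w) for every n ∈ {1,…,N} and every w ∈ 𝓗. Then for every n ∈ {1,…,N}, Σ_{i=1}^n K_{ni} ‖V_i‖² ≤ Σ_{i=1}^n K_{ni} ‖F_i‖² + 2 ( Φ(U_0) − m ). -/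
/-!
Writing `P` for the complementary kernel of `K` (`∑_{i=l}^n K_{ni} P_{il} = 1`), the scheme can be
inverted as `V_i = ∑_{l ≤ i} P_{il} (U_l - U_{l-1})`. Since the L1 weights `K_{ni}` are positive,
nonincreasing in `n` and have ratios `K_{n+1,i} / K_{ni}` nonincreasing in `i` (concavity of
`s ↦ s^α` and Cauchy's mean value theorem), `P_{il}` is nonnegative and nondecreasing in `l`. Abel
summation against the subgradient inequality then gives the discrete fractional chain rule
`∑_l P_{il} (Φ(U_l) - Φ(U_{l-1})) ≤ ⟪F_i - V_i, V_i⟫`. Combined with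
`‖V_i‖² + 2⟪F_i - V_i, V_i⟫ ≤ ‖F_i‖²` this bounds `‖V_i‖²`, and after convolution with `K` the
chain-rule terms telescope to `Φ(U_n) - Φ(U_0) ≥ m - Φ(U_0)`.
-/

open Finset
open scoped RealInnerProductSpace

/-- Solves `∑ i ∈ Icc l n, k n i * P i l = 1` for `P n l` by forward substitution. -/
noncomputable def complementaryKernel (k : ℕ → ℕ → ℝ) : ℕ → ℕ → ℝ
  | n, l => (1 - ∑ i ∈ (Ico l n).attach, k n i * complementaryKernel k i l) / k n n
  termination_by n _ => n
  decreasing_by exact (mem_Ico.mp i.2).2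

section ComplementaryKernel

variable (k : ℕ → ℕ → ℝ)

lemma complementaryKernel_eq (n l : ℕ) :
    complementaryKernel k n l
      = (1 - ∑ i ∈ Ico l n, k n i * complementaryKernel k i l) / k n n := by
  rw [complementaryKernel, ← sum_attach (Ico l n) (fun i => k n i * complementaryKernel k i l)]

variable {k}

lemma sum_mul_complementaryKernel {n l : ℕ} (hln : l ≤ n) (hk : k n n ≠ 0) :
    ∑ i ∈ Icc l n, k n i * complementaryKernel k i l = 1 := by
  rw [← sum_Ico_add_eq_sum_Icc hln, complementaryKernel_eq k n l]
  field_simp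
  ring

lemma sum_mul_complementaryKernel_succ_sub {n l : ℕ} (hln : l < n) (hk : k n n ≠ 0) :
    ∑ i ∈ Ioc l n, k n i * (complementaryKernel k i (l + 1) - complementaryKernel k i l)
      = k n l * complementaryKernel k l l := by
  have h₁ := sum_mul_complementaryKernel hln.le hk
  have h₂ := sum_mul_complementaryKernel (l := l + 1) hln hk
  rw [← add_sum_Ioc_eq_sum_Icc hln.le] at h₁
  rw [Icc_add_one_left_eq_Ioc] at h₂
  simp only [mul_sub, sum_sub_distrib]
  linarith

lemma sum_Icc_one_sub {M : Type*} [AddCommGroup M] (e : ℕ → M) (n : ℕ) :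
    ∑ l ∈ Icc 1 n, (e l - e (l - 1)) = e n - e 0 := by
  induction n with
  | zero => simp
  | succ n ih =>
    rw [sum_Icc_succ_top (by omega), ih, Nat.add_sub_cancel]
    abel

variable {M : Type*} [AddCommGroup M] [Module ℝ M]

lemma sum_smul_sum_complementaryKernel_smul {n : ℕ} (hk : k n n ≠ 0) (e : ℕ → M) :
    ∑ i ∈ Icc 1 n, k n i • ∑ l ∈ Icc 1 i, complementaryKernel k i l • (e l - e (l - 1))
      = e n - e 0 := by
  simp only [smul_sum, smul_smul]
  rw [sum_comm' (t' := Icc 1 n) (s' := fun l => Icc l n)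
    (by intro i l; simp only [mem_Icc]; omega)]
  rw [← sum_Icc_one_sub e n]
  refine sum_congr rfl fun l hl => ?_
  rw [← sum_smul, sum_mul_complementaryKernel (mem_Icc.mp hl).2 hk, one_smul]

lemma eq_zero_of_forall_sum_smul_eq_zero {N : ℕ} (hk : ∀ n, 1 ≤ n → n ≤ N → k n n ≠ 0)
    {D : ℕ → M} (hD : ∀ n, 1 ≤ n → n ≤ N → ∑ i ∈ Icc 1 n, k n i • D i = 0) :
    ∀ n, 1 ≤ n → n ≤ N → D n = 0 := by
  intro n
  induction n using Nat.strong_induction_on with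
  | _ n IH =>
    intro hn hnN
    have hsum := hD n hn hnN
    rw [← sum_Ico_add_eq_sum_Icc hn, sum_eq_zero fun i hi => by
      rw [IH i (mem_Ico.mp hi).2 (mem_Ico.mp hi).1 ((mem_Ico.mp hi).2.le.trans hnN), smul_zero], zero_add] at hsum
    exact (smul_eq_zero.mp hsum).resolve_left (hk n hn hnN)

lemma eq_sum_complementaryKernel_smul_sub {N : ℕ} (hk : ∀ n, 1 ≤ n → n ≤ N → k n n ≠ 0)
    {U V : ℕ → M} (hU : ∀ n, 1 ≤ n → n ≤ N → U n = U 0 + ∑ i ∈ Icc 1 n, k n i • V i) :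
    ∀ i, 1 ≤ i → i ≤ N →
      V i = ∑ l ∈ Icc 1 i, complementaryKernel k i l • (U l - U (l - 1)) := by
  intro i hi hiN
  refine sub_eq_zero.mp (eq_zero_of_forall_sum_smul_eq_zero (D := fun i =>
    V i - ∑ l ∈ Icc 1 i, complementaryKernel k i l • (U l - U (l - 1))) hk
    (fun n hn hnN => ?_) i hi hiN)
  rw [sum_congr rfl fun j _ => smul_sub _ _ _, sum_sub_distrib,
    sum_smul_sum_complementaryKernel_smul (hk n hn hnN), hU n hn hnN]
  abel

end ComplementaryKernel

structure IsAdmissibleKernel (k : ℕ → ℕ → ℝ) (N : ℕ) : Prop where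
  pos : ∀ n i, 1 ≤ i → i ≤ n → n ≤ N → 0 < k n i
  succ_le : ∀ n i, 1 ≤ i → i ≤ n → n + 1 ≤ N → k (n + 1) i ≤ k n i
  ratio_anti : ∀ n i j, 1 ≤ i → i < j → j ≤ n → n + 1 ≤ N →
    k (n + 1) j * k n i ≤ k (n + 1) i * k n j

namespace IsAdmissibleKernel

variable {k : ℕ → ℕ → ℝ} {N : ℕ}

lemma diag_ne_zero (hk : IsAdmissibleKernel k N) {n : ℕ} (hn : 1 ≤ n) (hnN : n ≤ N) :
    k n n ≠ 0 :=
  (hk.pos n n hn le_rfl hnN).ne'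

lemma complementaryKernel_nonneg (hk : IsAdmissibleKernel k N) {n l : ℕ} (hl : 1 ≤ l)
    (hln : l ≤ n) (hnN : n ≤ N) : 0 ≤ complementaryKernel k n l := by
  induction n using Nat.strong_induction_on with
  | _ n IH =>
    rw [complementaryKernel_eq]
    refine div_nonneg (sub_nonneg.mpr ?_) (hk.pos n n (hl.trans hln) le_rfl hnN).le
    obtain rfl | hlt := hln.eq_or_lt
    · simp
    obtain ⟨n, rfl⟩ : ∃ n', n = n' + 1 := ⟨n - 1, by omega⟩
    calc ∑ i ∈ Ico l (n + 1), k (n + 1) i * complementaryKernel k i l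
        ≤ ∑ i ∈ Ico l (n + 1), k n i * complementaryKernel k i l := by
          refine sum_le_sum fun i hi => ?_
          obtain ⟨hli, hin⟩ := mem_Ico.mp hi
          exact mul_le_mul_of_nonneg_right (hk.succ_le n i (hl.trans hli) (by omega) hnN)
            (IH i hin hli (by omega))
      _ = 1 := by
          rw [Ico_add_one_right_eq_Icc]
          exact sum_mul_complementaryKernel (by omega) (hk.diag_ne_zero (by omega) (by omega))

lemma sum_mul_complementaryKernel_succ_sub_le (hk : IsAdmissibleKernel k N) {n l : ℕ}
    (hl : 1 ≤ l) (hln : l ≤ n) (hnN : n + 1 ≤ N)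
    (hP : ∀ i, l < i → i ≤ n → complementaryKernel k i l ≤ complementaryKernel k i (l + 1)) :
    ∑ i ∈ Ioc l n, k (n + 1) i * (complementaryKernel k i (l + 1) - complementaryKernel k i l)
      ≤ k (n + 1) l * complementaryKernel k l l := by
  have hPll := hk.complementaryKernel_nonneg hl le_rfl (by omega)
  obtain rfl | hln := hln.eq_or_lt
  · simpa using mul_nonneg (hk.pos (l + 1) l hl (by omega) hnN).le hPll
  have hknl : 0 < k n l := hk.pos n l hl hln.le (by omega)
  rw [← mul_le_mul_iff_of_pos_left hknl, mul_sum]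
  calc ∑ i ∈ Ioc l n, k n l * (k (n + 1) i *
          (complementaryKernel k i (l + 1) - complementaryKernel k i l))
      ≤ ∑ i ∈ Ioc l n, k (n + 1) l * (k n i *
          (complementaryKernel k i (l + 1) - complementaryKernel k i l)) := by
        refine sum_le_sum fun i hi => ?_
        obtain ⟨hli, hin⟩ := mem_Ioc.mp hi
        have hratio := hk.ratio_anti n l i hl hli hin hnN
        have hPi := sub_nonneg.mpr (hP i hli hin)
        nlinarith [mul_le_mul_of_nonneg_right hratio hPi]
    _ = k n l * (k (n + 1) l * complementaryKernel k l l) := by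
        rw [← mul_sum, sum_mul_complementaryKernel_succ_sub hln (hk.diag_ne_zero (by omega)
          (by omega))]
        ring

lemma complementaryKernel_le_succ (hk : IsAdmissibleKernel k N) {n l : ℕ} (hl : 1 ≤ l)
    (hln : l < n) (hnN : n ≤ N) : complementaryKernel k n l ≤ complementaryKernel k n (l + 1) := by
  induction n using Nat.strong_induction_on with
  | _ n IH =>
    obtain ⟨n, rfl⟩ : ∃ n', n = n' + 1 := ⟨n - 1, by omega⟩
    have hrow := sum_mul_complementaryKernel_succ_sub hln (hk.diag_ne_zero (by omega) hnN)
    rw [sum_Ioc_succ_top (by omega)] at hrow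
    have hbound := hk.sum_mul_complementaryKernel_succ_sub_le hl (by omega) hnN
      fun i hli hin => IH i (by omega) hli (by omega)
    have hdiag := hk.pos (n + 1) (n + 1) (by omega) le_rfl hnN
    have : 0 ≤ k (n + 1) (n + 1) *
        (complementaryKernel k (n + 1) (l + 1) - complementaryKernel k (n + 1) l) := by
      linarith
    exact sub_nonneg.mp ((mul_nonneg_iff_of_pos_left hdiag).mp this)

end IsAdmissibleKernel

lemma sum_Icc_mul_sub_nonneg {b e : ℕ → ℝ} {i : ℕ} (hb₁ : 0 ≤ b 1)
    (hb : ∀ l, 1 ≤ l → l < i → b l ≤ b (l + 1)) (he : ∀ l ≤ i, e l ≤ e i) :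
    0 ≤ ∑ l ∈ Icc 1 i, b l * (e l - e (l - 1)) := by
  rcases Nat.eq_zero_or_pos i with rfl | hi
  · simp
  have partial_ge : ∀ n, 1 ≤ n → n ≤ i →
      b n * (e n - e i) ≤ ∑ l ∈ Icc 1 n, b l * (e l - e (l - 1)) := by
    intro n hn
    induction n, hn using Nat.le_induction with
    | base =>
      intro _
      simpa using mul_le_mul_of_nonneg_left (sub_le_sub_left (he 0 (by omega)) (e 1)) hb₁
    | succ n hn ih =>
      intro hni
      rw [sum_Icc_succ_top (by omega), Nat.add_sub_cancel]
      nlinarith [ih (by omega), mul_nonneg (sub_nonneg.mpr (hb n hn (by omega)))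
        (sub_nonneg.mpr (he n (by omega)))]
  simpa using partial_ge i hi le_rfl

section InnerProductSpace

variable {E : Type*} [NormedAddCommGroup E] [InnerProductSpace ℝ E]

lemma norm_sq_add_two_inner_sub_le (f v : E) : ‖v‖ ^ 2 + 2 * ⟪f - v, v⟫ ≤ ‖f‖ ^ 2 := by
  rw [inner_sub_left, real_inner_self_eq_norm_sq]
  nlinarith [norm_sub_sq_real f v, sq_nonneg ‖f - v‖]

lemma IsAdmissibleKernel.sum_complementaryKernel_mul_sub_le_inner {k : ℕ → ℕ → ℝ} {N : ℕ}
    (hk : IsAdmissibleKernel k N) {Φ : E → ℝ} {U : ℕ → E} {g v : E} {i : ℕ} (hi : 1 ≤ i)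
    (hiN : i ≤ N) (hv : v = ∑ l ∈ Icc 1 i, complementaryKernel k i l • (U l - U (l - 1)))
    (hsub : ∀ w, Φ (U i) + ⟪g, w - U i⟫ ≤ Φ w) :
    ∑ l ∈ Icc 1 i, complementaryKernel k i l * (Φ (U l) - Φ (U (l - 1))) ≤ ⟪g, v⟫ := by
  set e : ℕ → ℝ := fun l => ⟪g, U l⟫ - Φ (U l) with he
  have he_le : ∀ l ≤ i, e l ≤ e i := fun l _ => by
    have := hsub (U l)
    rw [inner_sub_right] at this
    simp only [he]
    linarith
  have habel : 0 ≤ ∑ l ∈ Icc 1 i, complementaryKernel k i l * (e l - e (l - 1)) :=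
    sum_Icc_mul_sub_nonneg (hk.complementaryKernel_nonneg le_rfl hi hiN)
      (fun l hl hli => hk.complementaryKernel_le_succ hl hli hiN) he_le
  have hsplit : ⟪g, v⟫ = ∑ l ∈ Icc 1 i, complementaryKernel k i l * (Φ (U l) - Φ (U (l - 1)))
      + ∑ l ∈ Icc 1 i, complementaryKernel k i l * (e l - e (l - 1)) := by
    rw [hv, inner_sum, ← sum_add_distrib]
    refine sum_congr rfl fun l _ => ?_
    rw [real_inner_smul_right, inner_sub_right]
    ring
  linarith

end InnerProductSpace

lemma ConcaveOn.map_add_sub_map_le_of_le {s : Set ℝ} {f : ℝ → ℝ} (hf : ConcaveOn ℝ s f)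
    {x y δ : ℝ} (hx : x ∈ s) (hyδ : y + δ ∈ s) (hxy : x ≤ y) (hδ : 0 ≤ δ) :
    f (y + δ) - f y ≤ f (x + δ) - f x := by
  obtain rfl | hδ := hδ.eq_or_lt
  · simp
  have hy : y ∈ s := hf.1.ordConnected.out hx hyδ ⟨hxy, by linarith⟩
  have hxδ : x + δ ∈ s := hf.1.ordConnected.out hx hyδ ⟨by linarith, by linarith⟩
  have h₁ : slope f (y + δ) y ≤ slope f (y + δ) x :=
    hf.slope_anti hyδ ⟨hx, by simp; linarith⟩ ⟨hy, by simp; linarith⟩ hxy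
  have h₂ : slope f x (y + δ) ≤ slope f x (x + δ) :=
    hf.slope_anti hx ⟨hxδ, by simp; linarith⟩ ⟨hyδ, by simp; linarith⟩ (by linarith)
  rw [slope_comm, slope_comm f (y + δ) x] at h₁
  have h := h₁.trans h₂
  rw [slope_def_field, slope_def_field, add_sub_cancel_left, add_sub_cancel_left] at h
  exact (div_le_div_iff_of_pos_right hδ).mp h

/-- `Γ(α + 1) K_{ni} = l1Weight α t_n t_{i-1} t_i = ∫_{t_{i-1}}^{t_i} α (t_n - s)^(α-1) ds`. -/
noncomputable def l1Weight (α a p q : ℝ) : ℝ := (a - p) ^ α - (a - q) ^ α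

section L1Weight

variable {α a b p q : ℝ}

lemma l1Weight_pos (hα : 0 < α) (hpq : p < q) (hqa : q ≤ a) : 0 < l1Weight α a p q :=
  sub_pos.mpr (Real.rpow_lt_rpow (by linarith) (by linarith) hα)

lemma l1Weight_le_of_le (hα₀ : 0 ≤ α) (hα₁ : α ≤ 1) (hpq : p ≤ q) (hqb : q ≤ b) (hba : b ≤ a) :
    l1Weight α a p q ≤ l1Weight α b p q := by
  have h := (Real.concaveOn_rpow hα₀ hα₁).map_add_sub_map_le_of_le (x := b - q) (y := a - q)
    (δ := q - p) (Set.mem_Ici.mpr (by linarith)) (Set.mem_Ici.mpr (by linarith)) (by linarith)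
    (by linarith)
  simp only [sub_add_sub_cancel] at h
  exact h

lemma hasDerivAt_sub_rpow (α : ℝ) {a s : ℝ} (hs : s < a) :
    HasDerivAt (fun s => (a - s) ^ α) (-1 * α * (a - s) ^ (α - 1)) s :=
  ((hasDerivAt_id s).const_sub a).rpow_const (Or.inl (sub_ne_zero.mpr hs.ne'))

lemma exists_l1Weight_eq_rpow_mul (hα : 0 < α) (hpq : p < q) (hqb : q ≤ b) (hba : b < a) :
    ∃ c ∈ Set.Ioo p q, l1Weight α a p q = ((a - c) / (b - c)) ^ (α - 1) * l1Weight α b p q := by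
  have hderiv : ∀ t, b ≤ t → ∀ s ∈ Set.Ioo p q,
      HasDerivAt (fun s => (t - s) ^ α) (-1 * α * (t - s) ^ (α - 1)) s :=
    fun t ht s hs => hasDerivAt_sub_rpow α (by linarith [hs.2])
  have hcont : ∀ t, ContinuousOn (fun s => (t - s) ^ α) (Set.Icc p q) := fun t =>
    ((continuous_const.sub continuous_id).rpow_const fun _ => Or.inr hα.le).continuousOn
  obtain ⟨c, hc, hmvt⟩ := exists_ratio_hasDerivAt_eq_ratio_slope _ _ hpq (hcont a)
    (hderiv a hba.le) _ _ (hcont b) (hderiv b le_rfl)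
  refine ⟨c, hc, ?_⟩
  have hac : 0 < a - c := by linarith [hc.2]
  have hbc : 0 < b - c := by linarith [hc.2]
  have hbc' : 0 < (b - c) ^ (α - 1) := Real.rpow_pos_of_pos hbc _
  rw [Real.div_rpow hac.le hbc.le, div_mul_eq_mul_div, eq_div_iff hbc'.ne', l1Weight, l1Weight]
  apply mul_left_cancel₀ hα.ne'
  linear_combination -hmvt

lemma l1Weight_mul_l1Weight_le (hα₀ : 0 < α) (hα₁ : α ≤ 1) {x y u v : ℝ} (hxy : x < y)
    (hyu : y ≤ u) (huv : u < v) (hvb : v ≤ b) (hba : b < a) :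
    l1Weight α a u v * l1Weight α b x y ≤ l1Weight α a x y * l1Weight α b u v := by
  have hyb : y ≤ b := hyu.trans (huv.le.trans hvb)
  obtain ⟨c, hc, hc_eq⟩ := exists_l1Weight_eq_rpow_mul hα₀ huv hvb hba
  obtain ⟨d, hd, hd_eq⟩ := exists_l1Weight_eq_rpow_mul hα₀ hxy hyb hba
  have hdc : d < c := hd.2.trans_le (hyu.trans hc.1.le)
  have hbc : 0 < b - c := by linarith [hc.2]
  -- `s ↦ (a - s) / (b - s)` is increasing and `α - 1 ≤ 0`
  have hratio : ((a - c) / (b - c)) ^ (α - 1) ≤ ((a - d) / (b - d)) ^ (α - 1) := by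
    refine Real.rpow_le_rpow_of_nonpos (div_pos (by linarith) (by linarith)) ?_ (by linarith)
    rw [div_le_div_iff₀ (by linarith) hbc]
    nlinarith
  have hwb := mul_nonneg (l1Weight_pos hα₀ huv hvb).le (l1Weight_pos hα₀ hxy hyb).le
  rw [hc_eq, hd_eq]
  nlinarith [mul_le_mul_of_nonneg_right hratio hwb]

end L1Weight

lemma isAdmissibleKernel_of_eq_l1Weight {k : ℕ → ℕ → ℝ} {N : ℕ} {α γ : ℝ} {t : ℕ → ℝ}
    (hα₀ : 0 < α) (hα₁ : α ≤ 1) (hγ : 0 < γ) (ht : StrictMonoOn t (Set.Iic N))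
    (hk : ∀ n i, 1 ≤ i → i ≤ n → n ≤ N → k n i = γ * l1Weight α (t n) (t (i - 1)) (t i)) :
    IsAdmissibleKernel k N := by
  have hlt : ∀ i j, i < j → j ≤ N → t i < t j := fun i j hij hj =>
    ht (Set.mem_Iic.mpr (by omega)) (Set.mem_Iic.mpr hj) hij
  have hle : ∀ i j, i ≤ j → j ≤ N → t i ≤ t j := fun i j hij hj =>
    ht.monotoneOn (Set.mem_Iic.mpr (by omega)) (Set.mem_Iic.mpr hj) hij
  refine ⟨fun n i hi hin hn => ?_, fun n i hi hin hn => ?_, fun n i j hi hij hjn hn => ?_⟩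
  · rw [hk n i hi hin hn]
    exact mul_pos hγ (l1Weight_pos hα₀ (hlt _ _ (by omega) (by omega)) (hle _ _ hin hn))
  · rw [hk (n + 1) i hi (by omega) hn, hk n i hi hin (by omega)]
    exact mul_le_mul_of_nonneg_left (l1Weight_le_of_le hα₀.le hα₁
      (hle _ _ (by omega) (by omega)) (hle _ _ hin (by omega)) (hle _ _ (by omega) hn)) hγ.le
  · rw [hk (n + 1) j (by omega) (by omega) hn, hk n i hi (by omega) (by omega),
      hk (n + 1) i hi (by omega) hn, hk n j (by omega) hjn (by omega)]
    have := l1Weight_mul_l1Weight_le hα₀ hα₁ (hlt (i - 1) i (by omega) (by omega))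
      (hle i (j - 1) (by omega) (by omega)) (hlt (j - 1) j (by omega) (by omega))
      (hle j n hjn (by omega)) (hlt n (n + 1) (by omega) hn)
    linarith [mul_le_mul_of_nonneg_left this (sq_nonneg γ)]

theorem stmt18_general (α : ℝ) (hα : α ∈ Set.Ioo (0 : ℝ) 1)
    (N : ℕ) (tP : ℕ → ℝ)
    (hmono : ∀ n < N, tP n < tP (n + 1))
    (Kf : ℕ → ℕ → ℝ)
    (hKf : ∀ n i, 1 ≤ i → i ≤ n → n ≤ N →
      Kf n i = (Real.Gamma (α + 1))⁻¹ * ((tP n - tP (i - 1)) ^ α - (tP n - tP i) ^ α))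
    {𝓗 : Type*} [NormedAddCommGroup 𝓗] [InnerProductSpace ℝ 𝓗]
    (Φ : 𝓗 → ℝ) (m : ℝ) (hm : ∀ w : 𝓗, m ≤ Φ w)
    (U V F : ℕ → 𝓗)
    (hU : ∀ n, 1 ≤ n → n ≤ N → U n = U 0 + ∑ i ∈ Finset.Icc 1 n, Kf n i • V i)
    (hsub : ∀ n, 1 ≤ n → n ≤ N → ∀ w : 𝓗, Φ (U n) + ⟪F n - V n, w - U n⟫ ≤ Φ w) :
    ∀ n, 1 ≤ n → n ≤ N →
      ∑ i ∈ Finset.Icc 1 n, Kf n i * ‖V i‖ ^ 2 ≤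
        ∑ i ∈ Finset.Icc 1 n, Kf n i * ‖F i‖ ^ 2 + 2 * (Φ (U 0) - m) := by
  have hγ : 0 < (Real.Gamma (α + 1))⁻¹ := inv_pos.mpr (Real.Gamma_pos_of_pos (by linarith [hα.1]))
  have hK : IsAdmissibleKernel Kf N := isAdmissibleKernel_of_eq_l1Weight hα.1 hα.2.le hγ
    (strictMonoOn_Iic_of_lt_succ hmono) hKf
  have hV := eq_sum_complementaryKernel_smul_sub (fun n hn hnN => hK.diag_ne_zero hn hnN) hU
  set W : ℕ → ℝ := fun i => ∑ l ∈ Icc 1 i, complementaryKernel Kf i l * (Φ (U l) - Φ (U (l - 1)))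
  have hchain : ∀ i, 1 ≤ i → i ≤ N → W i ≤ ⟪F i - V i, V i⟫ := fun i hi hiN =>
    hK.sum_complementaryKernel_mul_sub_le_inner hi hiN (hV i hi hiN) (hsub i hi hiN)
  intro n hn hnN
  have hW : ∑ i ∈ Icc 1 n, Kf n i * W i = Φ (U n) - Φ (U 0) := by
    simpa only [smul_eq_mul] using
      sum_smul_sum_complementaryKernel_smul (hK.diag_ne_zero hn hnN) (fun j => Φ (U j))
  calc ∑ i ∈ Icc 1 n, Kf n i * ‖V i‖ ^ 2
      ≤ ∑ i ∈ Icc 1 n, Kf n i * (‖F i‖ ^ 2 - 2 * W i) := by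
        refine sum_le_sum fun i hi => ?_
        obtain ⟨hi₁, hin⟩ := mem_Icc.mp hi
        refine mul_le_mul_of_nonneg_left ?_ (hK.pos n i hi₁ hin hnN).le
        linarith [hchain i hi₁ (hin.trans hnN), norm_sq_add_two_inner_sub_le (F i) (V i)]
    _ = ∑ i ∈ Icc 1 n, Kf n i * ‖F i‖ ^ 2 - 2 * (Φ (U n) - Φ (U 0)) := by
        rw [← hW, mul_sum, ← sum_sub_distrib]
        exact sum_congr rfl fun i _ => by ring
    _ ≤ ∑ i ∈ Icc 1 n, Kf n i * ‖F i‖ ^ 2 + 2 * (Φ (U 0) - m) := by linarith [hm (U n)]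

/-- discrete `L²_α`-stability for the fractional minimizing movements
scheme: if `Φ ≥ m`, `U_n = U_0 + Σ_{i=1}^n K_{ni} V_i` (so `V` is the discrete Caputo
derivative of `U`) and `F_n - V_n ∈ ∂Φ(U_n)` for all `n`, then
`Σ_{i=1}^n K_{ni} ‖V_i‖² ≤ Σ_{i=1}^n K_{ni} ‖F_i‖² + 2(Φ(U_0) - m)`. -/
theorem stmt18 (α T : ℝ) (hα : α ∈ Set.Ioo (0 : ℝ) 1) (hT : 0 < T)
    (N : ℕ) (hN : 1 ≤ N) (tP : ℕ → ℝ) (htP0 : tP 0 = 0) (htPN : tP N = T)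
    (hmono : ∀ n < N, tP n < tP (n + 1))
    (Kf : ℕ → ℕ → ℝ)
    (hKf : ∀ n i, 1 ≤ i → i ≤ n → n ≤ N →
      Kf n i = (Real.Gamma (α + 1))⁻¹ * ((tP n - tP (i - 1)) ^ α - (tP n - tP i) ^ α))
    {𝓗 : Type*} [NormedAddCommGroup 𝓗] [InnerProductSpace ℝ 𝓗]
    (Φ : 𝓗 → ℝ) (m : ℝ) (hm : ∀ w : 𝓗, m ≤ Φ w)
    (U V F : ℕ → 𝓗)
    (hU : ∀ n, 1 ≤ n → n ≤ N → U n = U 0 + ∑ i ∈ Finset.Icc 1 n, Kf n i • V i)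
    (hsub : ∀ n, 1 ≤ n → n ≤ N → ∀ w : 𝓗, Φ (U n) + ⟪F n - V n, w - U n⟫ ≤ Φ w) :
    ∀ n, 1 ≤ n → n ≤ N →
      ∑ i ∈ Finset.Icc 1 n, Kf n i * ‖V i‖ ^ 2 ≤
        ∑ i ∈ Finset.Icc 1 n, Kf n i * ‖F i‖ ^ 2 + 2 * (Φ (U 0) - m) :=
  stmt18_general α hα N tP hmono Kf hKf Φ m hm U V F hU hsub
end
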